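/- arXiv:cs/0611126 — 2 statements merged into one kernel-verified Lean document; each statement's English description precedes it below -/
import Mathlib

section
/- For every real m×n matrix A and every integer c ≥ 2, herdisc(A, c) ≤ 2.0005 · herwdisc(A, 2). -/
open Finset

/-- `c`-color discrepancy of a matrix: minimum over `c`-colorings `p` of the columns of the
maximum over colors `d` and rows `i` of `|∑_{j : p j = d} A i j - (1/c) ∑_j A i j|`. -/
noncomputable def mdisc {ι κ : Type*} [Fintype ι] [Fintype κ] (A : ι → κ → ℝ) (c : ℕ) : ℝ :=
  ⨅ p : κ → Fin c, ⨆ d : Fin c, ⨆ i : ι,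
    |∑ j ∈ Finset.univ.filter (fun j => p j = d), A i j - (1 / (c : ℝ)) * ∑ j, A i j|

/-- hereditary `c`-color discrepancy: maximum of `mdisc` over all nonempty column submatrices. -/
noncomputable def mherdisc {ι : Type*} [Fintype ι] {n : ℕ} (A : ι → Fin n → ℝ) (c : ℕ) : ℝ :=
  ⨆ J : {J : Finset (Fin n) // J.Nonempty}, mdisc (fun i (j : {x // x ∈ J.1}) => A i j.1) c

/-- `d_A(p,q) = max_i |∑_j a_{ij} (p j - q j)|` for floating colorings `p, q`. -/
noncomputable def dA {ι κ : Type*} [Fintype ι] [Fintype κ] (A : ι → κ → ℝ) (p q : κ → ℝ) : ℝ :=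
  ⨆ i : ι, |∑ j, A i j * (p j - q j)|

/-- weighted discrepancy with weight `z`: min over `{0,1}`-colorings `q` of `d_A(z·1, q)`. -/
noncomputable def wdisc {ι κ : Type*} [Fintype ι] [Fintype κ] (A : ι → κ → ℝ) (z : ℝ) : ℝ :=
  ⨅ q : κ → Bool, dA A (fun _ => z) (fun j => if q j then 1 else 0)

/-- `wdisc(A,2) = sup_{z ∈ [0,1]} wdisc(A,z)`. -/
noncomputable def wdisc2 {ι κ : Type*} [Fintype ι] [Fintype κ] (A : ι → κ → ℝ) : ℝ :=
  ⨆ z : Set.Icc (0:ℝ) 1, wdisc A z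

/-- hereditary weighted discrepancy in two colors. -/
noncomputable def mherwdisc2 {ι : Type*} [Fintype ι] {n : ℕ} (A : ι → Fin n → ℝ) : ℝ :=
  ⨆ J : {J : Finset (Fin n) // J.Nonempty}, wdisc2 (fun i (j : {x // x ∈ J.1}) => A i j.1)

namespace HerdiscAux



def bigA : Nat := 0xbebc0240bebdb6c0bebdb6e0bebbb290bebd9d00bebbb290bebdb650bebbb290bebbb290bebc0790bebd48a0bebbb060bebdacd0bebbb320bebdb640bebbb320bebbb320bebbb340bebbb340bebbd5c0bebc13f0bebbd5c0bebbf8c0bebbf8c0bebbf8c0bebbf8c0bebbf8c0bebbb060bebc01b0bebc0240bebc13f0bebbf8c0bebc0240bebc0240bebc0240bebbb060bebc0550bebbb060bebc0130bebbc0d0bebbc0e0bebc0590bebc05e0bebbb060bebd8d60bebc03a0bebc10f0bebbb060bebbb060bebbb060bebc03a0bebbb060bebbb060bebbb060bebbb060bebbfe20bebbfe20bebc0550bebc0570bebb87b0bebc0550bebc0500bebc05f0bebc0500bebc0500bebc0500bebc0500bebbb060bebc0550bebbb290bebc0550bebc00e0bebc05b0bebc05b0bebc05b0bebbb060bebc0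5e0bebbb320bebc13d0bebbb060bebbb060bebbb060bebc0660bebbb060bebbb290bebbb060bebbb060bebbb060bebbb060bebbb060bebbb340bebbb060bebbb320bebbb320bebbb320bebbb060bebbb340bebc01b0bebc01b0bebbb060bebc0240bebbb060bebbb060bebbb060bebbb0f0bebbb6b0bebbbc70bebbb290bebc7980bebbb340bebd2fc0bebbb290bebbb290bebbb290bebbeaf0bebbb290bebbf6b0bebbb290bebbb290bebbb290bebbb290bebbb290bebbb340beba3e50bebc0570bebbb320bebbb320bebbb290bebbb320bebbb320bebbb340bebbb290bebc01b0bebbb290bebbb290bebbb290bebbb290bebbb340bebbbc70bebbb320bebc0550bebbb320bebbb320bebbb320bebbb320bebbb340bebbb340bebbb6b0bebbbc70bebbc230bebc0240bebbcdd0bebbdf40bebbd970bebbdf40beba6090bebbeaf0bebbf0d0bebbf6b0bebbbed0bebbbed0bebc0500bebc0740beba6950bebbbf10beba6b80bebc03a0bebbbdb0bebbbdb0bebc0500bebc0500bebb87b0bebc0550bebc0550bebc0550bebbb930bebbb930bebbb930bebc05b0bebbb930bebbb930bebbb930bebbb930bebbbed0bebbbed0bebbbf10bebbbf30beba83c0b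ebbbf10bebbbf30bebc0590bebbd5c0bebbd5c0bebc05b0bebc05e0bebbb930bebc05f0bebbbff0bebc0660bebbbff0bebbbff0bebc0660bebc06c0beba95c0bebc06c0bebbc080bebc0710beba9a40beba9b60bebbb930bebbc0a0beba9ed0bebbc0d0bebaa110bebaa230bebb87b0bebbb930bebbb930bebc07c0bebb87b0bebc07f0bebc0820bebc0820bebb87b0bebbbf30bebc0860bebc0880bebb87b0bebc0b70bebb87b0bebbb930bebb87b0bebb87b0bebb87b0bebbbc70bebb87b0bebc1400bebb87b0bebc1430bebb87b0bebb87b0bebb87b0bebb87b0bebb87b0bebb87b0bebb87b0bebb87b0bebb87b0bebb87b0bebb87b0bebbbf30bebacd10bebc10b0bebc10f0bebdb6c0bebbbed0bebbbed0bebbbed0bebc13c0bebbbdb0bebbbed0bebbbed0bebbbed0bebbbf10bebbbf10bebbbf10bebbbf10bebbbdb0bebc0b10bebbc080bebc10f0bebbbdb0bebbbdb0bebbbdb0bebbc0e0bebbbdb0bebbbff0bebbbdb0bebbbdb0bebbbdb0bebbbdb0bebbbdb0bebbc0a0bebaf350bebbc080bebbc080bebbc080bebbbdb0bebbbed0beb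bbed0bebbc0d0bebbb320bebbbf10bebbb340bebbbdb0bebbbdb0bebbbdb0bebbbdb0bebbbdb0bebbbed0bebbbf10bebbbf10bebbbf30bebbbed0bebbbf30bebbbff0bebbeaf0bebbbed0bebbbf30bebbbed0bebbbed0bebbbed0bebbbed0bebbbed0bebbbed0bebb1a90bebbbf10bebbbf10bebbbf10bebbbf30bebbc080bebbc080bebbc0a0bebbbff0bebbc0d0bebbbff0bebbbff0bebbbff0bebbbff0bebbbff0bebbbff0bebb2eb0bebbc0e0bebbc080bebbc080bebb33c0bebb3500bebbc080bebbc080bebb87b0bebbc0a0bebbc0d0bebbc0d0bebbc0e0bebbc230bebbcdd0bebbcdd0bebb4300bebbd970bebbdf40bebbe510bebbeaf0bebbf0d0bebbf6b0bebbfc90bebb4d50bebc0860bebb4fe0bebc1370bebb5280bebb53d0bebb87b0bebc13d0bebb57b0bebc1400bebb5a50bebc1430bebb5ce0bebb5e30bebb5f80bebb60d0bebb87b0bebb87b0bebb87b0bebb87b0bebb87b0bebb87b0bebb87b0bebb87b0bebb2f50bebc1890bebc1600bebc1830bebc1600bebc1600bebc1600bebc1600bebc1600bebc1600bebc1740beb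c1770bebc1770bebc1770bebc1770bebc1770bebb81f0bebc1940bebc1770bebc1830bebc1770bebc1770bebc1770bebc1770bebc1770bebc1770bebc1770bebc1890bebc1830bebc1830bebc1830bebc1830bebb2f50bebc1830bebc1830bebc1860bebc1860bebc1890bebc1890bebc18c0bebb2f50bebc18e0bebb2f50bebc18e0bebb87b0bebc1940bebc1940bebc1940bebb5f90bebc1970bebc1990bebc19a0bebb60b0bebb60f0bebb6140bebb87b0bebb87b0bebb87b0bebb87b0bebb87b0bebb87b0bebb87b0bebb87b0bebb87b0bebb4070bebc1b20bebc1b20bebc1b20bebc1b20bebc1bb0bebc1bd0bebc1bd0bebb87b0bebc1bd0bebc1bd0bebc1bd0bebc1bd0bebc1bd0bebc1c30bebc1c30bebb44d0bebc1c30bebc1c50bebc1c60bebb45e0bebb4620bebb87b0bebc1cc0bebb87b0bebc1cf0bebb87b0bebb87b0bebb87b0bebb87b0bebb87b0bebb87b0bebb4070bebc1db0bebc1db0bebc1e10bebb87b0bebc1e10bebc1e10bebc1e40bebb4070bebc1e50bebb4070bebb87b0bebb87b0bebb87b0bebb87b0bebb87b0bebb44d0bebc1f00bebb87b0bebc1f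30bebb45e0bebb4620bebb87b0bebb87b0bebb44d0bebb87b0bebb44d0bebb87b0bebb45e0bebb4620bebb45e0bebb4620beb92550bebdc1b0bebdb170bebdb170bebd8680bebd8680bebd8680bebdb6c0bebbb320bebd8ab0bebbb340bebd8bb0bebd8a40bebd8a40bebdb1a0bebdb650bebbd510bebdc490bebd8a40bebdb6c0bebbe580bebbe590bebd8a40bebd8a40bebd3fd0bebd8a40bebd3fd0bebd3fd0bebd8ab0bebd8b00bebd8b00bebd8b00bebb5200bebd8b00bebd8b30bebd8b30bebd3fd0bebd54e0bebdb6c0bebdb6c0bebb5200bebd5900bebb5200bebd54e0bebd3fd0bebd3fd0bebd3fd0bebd5900bebb5f90bebdbd90bebd3fd0bebdbb40bebb60b0bebb60f0bebb6140bebd3fd0bebbb060bebbd510bebbd510bebbd510bebc0b10bebd54e0bebd54e0bebd5a00bebb5b00bebd5900bebd54e0bebd5a00bebd5900bebd5a00bebd5900bebd5a00bebb5b00bebd7310bebb5b00bebd98e0bebd8a40bebd9c30bebd9b30bebd9c30bebb5d40bebd9d00bebb5d40bebd9d00bebb5dd0bebb60f0bebb6140bebdc240bebb5f90bebd8a40b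ebb5f90bebbb060bebb60b0bebb60f0bebb60b0bebb60f0bebb6140bebd8b00bebbb340bebd8b00bebbb060bebd8b00bebd8b00bebd8b30bebbb060bebd99a0bebbb060bebbb060bebbb060bebbb060bebbb060bebbb060bebbb060bebd9d00bebbb060bebdd2a0bebbb060bebbb060bebbb060bebbb060bebbb060bebbb060bebbb060bebbb060bebbb290bebbb290bebbb340bebbb340bebb76b0bebdaab0bebbb320bebbb320bebbb290bebbb320bebbb340bebbb340bebbb290bebd8b30bebbb290bebbb290bebbb290bebbb290bebbb290bebbb290bebbb290bebda980bebbb290bebbb320bebbb290bebbb290bebbb290bebbb290bebbb290bebbb290bebbb290bebbb290bebbb320bebbb320bebbb320bebbb320bebb76b0bebbb320bebbb320bebbb320bebbb340bebbb340bebbc170bebbd8f0bebb76b0bebbbf10bebb76b0bebd0b80bebbc0d0bebbc0e0bebd3fd0bebd6470bebba7d0bebda980bebd3fd0bebda980bebbb930bebbb930bebbb930bebc1990bebbb930bebbdee0bebbc0a0bebbdee0bebbc080bebbc080bebbc0a0bebbc0a0bebb89d0bebbc0d0bebbc0e0bebda980bebbe580bebbe590bebd54e0bebd54e0bebbb930b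ebd54e0bebbc0a0bebd54e0bebbc0d0bebbc0e0bebd5900bebd5900bebba7d0bebd5a00bebd8870bebda980bebba7d0bebba7d0bebbdee0bebdae70bebba7d0bebdb0a0bebba7d0bebba7d0bebba7d0bebbb930bebbdee0bebc1a80bebb89d0bebdb170bebdb170bebdb170bebba7d0bebbe590bebdb170bebdb1a0bebb89d0bebd9d00bebb89d0bebbb930bebba7d0bebba7d0bebba7d0bebbb930bebba7d0bebdc030bebba7d0bebdc0f0bebba7d0bebba7d0bebba7d0bebba7d0bebba7d0bebba7d0bebba7d0bebba7d0bebba7d0bebba7d0bebba7d0bebbbf30beb9dad0bebd5a00bebdb170bebdb170bebbbed0bebbbed0bebbbed0bebd5630bebbbdb0bebbbf10bebbbf10bebbbf30bebbbf10bebbbf30bebbe580bebbe580bebbbdb0bebc0b10bebbc080bebd5900bebbbdb0bebbbdb0bebbbff0bebbc0e0bebbbdb0bebd1020bebbbdb0bebbbdb0bebbbdb0bebbbdb0bebbc080bebbc0a0bebb9d70bebbc0d0bebbc0a0bebbc0e0bebbbdb0bebbbed0bebbe530bebdb170bebb9d70bebbbf10bebb9d70bebbbdb0bebbbdb0bebb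bdb0bebbbdb0bebbbdb0bebbb060bebbbf10bebbbdb0bebbe590bebbbdb0bebbbdb0bebbbdb0bebbbdb0bebbbdb0bebbbdb0bebbbdb0bebbbdb0bebbbed0bebbbed0bebbbed0bebbbed0bebb4070bebbbf10bebbbed0bebbbf10bebbbed0bebbbed0bebbbed0bebbbed0bebba780bebbbed0bebba780bebbbed0bebbbf10bebbbf10bebbbf10bebbbf10bebb44d0bebbc0e0bebbaa00bebbc080bebb45e0bebb4620bebbbff0bebbbff0bebba7d0bebbbff0bebbb060bebbb060bebbb060bebbc080bebbc080bebbc080bebba7d0bebbc080bebbc080bebbc080bebbb060bebbc0a0bebbc0d0bebbc0d0bebba7d0bebbc170bebba7d0bebbe900bebba7d0bebba7d0bebba7d0bebbcbe0bebba7d0bebbed60bebba7d0bebd4000bebba7d0bebba7d0bebba7d0bebba7d0bebba7d0bebba7d0bebba7d0bebba7d0bebba7d0bebba7d0bebba7d0bebba7d0bebb5200bebbeed0bebbb320bebbb320bebbb290bebbb340bebbb340bebbec60bebbb290bebbed30bebbb290bebbeb90bebbb290bebbb290bebbb290bebbcbe0bebba7d0bebbed30bebbb290bebbec30bebbb290b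ebbb290bebbb290bebbb290bebbb290bebbb290bebbb290bebbb290bebbb290bebbb290bebbb290bebbb320bebb5b00bebbb320bebbb320bebbb320bebbb320bebbb320bebbb320bebbb340bebb5d40bebbc110bebb5dd0bebbed30bebba7d0bebbc0e0bebbee30bebbee30bebb5f90bebbefd0bebbee30bebbeed0bebb60b0bebb60f0bebb6140bebba7d0bebba7d0bebba7d0bebba7d0bebba7d0bebba7d0bebba7d0bebba7d0bebba7d0bebba7d0bebbefd0bebbef70bebbefd0bebbef70bebbef70bebbef70bebbef70bebba7d0bebbefd0bebbb340bebbefd0bebbefe0bebbf020bebbf020bebbf020bebba7d0bebbf050bebbf060bebbf070bebba7d0bebba7d0bebba7d0bebbfc90bebba7d0bebc0860bebba7d0bebba7d0bebba7d0bebba7d0bebba7d0bebba7d0bebba7d0bebc72f0bebc72f0bebc72f0bebba7d0bebcc9a0bebcc9a0bebcc9a0bebba7d0bebcf570bebba7d0bebba7d0bebba7d0bebba7d0bebba7d0bebba7d0bebba7d0bebda820bebba7d0bebdd5a0bebba7d0bebba7d0bebba7d0bebba7d0bebba7d0bebba7d0bebba7d0bebba7d0bebba7d0bebba7d0bebba7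d0bebba7d0beb92550bebd8bb0bebbb340bebdd2a0bebbbf10bebbbf30bebd8680bebd8680bebbb290bebd8680bebbb290bebd8680bebbb290bebbb290bebbb290bebd8680bebbb060bebd8ab0bebbb290bebd8ab0bebbb290bebbb290bebbb290bebbb290bebbb290bebbb290bebbb290bebbb290bebbb290bebbb290bebbb290bebbb290bebbb060bebbb320bebbb320bebbb320bebbb320bebbb320bebbb320bebbb320bebbb060bebbb340bebbb060bebbbed0bebbb060bebbbdb0bebbbdb0bebbbf10bebbb060bebbbf30bebbbdb0bebd8ab0bebbb060bebbb060bebbb060bebbb060bebbb060bebbb060bebbb060bebbb060bebbb060bebbb060bebbb060bebbb060bebb4070bebbbf10bebbbed0bebbbf30bebbbed0bebbbed0bebbbed0bebbbed0bebbb060bebbbed0bebbb290bebbbed0bebbb290bebbbed0bebbbed0bebbbf10bebb44d0bebbbf10bebbb320bebbbf30bebb45e0bebb4620bebbb060bebbb290bebbb060bebbb290bebbb060bebbb060bebbb060bebbb060bebbb060bebbb060bebbb060bebbb320bebbb320bebbb320bebbb060bebbb320bebbb320bebbb320bebbb060bebbb340bebbb060bebbb060bebbb060bebbb060bebbb060b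ebbb060bebbb060bebd97d0bebbb060bebd97d0bebbb060bebbb060bebbb060bebbb060bebbb060bebbb060bebbb060bebbb060bebbb060bebbb060bebbb060bebbb060beb92550bebd97d0bebbb320bebbb320bebbb290bebbb320bebbb320bebbb320bebbb290bebbb340bebbb290bebbb290bebbb290bebbb290bebbb290bebbb290bebb44d0bebc05b0bebbb290bebbb320bebb45e0bebb4620bebbb290bebbb290bebbb290bebbb290bebbb290bebbb290bebbb290bebbb290bebbb290bebbb290beb92550bebbb320bebbb320bebbb320bebb45e0bebb4620bebbb320bebbb320beb92550bebb4620beb92550bebc0270bebbb930bebbbdb0bebbbdb0bebc03a0bebb5f90bebc0550bebbbdb0bebc0570bebb60b0bebb60f0bebb6140bebbb930bebbb930bebbb930bebbb930bebbb930bebbb930bebbb930bebbb930bebbb930bebb3780bebbbf10bebbbed0bebbbf30bebbbed0bebbbed0bebbbed0bebbbed0bebbb930bebbbed0bebbbed0bebbbed0bebbbed0bebbbed0bebbbed0bebbbed0bebb5200bebbbf10bebbbf10bebbbf10bebb5200bebb5200bebbb930bebbbff0bebb8ee0bebbbff0bebb8ee0bebb8ee0bebbb930bebbb930bebbb930beb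bb930bebb5b00bebbc080bebbc080bebbc080bebbb930bebbbf30bebbc080bebbc080bebb5d40bebbc0a0bebb5dd0bebbb930bebbb930bebbb930bebbb930bebbb930bebb5b00bebc0850bebbb930bebc0860bebb5b00bebb5b00bebb6140bebbb930bebb5d40bebbb930bebb5dd0bebbb930bebb5d40bebb5d40bebb5dd0bebb5dd0beb92550bebbbf30bebc10f0bebdf3b0bebb5f90bebb5f90bebb6140bebbbed0bebb60b0bebb60b0bebb60f0bebb6140bebbbed0bebbbed0bebbbed0bebbbed0bebbbdb0bebbbf10bebbbf10bebbbf10bebbbdb0bebbbdb0bebbbdb0bebbbff0bebbbdb0bebbbff0bebbbdb0bebbbdb0bebbbdb0bebbbdb0bebbbdb0bebbbdb0bebb5b00bebbc080bebbc080bebbc080bebbbdb0bebbbed0bebbbed0bebbc080bebb5d40bebbbf10bebb5dd0bebbbdb0bebbbdb0bebbbdb0bebbbdb0bebbbdb0bebb5f90bebbbf10bebbbdb0bebbbf10bebb60b0bebb60f0bebb6140bebbbdb0bebbbdb0bebbbdb0bebbbdb0bebbbdb0bebbbdb0bebbbdb0bebbbdb0bebbbdb0beb92550bebbbf10bebbb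ed0bebbbf10bebbbed0bebbbed0bebbbed0bebbbed0bebb5d40bebbbed0bebb5dd0bebbbed0bebbbed0bebbbed0bebbbed0bebbbed0beb92550bebbbf10bebb5dd0bebbbf10beb92550beb92550bebb6140bebbbff0bebb5f90bebbbff0bebb5f90bebbbff0bebb60b0bebb60f0bebb60b0bebb60f0beb92550bebbc080bebbc080bebbc080bebb60b0bebb60f0bebb6140bebbc080beb92550bebb60f0beb92550bebb6140beb92550beb92550bebbcb80bebbd510bebb8ee0bebc1370bebb8ee0bebc13a0bebb8ee0bebb8ee0bebb8ee0bebb8ee0bebbcb80bebbcb80bebbcb80bebbcb80bebbcb80bebbcb80bebbcb80bebbcb80beb979f0bebc1890bebbec30bebbec30bebbeb90bebbec30bebbec60bebbec60bebbeb90bebbed30bebbeb90bebbeb90bebbeb90bebbeb90bebbeb90bebbeb90beb9c660bebbed30bebbeb90bebbec30bebb89d0bebb89d0bebbeb90bebbeb90bebbeb90bebbeb90bebbeb90bebbeb90bebbeb90bebbeb90bebbec30bebbec30beba14f0bebbec30bebbec30bebbec30bebbec30bebbec30bebbec60bebbec60beba3d20bebbece0beba4740bebbece0bebba7f0bebbe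ce0bebbed30bebbed30beba65d0bebbed30bebbed40bebbed60beba7a70beba7f90beba84c0bebbcb80beba8f20beba9460beba9990beba9ed0bebbbe10bebbbf80bebbcb80bebbcb80bebab910bebbeed0bebbeed0bebbeed0bebbeed0bebbeed0bebbef70bebbef70bebae3a0bebbef70bebbef70bebbef70bebbef70bebbef70bebbefd0bebbefd0bebb0ed0bebbefd0bebbefe0bebbf020bebb24a0bebb2a20bebb2fa0bebbf050bebb3aa0bebbf070bebb45b0bebb4b40bebb50d0bebb5660bebb5bf0bebbcb80bebb6720bebc1db0bebc1db0bebc1db0bebb7db0bebc1e10bebc1e10bebc1e10bebb89d0bebc1e40bebb89d0bebba570bebbab30bebbb0f0bebbb6b0bebbbc70bebb89d0bebc1f00bebbcb80bebc1f30bebb89d0bebb89d0bebb89d0bebbcb80bebbaa00bebbcb80bebbaaa0bebbcb80bebbaa00bebbaa00bebbaaa0bebbaaa0beb92550bebe5310bebdb070bebdbee0bebbe580bebbe590bebe4690bebe4690bebbeed0bebe46c0bebc01b0bebe4600bebd8a40bebd8a40bebdafb0bebe4600bebbb1a0bebe4780bebd8b00bebe4690bebbb1a0bebbb1a0bebd8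b30bebd8b30bebbb960bebdafb0bebbba10bebbba60bebbe3f0bebbf080bebbf8c0bebdafb0bebb9d70bebdb050bebdb050bebdb050bebbb6d0bebbb6d0bebdb050bebdb050bebb9d70bebbb810bebb9d70bebbba60bebbb960bebbb960bebbba10bebbba10bebb9d70bebbe590bebbe3f0bebe4780bebb9d70bebb9d70bebb9d70bebbd510bebbbd50bebbbd50bebbbf40bebbd510bebbbe90bebbbe90bebbbf40bebbbf40bebb89d0bebbbfe0bebbc040bebbc090bebbe530bebbe530bebbe530bebbe530bebba780bebbe530bebba780bebbe530bebbe530bebbe530bebbe530bebbe530bebba780bebbe580bebbaa00bebbe580bebba780bebba780bebba780bebc0860bebbaa00bebc7980bebbaaa0bebbba60bebbaa00bebbaa00bebbaa00bebbaaa0bebbaaa0bebd8b00bebc01b0bebd8b00bebbbd50bebbed40bebbed60bebdb050bebbb1a0bebdb070bebbb1a0bebbd510bebbbfe0bebbc040bebbc090bebbd510bebbb1a0bebe6080bebbd510bebe6080bebbb1a0bebbb1a0bebbb1a0bebbd510bebbb6d0bebbd510bebbb6d0bebbba60bebbb810bebbb870bebbb810bebbb870beb92550bebe66e0bebbb960b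ebbba60bebbb6d0bebbb6d0bebbb6d0bebbf080bebbb810bebbb810bebbb810bebbb870bebbb960bebbb960bebbb960bebbba10bebbba10bebbba60bebbbe90bebc0190bebbbc00bebbbc00bebbbc00bebbc040bebbbd50bebbbd50bebbbd50bebbeb90bebbbe90bebbbe90bebbbe90bebbbf40bebafd80bebbbfe0bebbbfe0bebbc040bebbc090bebbe160bebbec30bebbec30bebafd80bebbe2c0bebafd80bebbece0bebbdee0bebbe3f0bebbe3f0bebbece0bebbc670bebbed30bebbe3f0bebbed30bebbc670bebbc670bebbc670bebbdee0bebbdee0bebbdee0bebbdee0bebbdee0bebbdee0bebbdee0bebbdee0bebbdee0bebb9d70bebbe580bebbe530bebbe590bebbe530bebbe530bebbe530bebbe530bebbd120bebbe530bebbd120bebbe530bebbe530bebbe530bebbe530bebbe530bebbb6d0bebbe580bebbe580bebbe580bebbb810bebbb870bebbd120bebbf020bebbb960bebbf050bebbba10bebbba60bebbdee0bebbdee0bebbdee0bebbdee0bebba780bebc06c0bebc06c0bebc0710bebbbd50bebbe590bebc0710bebc0740bebbaa00bebc0770bebbaaa0bebbdee0bebbbfe0bebbc040bebbc090bebbdee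0bebbdbe0bebc0820bebbdee0bebc0830bebbdbe0bebbdbe0bebbdbe0bebbdee0bebbdee0bebbdee0bebbdee0bebbdee0bebbdee0bebbdee0bebbdee0bebbdee0beb92550bebbe590bebbe420bebdb170bebbe160bebbe160bebbe160bebbe530bebbe2c0bebbe2c0bebbe2c0bebbe310bebbe420bebbe420bebbe420bebbe530bebbb6d0bebbe580bebbe580bebbe580bebbb810bebbb870bebbe3f0bebbeb60bebbb960bebbeb90bebbba10bebbba60bebbe3f0bebbe3f0bebbe3f0bebbe3f0bebba780bebbeb00bebbeb00bebbeb60bebbbd50bebbe530bebbe530bebbec30bebbaa00bebbe580bebbaaa0bebbe3f0bebbbfe0bebbc040bebbc090bebbe3f0bebbe3f0bebbe580bebbe3f0bebbe580bebbe3f0bebbe3f0bebbe3f0bebbe3f0bebbe3f0bebbe3f0bebbe3f0bebbe3f0bebbe3f0bebbe3f0bebbe3f0bebbe3f0beb92550bebbe580bebbe530bebbe580bebbe530bebbe530bebbe530bebbe530bebbaa00bebbe530bebbaaa0bebbe530bebbe530bebbe530bebbe530bebbe530beb92550bebbe580bebbaaa0bebbe580beb92550beb92550bebbe900bebbeb9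0bebbb960bebbeb90bebbba10bebbba60bebbe900bebbe900bebbe900bebbe900beba4f00bebbec30bebbec30bebbec30bebbbd50bebbec30bebbec30bebbec30bebbb1a0bebbec60bebbb1a0bebbe900bebbbfe0bebbc040bebbc090bebbe900bebbb6d0bebbed30bebbe900bebbed30bebbb810bebbb870bebbe900bebbe900bebbb6d0bebbe900bebbb6d0bebbba60bebbb810bebbb870bebbb810bebbb870beb92550bebbeed0bebbb960bebbba60bebbba10bebbba60bebbec30bebbec30bebbbc00bebbec60bebbbc00bebbeb90bebbbd50bebbc040bebbbd50bebbeb90bebbb6d0bebbed30bebbbe90bebbec30bebbb810bebbb870bebbbfe0bebbc040bebbb960bebbeb90bebbba10bebbba60bebbeb90bebbeb90bebbeb90bebbeb90beb92550bebbec30bebbec30bebbec30bebbb810bebbb870bebbec30bebbec30beb92550bebbb870beb92550bebbba60bebbb960bebbb960bebbba10bebbba10beb92550bebbed30bebbba10bebbba60beb92550beb92550beb92550bebbee30bebb8b60bebbbd50bebbbc00bebbbc00bebbbd50bebbbe90bebbbd50bebbbd50beb92550bebbbfe0bebbbe90bebbbe90bebbbd50bebbbf40bebbbfe0bebbbfe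0beb92550bebbc090bebbbf40bebbef70bebbbe90bebbc040bebbbf40bebbef70beb92550bebbc040bebbbf40bebbefd0beb92550beb92550bebbbfe0bebbc040beb92550bebbc040beb92550beb92550beb92550beb92550bebbf360bebbf360beb95200bebc06c0bebc06c0bebc06c0beb9a720bebc0710bebc0710bebc0710beb9fd80bebc0740beba2920beba3f20beba5520beba6b40beba8180beba97c0bebaae20bebc07f0bebadb30bebc0820bebb0880bebb1f50bebb3630bebb4d30bebb6440bebb7b70bebb92b0bebbaa00bebbc170bebbd8f0bebbe2c0bebbe310beb92550bebe4cb0bebbe420bebdc300bebbd120bebc0240bebe4730bebe4730bebbd120bebe4730bebbd120bebe4730bebbd120bebbd120bebbd120bebc0c00bebbdbe0bebe4c50bebbe9a0bebe4a90bebbdbe0bebbdbe0bebbeb00bebbeb60bebbdbe0bebbef90bebbdbe0bebbdbe0bebbed20bebbee20bebbedd0bebbee20bebbd120bebbeed0bebbef30bebbef90bebbdbe0bebbe160bebc0190bebc0190bebbdbe0bebbe2c0bebbdbe0bebbe160bebbdbe0bebbdbe0bebbdbe0bebbe2c0bebbe160bebc10b0bebbe420bebbe420bebbe160bebbe310beb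bee80bebbeed0bebbe160bebbe310bebbe160bebbe6e0bebbe160bebbe160bebbe160bebbe310beb92550bebbe2c0bebbe2c0bebbe310bebbe420bebbe420bebbe420bebbeb00bebbe6e0bebbedd0bebbe6e0bebbec60bebbe6e0bebbe6e0bebbe6e0bebbedd0bebbe160bebbeb60bebbe9a0bebbef30bebbe2c0bebbe310bebbe9a0bebbea50bebbe420bebbeb00bebbeb00bebbeb60bebbec60bebbec60bebbec60bebbed20bebbdbe0bebbedd0bebbedd0bebbee20bebbee80bebbeed0bebbef30bebbef90bebbe9a0bebbf040bebbea50bebbf7a0bebbeb00bebbeb60bebbf200bebbfe20bebbe160bebc07f0bebbed20bebc0820bebbe2c0bebbe310bebbee80bebbeed0bebbe420bebbef90bebbefe0bebbf040bebbf7a0bebbf7a0bebbf7a0bebbfe20beb92550bebc0190bebc0020bebc0020bebbfd40bebc00e0bebc0190bebc0190bebbe9a0bebc01b0bebbea50bebc00e0bebbeb00bebbeb60bebbfd40bebc00e0bebbe160bebc0520bebbed20bebc0190bebbe2c0bebbe310bebbee80bebbeed0bebbe420bebbef90bebbefe0bebbf040bebc00e0bebc00e0bebc00e0bebc00e0beb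92550bebc0190bebc0190bebc0190bebbe2c0bebbe310bebc0190bebc0190beb92550bebbe310beb92550bebc0240bebbe420bebbe420bebc0240bebc0240beb92550bebc0550bebbed20bebc0550bebbe6e0bebbe6e0bebbee80bebbeed0bebbe6e0bebbef90bebbea50bebbf040bebbe9a0bebbe9a0bebbea50bebbea50beb92550bebbeb00bebbea50bebc0550bebbeb00bebbeb60bebbed20bebbed20bebbe9a0bebbedd0bebbea50bebbee80bebbeb00bebbeb60bebbee80bebbeed0beb92550bebbef90bebbea50bebbf040beb92550beb92550bebbeb00bebbeb60beb92550bebbeb60beb92550beb92550bebaf6c0bebbec60bebbed20bebbed20beb92550bebbedd0bebbed20bebbee80beb92550bebbee20bebbedd0bebbee20beb92550bebbee20beb92550bebbee80beb92550beb92550beb92550bebbcbe0beb92550bebbef90beb92550bebbefe0beb92550beb92550beb92550beb92550beb93c30beb99640beb9f0f0beba4c50bebaa870bebb0540bebb62c0bebbc110beb92550bebc0190bebbf7a0bebdb170bebbf7a0bebbf7a0bebbf7a0bebbf7a0bebbf7a0bebbf7a0bebbf7a0bebbf7a0bebbfd40bebbfd40bebc0520bebc0690bebbf7a0bebc0640b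ebbfd40bebc06f0bebbfd40bebbfd40bebbfd40bebbfd40bebbfd40bebbfd40bebbfd40bebbfd40bebc0020bebc0020bebc0020bebc0020beb92550bebc0020bebc0020bebc0020bebc00e0bebc00e0bebc0190bebc0190bebc0020bebc0300bebc00e0bebc0300bebc0190bebc0470bebc0470bebc0470bebbfd40bebc0520bebc05e0bebc05e0bebc0470bebc04d0bebc0520bebc0750bebc0020bebc0640bebc00e0bebc06f0bebc0190bebc07b0bebc0800bebc0ba0beb92550bebc0ba0bebc0ba0bebc0ba0bebc0470bebc04d0bebc0520bebc0e90bebc0020bebc0640bebc00e0bebc06f0bebc0190bebc07b0bebc0800bebc1000beb92550bebc10a0bebc00e0bebc10a0beb92550beb92550bebc0190bebc10f0beb92550bebc0640bebc0300bebc06f0bebc0300bebc04d0bebc0470bebc04d0beb92550bebc04d0bebc0520bebc0640bebc0470bebc04d0bebc0520bebc06f0beb92550bebc04d0beb92550bebc0520beb92550beb92550beb9cd80bebc0640beb92550bebc0640beb92550bebc0690beb92550beb92550beb92550beb92550beb92550beb92550beb92550beb92550beb92550beb92550beb930d0bebaa580beb92550bebc0ba0bebc0ba0bebc0ba0bebc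0ba0bebc0ba0bebc0ba0bebc1290bebc0ba0bebc0e90bebc0e90bebc0e90bebc0e90bebc0e90bebc0e90bebc1000beb92550bebc1000bebc1000bebc1060bebc1000bebc1060bebc10c0bebc1230bebc0e90bebc1290bebc1230bebc1290bebc1000bebc1060bebc10c0bebc1400beb92550bebc15e0bebc1230bebc1290bebc1000bebc1060bebc10c0bebc1400beb92550bebc1060beb92550bebc10c0beb92550bebc1170bebc1170bebc1230beb92550bebc1290bebc1230bebc1290beb92550beb92550beb92550beb92550beb92550beb92550beb92550beb92550beb92550beb92550beb92550beb92550beb92550bebc15e0bebc15e0bebc15e0bebc15e0bebc1750bebc1750bebc1750beb92550bebc1810bebc1810bebc1870bebc1750bebc1930bebc1810bebc1870beb92550bebc1930bebc1810bebc1870beb92550beb92550beb92550bebc18d0beb92550bebc1930beb92550beb92550beb92550beb92550beb92550beb92550beb92550bebc1b00bebc1b00bebc1bc0beb92550bebc1c20bebc1bc0bebc1c20beb92550bebc1c20beb92550beb92550beb92550beb92550beb92550beb92550beb92550bebc1da0beb92550bebc1e00beb92550beb92550beb92550beb92550beb92550beb92550beb92550beb92550beb92550beb92550beb92550beb92550b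eb62a50bebe71b0bebd8b30bebdb170bebdb0a0bebdb1a0bebdb1a0bebe71b0bebd63b0bebe6620bebd63e0bebdbee0bebd8a40bebd8a40bebd8a40bebdb0a0bebcb3a0bebe7d10bebd8a40bebe7fd0bebcb780bebcb870bebd8a40bebd8a40bebd44b0bebd8a40bebd44b0bebd44b0bebd8a40bebd8a40bebd8a40bebd8a40bebbabd0bebd8b00bebd8b00bebd8b00bebd44b0bebd54e0bebd8b00bebd8b00bebbabd0bebd5900bebbabd0bebd54e0bebd5900bebd5a00bebd5900bebd5900bebcb000bebdb780bebd9100bebdb220bebcb000bebcb000bebcb000bebd8720bebd5900bebd5a00bebd8720bebd8720bebd8720bebd8720bebd8720bebd8720bebb89d0bebda980bebda4a0bebdaab0bebda4a0bebda4a0bebda4a0bebda4a0bebcb000bebda4a0bebd2820bebda4a0bebd8a40bebda4a0bebda4a0bebda4a0bebbe600bebda980bebd4700bebda980bebbe600bebbe600bebd2820bebd8a40bebd3730bebd8a40bebd4ec0bebd5f40bebd4700bebd4700bebd4700bebd4ec0bebc6820bebd8b00bebd63e0bebd8b00bebd5f40bebd8b00bebd8b00bebd8b00bebc6820bebd8b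30bebc6820bebd5f40bebc6820bebc6820bebd3730bebd5f40bebc6820bebdbfc0bebd0560bebdbfc0bebd0560bebd0560bebd0560bebd0560bebd0560bebd3730bebd3730bebd3730bebd3730bebd3730bebd3730bebd3730beba8010bebdaab0bebd63b0bebd63b0bebd62c0bebd63b0bebd63b0bebd63e0bebd62c0bebd8b30bebd62c0bebd62c0bebd62c0bebd62c0bebd62c0bebd62c0bebc6820bebda980bebd62c0bebd63b0bebca430bebca430bebd62c0bebd62c0bebd62c0bebd62c0bebd62c0bebd62c0bebd62c0bebd62c0bebd62c0bebd62c0beba8010bebd63b0bebd63b0bebd63b0bebcb3a0bebcb3a0bebd63b0bebd63b0beba8010bebcb780beba8010bebd9100bebca430bebca430bebd9100bebd9100bebc6820bebda980bebd44b0bebda980bebc6820bebc6820bebc6820bebd3730bebc6820bebc6820bebc6820bebc6820bebc6820bebcb3a0bebcb780bebcb870beba83c0bebcb780bebcb870bebda980bebcb780bebcb870bebd54e0bebd54e0bebc6820bebd5900bebd5900bebd5900bebd5900bebd5a00bebd6b40bebda4a0beba95c0bebda980bebda980bebda980beba9a40beba9b60bebc6820bebdae70beba9ed0bebdb0a0b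ebaa110bebaa230bebc6820bebc6820bebc6820bebc6820bebbbc00bebdb170bebdb170bebdb170bebbbd50bebcb870bebdb170bebdb170bebbbe90bebd9d00bebbbf40bebc6820bebbbfe0bebbc040bebbc090bebc6820bebc1ad0bebdbfc0bebc6820bebdbfc0bebc6820bebc6820bebc6820bebc6820bebc6820bebc6820bebc6820bebc6820bebc6820bebc6820bebc6820bebc6820beba23a0bebd5a00bebdb170bebdb170bebcb3a0bebcb3a0bebcb3a0bebdb170bebca430bebcb3a0bebcb3a0bebcb3a0bebcb3a0bebcb780bebcb780bebcb780bebca430bebcb870bebd5900bebd5a00bebca430bebca430bebca430bebd7a10bebca430bebdb0a0bebca430bebca430bebca430bebca430bebca430bebca430beba99e0bebd79f0bebd79b0bebd7a10bebca430bebcb3a0bebcb3a0bebdb170beba99e0bebcb780beba99e0bebca430bebca430bebca430bebca430bebca430bebca430bebcb780bebca430bebcb780bebca430bebca430bebca430bebca430bebca430bebca430bebca430bebca430bebca430bebca430bebca430bebca430beba99e0bebcb780bebcb3a0bebcb780bebcb3a0bebcb3a0bebcb3a0bebcb3a0bebaa080bebcb3a0bebaa080bebcb3a0bebcb3a0beb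cb3a0bebcb3a0bebcb3a0beba99e0bebcb780bebaa230bebcb780beba9a40beba9b60bebd7890bebd7890beba9ed0bebd7890bebaa110bebaa230bebd5f40bebd7890bebd7890bebd7890bebaa080bebd7980bebd7980bebd7980bebcb000bebd7980bebd7980bebd7980bebaa230bebd79b0bebaa2a0bebd79f0bebb5280bebb53d0bebcb000bebd5f40bebaa080bebdbfc0bebb5a50bebdbfc0bebaa080bebaa080bebb5f80bebb60d0bebaa080bebbef90bebaa110bebaa230bebaa230bebaa230bebaa2a0bebaa2a0bebaa230bebd9d00bebaa230bebaa230bebaa2a0bebaa2a0bebd63e0bebd7e30bebbfaf0bebd7e30bebbfaf0bebd7e30bebd2820bebd2820bebd2820bebd62c0bebb81f0bebdc410bebd2820bebd9a80bebd4700bebd4700bebd4700bebd4ec0bebd4700bebd62c0bebd4700bebd62c0bebd4ec0bebd62c0bebd62c0bebd62c0bebacd10bebd63b0bebd63b0bebd63b0bebd63b0bebd63b0bebd63b0bebd63b0bebacd10bebd63e0bebacd10bebdc380bebba7f0bebd7600bebdc380bebdc380bebb5f90bebdc410bebd7600bebdc410bebb60b0bebb60f0bebb6140bebd5170bebb8e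e0bebbb9f0bebbbb50bebbbcb0bebbbe10bebbbf80bebc0800bebc1fb0bebaf350bebd8ab0bebd8680bebdc6d0bebd8680bebd8680bebd8680bebd8680bebaf350bebd8680bebaf350bebd8ab0bebd8ab0bebd8ab0bebd8bb0bebdc7f0bebb2eb0bebdc880bebdc880bebdc880bebb33c0bebb3500bebbe2d0bebdc910bebb8ee0bebdc950bebb8ee0bebb8ee0bebb8ee0bebb8ee0bebbee50bebbefc0bebb1a90bebdcac0bebdcac0bebdcac0bebb8ee0bebd8bb0bebdcb50bebdcb50bebb1a90bebd97d0bebb1a90bebb8ee0bebb5280bebb53d0bebb8ee0bebb8ee0bebb2eb0bebe49e0bebb5a50bebe49e0bebb33c0bebb3500bebb5f80bebb60d0bebb2eb0bebb8ee0bebb2eb0bebbaa00bebb33c0bebb3500bebb33c0bebb3500beba23a0bebd8bb0bebd4ec0bebe4a90bebd7720bebd7740bebd8680bebd93a0bebb4300bebd8680bebb4300bebd8680bebb5280bebb53d0bebd62c0bebd8ab0bebb4d50bebd8ab0bebb4d50bebd8bb0bebb4fe0bebb53d0bebb5280bebb53d0bebb57b0bebd2820bebb57b0bebcf500bebb5a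50bebb5e30bebb5ce0bebb5e30bebb5f80bebb60d0bebc1590bebd4700bebd3120bebd3d20bebd4ec0bebd63b0bebb6ca0bebd4f70bebb6ca0bebd3d20bebba7f0bebd5410bebd4f70bebd4f70bebb81f0bebd7740bebd74d0bebd8ab0bebbb2f0bebbb460bebbb5c0bebd5630bebb81f0bebbb9f0bebb81f0bebbbcb0bebbbe10bebbbf80bebc1d40bebcb000bebb2f50bebd7720bebd76b0bebd7720bebd76b0bebd76b0bebd76b0bebd76b0bebb9780bebd76b0bebb9780bebd76b0bebba7f0bebd76b0bebd76b0bebd76b0bebb2f50bebd7720bebba270bebd7720bebb2f50bebb2f50bebba7f0bebd5630bebbad70bebbb9f0bebbad70bebbbcb0bebbb2f0bebbb460bebbb2f0bebbb460bebbb5c0bebbb9f0bebbb880bebbb9f0bebbbb50bebbbcb0bebbbe10bebbbf80bebbc3b0bebd4ec0bebbc3b0bebc0130bebbe600bebbe600bebc0590bebc0710bebbcef0bebd97d0bebbcef0bebd97d0bebbe000bebbe170bebbe2d0bebbe600bebbda40bebc15c0bebbda40bebbea00bebbe000bebbe170bebbe000bebbe170beba23a0bebd97d0bebbe5b0bebb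ea00bebbe890bebbea00bebbeb70bebbece0bebbee50bebbefc0bebbf130bebc0130bebbf700bebc0420bebbf700bebc0710bebb4070bebd97d0bebbfcd0bebc0130bebb4070bebb4070bebc02a0bebc0420bebc0590bebc0710bebc0880bebc18c0bebc0b70bebc0fe0bebc0e60bebc0fe0beba23a0bebc12d0bebc1450bebc15c0bebb44d0bebb44d0bebc1a30bebc1bb0beba23a0bebb45e0beba23a0bebdc420bebbe600bebcf500bebd74d0bebdc420bebb5f90bebdd940bebcf500bebdd940bebb60b0bebb60f0bebb6140bebcf500bebbe600bebbe600bebbe600bebbe600bebbe600bebbe600bebc1d40bebd5410bebaef10bebd4f70bebd3d20bebd7740bebd3d20bebd3d20bebd3d20bebd3d20bebbe600bebd4f70bebd4f70bebd4f70bebd4f70bebd5410bebd6b40bebd76b0bebaef10bebd7720bebd7720bebd7720bebaef10bebaef10bebbe600bebd7890bebaef10bebd7890bebaef10bebaef10bebb8ee0bebbece0bebbee50bebbefc0bebb5b00bebd7980bebd7980bebd7980bebb8ee0bebd5410bebd7980bebd7980bebb5d40bebd79b0bebb5dd0bebc0130bebb8ee0bebb8ee0bebb8ee0bebbcbe0b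ebb5b00bebdf210bebb8ee0bebdf260bebb5b00bebb5b00bebb6140bebb8ee0bebb5d40bebb8ee0bebb5dd0bebb8ee0bebb5d40bebb5d40bebb5dd0bebb5dd0beba23a0bebd5410bebd7e30bebe2760bebb5f90bebb5f90bebb6140bebd76b0bebb60b0bebb60b0bebb60f0bebb6140bebcb780bebcb870bebd3d20bebd4f70bebc0d90bebd4f70bebd4f70bebd5410bebc0d90bebc0d90bebcf500bebd7890bebca430bebd7890bebca430bebca430bebca430bebca430bebca430bebcf500bebaf350bebd7980bebd7980bebd7980bebca430bebcb3a0bebd3d20bebd7980bebbabd0bebcb780bebbabd0bebca430bebca430bebca430bebca430bebca430bebbabd0bebcb780bebca430bebcb870bebbabd0bebbabd0bebbabd0bebca430bebca430bebca430bebca430bebca430bebca430bebca430bebca430bebca430beba23a0bebcb780bebcb3a0bebcb780bebcb3a0bebcb3a0bebcb3a0bebcb3a0bebca8a0bebcb3a0bebcb3a0bebcb3a0bebcb3a0bebcb3a0bebcb3a0bebcb3a0beba23a0bebcb780bebcb780bebcb780beba23a0beba23a0bebd7890bebd7890bebb8ee0bebd7890bebc7990bebc7990bebd7890bebd7890beb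d7890bebd7890beba23a0bebd7980bebd7980bebd7980bebd3120bebd7980bebd7980bebd7980beba23a0bebd79b0beba23a0bebd79f0beba23a0beba23a0bebb8ee0bebd7c50bebb57b0bebdd940bebb5a50bebdd940bebb5ce0bebb5e30bebb5f80bebb60d0bebb8ee0bebb8ee0bebb8ee0bebb8ee0bebb8ee0bebb8ee0bebb8ee0bebb8ee0beba23a0bebdf3d0bebd7e30bebd9a80bebd7e30bebd7e30bebd7e30bebd7e30bebd7e30bebd7e30bebd7e30bebd7e30bebd7e30bebd7e30bebd7e30bebd7e30beba23a0bebdc410bebd8010bebd9a80bebb89d0bebb89d0bebd8010bebd8010bebd8010bebd8010bebd8010bebd8010bebd8010bebd8010bebd8010bebd8010beba23a0bebd9a80bebd9a80bebd9a80bebd9a80bebd9a80bebd9a80bebd9a80beba3d20bebd9d00beba4740bebdc380bebb8ee0bebdc380bebdc380bebdc380beba65d0bebdc410bebdc410bebdc410beba7a70beba7f90beba84c0bebb8ee0beba8f20beba9460beba9990beba9ed0bebb8ee0bebb8ee0bebb8ee0bebb8ee0bebab910bebdc6d0bebdc6d0bebdc6d0bebdc6d0bebdc6d0bebdc6d0b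ebdc6d0bebae3a0bebdc7f0bebdc7f0bebdc7f0bebdc7f0bebdc7f0bebdc7f0bebdc7f0bebb0ed0bebdc880bebdc880bebdc880bebb24a0bebb2a20bebb2fa0bebdc910bebb2f50bebdc950bebb2f50bebb2f50bebb50d0bebb5660bebb5bf0bebb8ee0bebb4070bebdcac0bebdcac0bebdcac0bebb7db0bebd9c30bebdcb50bebdcb50bebb4070bebd9d00bebb4070bebb8ee0bebb8ee0bebb8ee0bebb8ee0bebb8ee0bebb44d0bebe1aa0bebb8ee0bebe1af0bebb45e0bebb4620bebb8ee0bebb8ee0bebb44d0bebb8ee0bebb44d0bebb8ee0bebb45e0bebb4620bebb45e0bebb4620beb826f0bebe4cb0bebdfd30bebe2760bebcb780bebcb870bebe27b0bebe4730bebcd300bebe4730bebde400bebe4730bebdfbf0bebdfbf0bebdfbf0bebe2650bebb4070bebe4c50bebdfbf0bebe4a90bebb4070bebb4070bebdfbf0bebdfbf0bebb4070bebdfbf0bebb4070bebb4070bebca430bebdc9c0bebdd7c0bebdfbf0bebb2f50bebdfcf0bebdfcf0bebdfcf0bebb44d0bebb44d0bebdfcf0bebdfcf0bebb44d0bebb4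5e0bebb44d0bebb44d0bebb45e0bebb4620bebb45e0bebb45e0bebb4620bebcb870bebca430bebe4c50bebb60b0bebb60f0bebb6140bebca430bebbbd50bebbbd50bebbbf40bebc7990bebbbe90bebbbe90bebbbf40bebbbf40bebb2f50bebbbfe0bebbc040bebbc090bebc1ad0bebc1ad0bebcb3a0bebcb3a0bebb5b00bebcb3a0bebb5b00bebcb3a0bebcb3a0bebcb3a0bebcb3a0bebcb3a0bebb2f50bebcb780bebb5d40bebcb780bebb33c0bebb3500bebb6140bebde400bebb5200bebde400bebb5200bebb5200bebb60b0bebb60f0bebb60b0bebb60f0bebb4070bebdfcf0bebde740bebdfcf0bebbbd50bebdc430bebdc450bebdfcf0bebb4d50bebdfd30bebb4fe0bebc7990bebb5280bebb53d0bebbc090bebc7990bebb44d0bebe9f00bebb5a50bebead60bebb45e0bebb4620bebb5f80bebb60d0bebb5b00bebbef90bebb5b00bebb5b00bebb5d40bebb5d40bebb5dd0bebb5dd0beba23a0bebeb020bebb5d40bebb5d40bebb5dd0bebb5dd0bebb6140bebdc9c0bebb5f90bebb60b0bebb5f90bebb5f90bebb60b0bebb60f0bebb60b0bebb60b0bebb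4070bebb6140bebdc150bebde700bebb4070bebb4070bebbfaf0bebdc150bebbe420bebd3120bebc0d90bebc0d90bebca8a0bebca8a0bebdc150bebdc150beba8010bebdc260bebca8a0bebca8a0bebb44d0bebb44d0bebdc260bebdc260beba8010bebb45e0beba8010bebd4820bebb5280bebb53d0bebca430bebd99a0bebb44d0bebdc410bebb5a50bebdc410bebb45e0bebb4620bebb5f80bebb60d0bebb4d50bebbb9f0bebb4fe0bebbbcb0bebb4d50bebb4d50bebb4fe0bebb4fe0bebb3780bebb5280bebb53d0bebcb870bebb57b0bebb57b0bebb5a50bebb5a50bebb5ce0bebb5ce0bebb5dd0bebb5f80bebb60d0bebbef30bebbef90bebbefe0bebb5200bebc1ea0bebcb780bebcb780bebb5200bebb5200bebb6140bebdc910bebb76b0bebdc950bebb76b0bebb76b0bebbeb70bebbece0bebbee50bebbefc0bebb5200bebdcac0bebdcac0bebdcac0bebb81f0bebb81f0bebdcb50bebdcb50bebb5200bebdd110bebb5200bebc0130bebb5280bebb53d0bebbc090bebc0710bebb57b0bebdf210bebb5a50bebdf260bebb5b00bebb5b00bebb5f80bebb60d0bebb5d40bebbb9f0bebb5dd0beb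bbcb0bebb5d40bebb5d40bebb5dd0bebb5dd0beb8dfe0bebba7f0bebdc2b0bebe2760bebb5f90bebb5f90bebb6140bebcb3a0bebb5b00bebb60b0bebb5b00bebb6140bebb5b00bebb5b00bebbb9f0bebbbb50bebb5b00bebbbe10bebb5b00bebc0800bebb5ce0bebb5d40bebb5dd0bebb5dd0bebb5d40bebd6b40bebb5d40bebb89d0bebb5d40bebb5e30bebb5dd0bebb5e30beba99e0bebb60b0bebb5f90bebb6140bebb5f90bebb5f90bebb5f90bebb60d0beba99e0bebb60b0beba99e0bebb60d0bebb60f0bebb6140bebbe890bebbe890bebb6ca0bebbeb70bebbece0bebbee50bebb6ca0bebb6ca0bebb6ca0bebc0d90bebb81f0bebbb9f0bebb81f0bebbbcb0bebbbe10bebbbf80bebbffc0bebbffc0beb91380bebc02a0bebc0420bebc0590bebb81f0bebb81f0bebb81f0bebc0b70bebaa080bebc0e60bebaa080bebc1150bebba7f0bebc1450bebc15c0bebc1740beb920c0bebc1a30bebaa230bebc1d30beb92420beb924f0bebb9780bebdc150bebb9d70bebbb9f0bebb9d70bebb9d70bebba270bebba270bebba270bebba530beba4f00bebba7f0bebba7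f0bebbb9f0bebbad70bebbad70bebbad70bebbbf80beba8010bebbb2f0beba8010bebbb460beba8010beba8010bebbb880bebbb9f0bebb76b0bebbbcb0bebb76b0bebbbf80bebb76b0bebb76b0bebb76b0bebb76b0bebba780bebbef90bebba780bebba780bebbaa00bebbaa00bebbaaa0bebbaaa0beba23a0bebca8a0bebbaa00bebbaa00bebbaaa0bebbaaa0bebbda40bebbece0bebbbc00bebbe000bebbbc00bebbe170bebbbd50bebbc040bebbbd50bebbe890beba8010bebbea00bebbbe90bebbece0bebb89d0bebb89d0bebbbfe0bebbc040bebbb1a0bebbf700bebbb1a0bebbb1a0bebbfcd0bebbfcd0bebbfcd0bebbffc0beba23a0bebc0130bebc02a0bebc0420bebbb6d0bebbb6d0bebc0880bebc0b70beba23a0bebbb810beba23a0bebbb6d0bebb89d0bebb89d0bebbb810bebbb810beba23a0bebc18c0bebb89d0bebbb960beba23a0beba23a0beba23a0bebb89d0beba8f20beba9460beba9990beba9ed0bebbbd50bebbbe90bebbbd50bebbbd50beba23a0bebbbfe0bebbbe90bebbbe90bebbbf40bebbbf40bebbbfe0bebbbfe0beba23a0bebbc090bebbaaa0bebc1ad0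bebbfaf0bebbfaf0bebbfaf0bebd4820beba23a0bebd3120bebcc5b0bebd99a0beba23a0beba23a0bebb2fa0bebdc910beba23a0bebdc950beba23a0beba23a0beba23a0beba23a0bebb5bf0bebbefc0beba23a0bebdcac0bebdcac0bebdcac0beba23a0bebd8bb0bebdcb50bebdcb50beba23a0bebd97d0beba2920beba3f20beba5520beba6b40beba8180beba97c0bebaa080bebdf210bebadb30bebdf260bebaa080bebaa080bebb3630bebb4d30bebaa230bebb7b70bebaa2a0bebbaa00bebaa230bebaa230bebaa2a0bebaa2a0beb9bdd0bebd97d0bebbe420bebe4a90bebbbd50bebd8680bebd8680bebe4240bebaa080bebd8680bebaa080bebd8680bebaa080bebaa080bebbc090bebd8ab0beba99e0bebd8bb0bebaa230bebd9d00bebaa230bebaa230bebaa2a0bebaa2a0bebbaa00bebbef90bebbaa00bebbba60bebbaa00bebbaa00bebbaa00bebbaa00beba99e0bebbaaa0bebbef30bebbef90bebbb6d0bebbb6d0bebc1ea0bebd8870beba99e0bebbb810beba99e0bebbba60bebba7f0bebbb1a0bebbba10bebbba10beba99e0bebd8ab0bebbb1a0bebbe420beba99e0beba99e0beba99e0beb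bb1a0beba99e0beba99e0beba99e0beba9ed0bebbb6d0bebbb6d0bebbb810bebbb870beba23a0bebbb810bebbb6d0bebbba60bebbb6d0bebbb6d0bebbb6d0bebbb6d0bebaa080bebbb810bebaa080bebbb810bebba7f0bebbb960bebbb960bebbb960bebaa080bebbba10bebaa230bebbef30bebaa080bebaa080bebaa080bebbbc00bebaa080bebaa080bebaa080bebaa080bebaa230bebaa230bebaa230bebaa2a0bebaa230bebaa230bebaa230bebaa230bebaa2a0bebaa2a0bebbbe10bebbbf80bebab910bebc1fb0bebab910bebba570bebbab30bebbb0f0bebbb6b0bebbbc70bebae3a0bebd97d0bebae3a0bebd97d0bebb24a0bebb2a20bebb2fa0bebbc670bebb0ed0bebbb9f0bebb0ed0bebb4b40bebb24a0bebb2a20bebb24a0bebb2a20beba23a0bebbb870bebb3aa0bebb4b40bebb45b0bebb4b40bebb50d0bebb5660bebb5bf0bebbb810bebb6720bebba570bebb7db0bebbb0f0bebb7db0bebbba10bebb9450bebbb9f0bebb9450bebba570bebb9fc0bebba570bebbab30bebbb0f0bebbb6b0bebbbc00bebbbc00bebbbcb0bebbbd50bebbbd50bebbbd50bebbbd50beb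a23a0bebbbe90bebbbe90bebbbe90bebbbe90bebbbf40bebbbf40bebbbf80beba23a0bebbbfe0beba23a0bebbc090bebbc3b0bebbc3b0bebbc3b0bebbe000beba23a0bebbe2d0bebbcef0bebbe5b0bebb60b0bebb60f0bebb6140bebbdbe0bebbc670bebbc670bebbc670bebbc670bebbc670bebbc670bebbda40bebbe170beba23a0bebbe000bebbe000bebbe170bebbe160bebbe160bebbe160bebbe160bebbcef0bebbe2c0bebbd120bebbe2c0bebbd120bebbe420bebbe420bebbe420beba23a0bebbf700bebbe6e0bebc0130beba23a0beba23a0bebbd120bebbe6e0beba23a0bebbd120beba23a0beba23a0bebaf6c0bebbd120bebbe600bebbe9a0beba23a0bebbea50bebbeb00bebbeb00beba23a0bebbe310bebbec60bebbec60beba23a0bebbed20beba23a0bebbe600beba23a0beba23a0beba23a0bebbcbe0beba23a0bebbefe0beba23a0bebc1590beba23a0beba23a0beba23a0beba23a0beba23a0beba23a0beba23a0beba4c50bebaa870bebb0540bebb62c0bebbc110beba23a0bebbe310bebbe420bebe78f0bebbe160bebbe160bebbe160bebbeed0bebbdbe0bebbe160bebbe160bebbe160bebbe160bebbe160bebbe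2c0bebbe2c0bebbdbe0bebbe2c0bebbe310bebbe420bebbe000bebbe170bebbe2d0bebbeb60bebbe160bebbe6e0bebbe6e0bebbe6e0bebbe2c0bebbe310bebbe9a0bebbea50beba23a0bebbe9a0bebbe9a0bebbe9a0bebbe160bebbe170bebbe2d0bebbea50bebaa230bebbe2c0bebaa2a0bebbe310bebbe420bebbe420bebbe420bebbe890bebbe5b0bebbeb70bebbe890bebbea00bebbe6e0bebbe6e0bebbe6e0bebbeed0bebbe6e0bebbef90bebbe890bebbea00bebbe9a0bebbe9a0bebbe9a0bebbea50beba23a0bebbeb00bebbe9a0bebbea00bebbea50bebbea50bebbeb00bebbeb00bebbeb60bebbeb70bebbec60bebbec60bebbec60bebbece0bebbed20bebbed20beba23a0bebbedd0bebbee20bebbee50beba23a0beba23a0bebbef30bebbef90beba23a0bebbefe0bebbf040bebbf130bebbf200bebbf200bebbf200bebbf200beba23a0bebbfcd0bebbfcd0bebbfcd0bebbf700bebbf7a0bebbf7a0bebc00e0beba23a0bebc0190beba23a0bebbf7a0beba23a0beba23a0beba23a0bebbf7a0beba23a0bebc0470beba23a0bebc0520beba23a0beba23a0beba23a0beba23a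0beba23a0beba23a0beba23a0beba23a0beba23a0beba23a0beba23a0bebaa580beba23a0bebc0190bebc0020bebc0020bebbfd40bebc0020bebc0020bebc0020bebbfd40bebc00e0bebbffc0bebc0130bebc0020bebc0300bebc00e0bebc0300beba23a0bebc0470bebc0020bebc0130bebc00e0bebc0130bebc0190bebc0190bebc02a0bebc0420bebc0300bebc0300bebc0300bebc0420bebc0470bebc0470beba23a0bebc0470bebc04d0bebc0520bebc0590bebc05e0bebc05e0bebc0640beba23a0bebc06f0beba23a0bebc0750beba23a0bebc0800bebc0880bebc08c0beba23a0bebc0e60bebc0b70bebc0ba0beba23a0beba23a0beba23a0beba23a0beba23a0beba23a0beba23a0beba23a0beba23a0beba23a0beba23a0beba23a0beba23a0bebc1000bebc0e90bebc1000bebc0e90bebc0fe0bebc1000bebc1060beba23a0bebc1000bebc1060bebc10c0bebc1150bebc1170bebc1170bebc1230beba23a0bebc1290bebc12d0bebc12f0beba23a0beba23a0beba23a0bebc1450beba23a0bebc15c0beba23a0beba23a0beba23a0beba23a0beba23a0beba23a0beba23a0bebc1750bebc1750bebc1810beba23a0bebc1870bebc18c0bebc18d0beba23a0bebc1990beba2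3a0beba23a0beba23a0beba23a0beba23a0beba23a0beba23a0bebc1bc0beba23a0bebc1c80beba23a0beba23a0beba23a0beba23a0beba23a0beba23a0beba23a0beba23a0beba23a0beba23a0beba23a0beba23a0beb62a50bebe9cd0bebe9650bebe99d0bebd5900bebd5a00bebd8680bebe99d0bebaa230bebd8ab0bebaa2a0bebd8bb0bebd8ab0bebd8bb0bebe9490bebe9880bebb44d0bebe9bd0bebe9490bebe99d0bebb45e0bebb4620bebe8410bebe9490bebd3fd0bebe9490bebd3fd0bebd3fd0bebd44b0bebd7600bebd7600bebe8410beba99e0bebe95f0bebe95f0bebe95f0bebd3fd0bebd54e0bebe95f0bebe95f0beba99e0bebd5900beba99e0bebd54e0bebd3fd0bebd3fd0bebd3fd0bebd44b0beba99e0bebd5a00bebd3fd0bebd8bb0beba99e0beba99e0beba99e0bebd44b0bebb8b60bebc7990bebc7990bebc7990bebc7990bebd44b0bebd44b0bebd44b0beba8010bebd5900bebd54e0bebd5900bebd54e0bebd54e0bebd54e0bebd54e0beba99e0bebd54e0bebaa080bebd54e0bebd54e0bebd54e0bebd54e0bebd54e0beba99e0bebd5900bebaa230bebd5900beba99e0b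eba99e0bebaa080bebe9490beba99e0bebd9b30beba99e0beba99e0beba99e0beba99e0bebaa230bebaa2a0beba99e0bebd9d00bebb8b60bebe95f0beba99e0bebd93a0bebe95f0bebe95f0beba99e0bebd97d0beba99e0beba99e0beba99e0beba99e0beba99e0beba99e0bebaa080bebd97d0bebaa2a0bebd98e0bebaa080bebaa080bebb3630bebb4d30bebaa080bebb7b70bebaa080bebaa080bebaa080bebaa080bebaa2a0bebaa2a0beba8010bebd97d0bebaa230bebaa230bebaa080bebaa230bebaa2a0bebaa2a0bebaa080bebd93a0bebaa080bebaa080bebaa080bebaa080bebaa080bebaa080bebaa230bebd97d0bebaa230bebaa230bebaa230bebaa230bebaa230bebaa230bebaa2a0bebaa2a0bebaae20bebbaa00bebadb30bebb1f50bebb0880bebb1f50beba8010bebb4d30bebb6440bebb7b70bebb44d0bebb44d0bebbc170bebbd8f0beba8010bebb45e0beba8010bebe9760bebb4070bebb4070bebd44b0bebe9760beba8010bebe9db0bebd3fd0bebe9db0bebb2f50bebb2f50bebb2f50bebd0560bebb2f50bebb2f50bebb2f50bebb2f50bebb44d0bebb44d0bebb45e0bebb4620beba8010bebb45e0bebb4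620bebd5a00bebbd5c0bebbd5c0bebd54e0bebd54e0bebb2f50bebd54e0bebd54e0bebd54e0bebd54e0bebd54e0bebd54e0bebd54e0beba8010bebd5900bebd5900bebd5900beba8010beba8010bebb2fa0bebe9e70beba8010bebe9ec0beba8010beba8010bebaf6c0bebb5660bebb5bf0bebc1400beba8010bebea090bebea090bebea090beba8010bebb4620bebea140bebea140beba8010bebd9d00beba8010bebba570beba8010beba8010beba8010bebbbc70beba8010bebea310beba8010bebea370beba8010beba8010beba8010beba8010beba8010beba8010beba8010beba8010bebaa870bebb0540bebb45e0bebb4620beb8dfe0bebd5a00bebeb5b0bebec6a0bebb44d0bebb44d0bebb44d0bebd54e0bebb4070bebb44d0bebb44d0bebb44d0bebb45e0bebb45e0bebb45e0bebb45e0bebb4070bebc0b10bebb5d40bebd5900bebb4070bebb4070bebb4070bebb5dd0bebb4070bebeab60bebb45b0bebb4b40bebb45e0bebb4620bebb5bf0bebb60f0beba8010bebb60b0bebb60f0bebb6140bebb44d0bebb44d0bebb44d0bebe4240beba99e0bebb45e0beba99e0bebb4620bebb45e0bebb4620bebb45e0bebb4620beba99e0bebb50d0bebb5660bebb5bf0b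ebb5200bebb5200bebb5200bebbeaf0bebb5200bebb5200bebb5200bebb5200bebb9450bebb9450bebb9fc0bebb9fc0beb91380bebbab30bebbb0f0bebbb6b0bebb60b0bebb60f0bebb6140bebbcdd0bebaa080bebbd970bebaa080bebbe510bebbeaf0bebbf0d0bebbf6b0bebbfc90beb920c0bebc0860bebaa230bebc1430beb92420beb924f0bebb5200bebd8710beba8010bebb5b00beba99e0beba99e0bebaf6c0bebb5660bebb5bf0bebb5dd0beba8010bebb5d40bebb5d40bebb5d40beba99e0bebb5dd0bebb5f90bebdacd0beba8010bebb5f90beba8010bebb5f90beba8010beba8010beba8010bebb60b0beba8010bebb6140beba8010bebebaf0beba8010beba8010beba8010beba8010beba8010beba8010beba8010beba8010beba8010beba8010beba8010bebaa2a0beba8010bebca8a0bebaa230bebaa230bebaa080bebaa2a0bebaf6c0bebb5dd0bebaa080bebb60b0bebaa080bebb5f90bebaa080bebaa080bebaa080bebb60b0beba8010bebb60b0bebaa080bebb60f0bebaa080bebaa080bebaa080bebaa080bebaa080bebaa080bebaa080bebaa080bebaa230bebaa230bebaa230bebaa230beba8010bebaa230bebaa230bebaa230bebaa2a0bebaa2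a0bebaa870bebb0540beba8010bebbc110beba8010bebbdf40beba8010bebb89d0bebbc090bebbf6b0beba8010bebc0270bebc0860bebc0e40beba8010beba8010beba8010beba8010beba8010beba8010beba8010beba8010beba8010beba8010beba8010beba8010beba8010bebca8a0bebca8a0bebca8a0bebca8a0bebca8a0bebca8a0bebca8a0beba8010bebd4820bebaa2a0bebd4820bebd4820bebd4820bebd4820bebd4820beba8010bebd8ab0bebd8ab0bebd8ab0beba8010beba8010beba8010bebdec30beba8010bebe15f0beba8010beba8010beba8010beba8010beba8010beba8010beba8010bebed050bebed050bebed050beba8010bebd8bb0bebed120bebed120beba8010bebd97d0beba8010beba8010beba8010beba8010beba8010beba8010beba8010bebed310beba8010bebed370beba8010beba8010beba8010beba8010beba8010beba8010beba8010beba8010beba8010beba8010beba8010beba8010beb62a50bebd8bb0bebaa2a0bebd98e0bebd4f70bebd5410bebd8680bebd8680bebaa080bebd8680bebaa080bebd8680bebaa080bebaa080bebaa080bebd8680beba99e0bebd8ab0bebaa080bebd8ab0bebaa080bebaa080bebaa080bebaa080bebaa080bebaa080bebaa080bebaa080bebaa080bebaa080bebaa080bebaa230beba99e0bebaa230bebaa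230bebaa230bebaa230bebaa230bebaa230bebaa2a0beba99e0bebaa580beba99e0bebba570beba99e0bebbb0f0bebbb6b0bebbba10beba99e0bebd5410bebbcdd0bebd8ab0beba99e0beba99e0beba99e0beba99e0beba99e0beba99e0beba99e0beba99e0beba99e0beba99e0beba99e0beba99e0beb91380bebbb810bebbb870bebbba60bebbb960bebbb960bebbba10bebbba10beba99e0bebd3d20bebaa080bebbd5c0bebaa080bebbbc00bebbbd50bebd3d20beb920c0bebbbd50bebaa230bebd4f70beb92420beb924f0beba99e0bebaa080beba99e0bebaa080beba99e0beba99e0beba99e0beba99e0beba99e0beba99e0beba99e0bebaa230bebaa230bebaa230beba99e0bebaa230bebaa230bebaa230beba99e0bebaa2a0beba99e0beba99e0beba99e0beba99e0beba99e0beba99e0beba99e0bebd97d0beba99e0bebd97d0beba99e0beba99e0beba99e0beba99e0beba99e0beba99e0beba99e0beba99e0beba99e0beba99e0beba99e0beba99e0beb62a50bebd97d0bebaa230bebaa230bebaa080bebaa230bebaa230bebaa230bebaa080bebaa2a0bebaa080bebaa080bebaa080bebaa080bebaa080bebaa080beb920c0bebbb960bebaa080bebaa230beb92420beb924f0bebaa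080bebaa080bebaa080bebaa080bebaa080bebaa080bebaa080bebaa080bebaa080bebaa080beb62a50bebaa230bebaa230bebaa230beb92420beb924f0bebaa230bebaa230beb62a50beb924f0beb62a50bebbb1a0bebbb1a0bebbb1a0bebbb6b0bebbb810bebaef10bebbb810bebbb810bebbb870bebb2f50bebb2f50bebb2f50bebbba10bebb8b60bebbb870bebbb6d0bebbb6d0bebbb6d0bebbb6d0bebbb6d0bebbb810beba83c0bebbb810bebbb810bebbb870bebbb960bebbb960bebbb960bebbba10bebb2f50bebbba60bebbbc00bebbbc00bebbbc00bebbbc00bebbbc00bebbbc70beba95c0bebbbd50bebbbd50bebbbd50beba9a40beba9b60bebbbe90bebbbe90beba9ed0bebbbf40bebaa110bebaa230bebaf6c0bebb2f50bebbc230bebbcdd0bebaef10bebbd970bebbd970bebbdf40bebaef10bebbe310bebbee80bebbeed0bebaef10bebbef90bebaef10bebb2f50bebaef10bebaef10bebaef10bebb2f50bebaef10bebcc5b0bebaef10bebd7310bebaef10bebaef10bebaef10bebaef10bebaef10bebaef10bebaef10bebaef10bebaef10bebb0540bebb45e0bebb4620beb75b60bebc0190bebbe420bebf4d40bebb44d0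bebb44d0bebb44d0bebbeed0bebb4070bebb45e0bebb45e0bebb4620bebb8b60bebb8b60bebbd120bebbd120bebb4070bebbe420bebbd120bebbe420bebb4070bebb4070bebb6140bebbeaf0bebb4070bebbe6e0bebb4070bebb4070bebb4070bebb4070bebbdbe0bebbea50bebaef10bebbe9a0bebbe9a0bebbe9a0bebb4070bebb44d0bebbe160bebbeb00bebb4070bebb45e0bebb4070bebb4070bebb4070bebb4070bebb4070bebb4070bebb4070bebb45e0bebb4070bebbe310bebb4070bebb4070bebb4070bebb4d30bebb44d0bebb4620bebb44d0bebb44d0bebb44d0bebb44d0bebb44d0bebb44d0beb85c60bebb45e0bebb44d0bebb45e0bebb44d0bebb44d0bebb44d0bebb4620bebb45e0bebb45e0bebb45e0bebb4620bebb4d30bebb6440bebb7b70bebb92b0beb8a0f0bebbc170bebb5d40bebbe9a0beb8b260beb8b6c0bebb5b00bebbe9a0bebaef10bebbea50bebb5200bebb5200bebb5200bebb5200bebb5d40bebb5dd0beb8e750bebbeaf0bebb8b60bebbeb00bebb5200bebb5f90bebb5f90bebbec60beb90b40bebb60b0beb91440bebb5200beb91d60beb921f0bebaef10bebb5200bebae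f10bebbefe0bebaef10bebbf0d0bebaef10bebaef10bebaef10bebaef10bebaef10bebaef10bebaef10bebaef10bebaef10bebaef10bebaef10bebaef10beb979f0bebc0190bebb5d40bebb5d40bebb5b00bebb5d40bebb5dd0bebb5dd0bebb5b00bebb60b0bebb5b00bebb5b00bebb5b00bebb5b00bebb5b00bebb5b00beb9c660bebb60b0bebb5b00bebb5d40bebb45e0bebb4620bebb5b00bebb5b00bebb5d40bebb5dd0bebb5d40bebb5f90bebb5d40bebb5d40bebb5d40bebb5d40beba14f0bebb5dd0bebb5f90bebb60b0bebb5f90bebb5f90bebb5f90bebb5f90beba3d20bebb60b0beba4740bebb60b0bebaef10bebb6140bebb6440bebb7b70beba65d0bebbaa00bebbc170bebbd8f0beba7a70beba7f90beba84c0bebaef10beba8f20beba9460beba9990beba9ed0bebaef10bebaef10bebaef10bebaef10beba3e50bebc0ba0bebc0ba0bebc0ba0bebc0ba0bebc0e40bebc0e90bebc0e90bebae3a0bebc0e90bebc0e90bebc0e90bebc0e90bebc0e90bebc1000bebc1000beba3e50bebc1000bebc1060bebc10c0beba3e50beba3e50bebaef10bebc1230beba9ed0bebc12f0bebaa110beb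aa230bebaef10bebaef10bebaef10bebaef10beba6090bebc15e0bebc15e0bebc1750bebaef10bebc1750bebc1750bebc1810beba6950bebc1870beba6b80bebaef10bebaef10bebaef10bebaef10bebaef10beba6090bebc1b00bebaef10bebc1bc0beba6090beba6090bebaef10bebaef10beba6950bebaef10beba6b80bebaef10beba6950beba6950beba6b80beba6b80beb62a50bebf42a0bebeecd0bebeecd0bebb45e0bebb4620bebef430bebf4300bebb89d0bebef430bebbaaa0bebef430bebe5f70bebe5f70bebef520bebef5c0beba83c0bebef620bebe5f70bebf4d40beba83c0beba83c0bebe5f70bebe5f70beba9ed0bebe5f70bebaa110bebaa230bebb4070bebb89d0bebbf600bebe8990beba95c0bebe8990bebe91b0bebe91b0beba95c0beba95c0bebef430bebf1610beba9a40beba9a40beba9b60bebaa230beba9ed0beba9ed0bebaa110bebaa110bebaa230bebb4620bebb4070bebef5c0bebb4070bebb4070bebb4070bebb4070bebb4070bebb4070bebb4070bebb4070bebb4070bebb4070bebb44d0bebb4620bebacd10bebb45e0bebb44d0bebb4620bebb44d0bebb44d0bebb44d0bebb44d0bebb44d0bebb44d0bebb44d0bebb44d0bebb44d0bebb44d0b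ebb45e0bebb45e0bebacd10bebb45e0bebb4620bebb62c0bebacd10bebacd10bebb6140bebe5f70bebb2f50bebe5f70bebb5200bebb5200bebb5200bebb60f0bebb60b0bebb60f0bebaf350bebe8990bebbaaa0bebe8990bebb5200bebb60f0bebb6140bebe91b0bebb2f50bebf32b0bebb2f50bebb9d70bebb2f50bebb2f50bebb2f50bebb9d70bebaf350bebf42a0bebb2f50bebf42a0bebaf350bebaf350bebb2f50bebb2f50bebb2f50bebb2f50bebb2f50bebb2f50bebb2f50bebb2f50bebb2f50bebb2f50beb79580bebf42a0bebb5d40bebb5d40bebb5b00bebb5dd0bebb5dd0bebbaaa0bebb5b00bebb60b0bebb5b00bebb5f90bebb5b00bebb5b00bebb5b00bebb60b0bebb1a90bebb60f0bebb5b00bebbaa00bebb1a90bebb1a90bebb5b00bebb5b00bebb4070bebb5b00bebb5b00bebb5b00bebb5b00bebb5b00bebb5d40bebb5d40beba6090bebb5d40bebb5d40bebb5d40bebb2eb0bebb2eb0bebb5dd0bebb5dd0beba6950bebb33c0beba6b80bebb5f90bebb2f50bebb4070bebb4070bebb60b0bebb2f50bebb60b0bebb4070bebb6140bebb2f50beb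b2f50bebb2f50bebb2f50bebb2f50bebb2f50bebb2f50bebb2f50bebb2f50bebb2f50bebb2f50bebb2f50beba83c0bebb45e0bebb44d0bebb4620bebb44d0bebb44d0bebb44d0bebb44d0bebb2f50bebb44d0bebb44d0bebb44d0bebb44d0bebb44d0bebb44d0bebb44d0beba95c0bebb45e0bebb45e0bebb45e0beba9a40beba9b60bebb2f50bebbbc00beba9ed0bebbbc00bebaa110bebaa230bebb2f50bebb2f50bebb2f50bebb2f50bebb2f50bebbbe90bebbbe90bebbbe90bebb2f50bebb4620bebbbfe0bebbbfe0bebb2f50bebbc090bebb2f50bebb2f50bebb2f50bebb2f50bebb2f50bebb2f50bebb2f50bebcc5b0bebb2f50bebd7310bebb2f50bebb2f50bebb2f50bebb2f50bebb2f50bebb2f50bebb2f50bebb2f50bebb2f50bebb2f50bebb2f50bebb2f50beb62a50bebb4620bebb5dd0bebeecd0bebb44d0bebb44d0bebb44d0bebb44d0bebb4070bebb44d0bebb44d0bebb44d0bebb44d0bebb44d0bebb44d0bebb44d0bebb4070bebb45e0bebb45e0bebb45e0bebb4070bebb4070bebb4070bebb5b00bebb4070bebb5b00bebb4070bebb4070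bebb4070bebb4070bebb4070bebb4070beba6090bebb5d40bebb5d40bebb5d40bebb4070bebb44d0bebb44d0bebb5d40beba6950bebb45e0beba6b80bebb4070bebb4070bebb4070bebb4070bebb4070bebb4070bebb45e0bebb4070bebb45e0bebb4070bebb4070bebb4070bebb4070bebb4070bebb4070bebb4070bebb4070bebb4070bebb4070bebb4070bebb4070beb62a50bebb45e0bebb44d0bebb45e0bebb44d0bebb44d0bebb44d0bebb44d0beba6950bebb44d0beba6b80bebb44d0bebb44d0bebb44d0bebb44d0bebb44d0beb62a50bebb45e0beba6b80bebb45e0beb62a50beb62a50bebb5200bebb5b00beba9ed0bebb5b00bebaa110bebaa230bebb5200bebb5200bebb5200bebb5200beba4f00bebb5d40bebb5d40bebb5d40bebb5200bebb5d40bebb5d40bebb5d40beba83c0bebb5dd0beba83c0bebb5200bebafd80bebafd80bebb5200bebb5200beba95c0bebb60b0bebb5200bebb60b0beba9a40beba9b60bebb5200bebb5200beba95c0bebb5200beba95c0bebaa230beba9a40beba9b60beba9a40beba9b60beb62a50bebc0190beba9ed0bebaa230bebaa110bebaa230bebb5d40bebb5d40bebb5b00bebb5dd0bebb5b00bebb5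b00bebb5b00bebb5b00bebb5b00bebb5b00beba95c0bebb60b0bebb5b00bebb5d40beba9a40beba9b60bebb5b00bebb5b00beba9ed0bebb5b00bebaa110bebaa230bebb5b00bebb5b00bebb5b00bebb5b00beb62a50bebb5d40bebb5d40bebb5d40beba9a40beba9b60bebb5d40bebb5d40beb62a50beba9b60beb62a50bebaa230beba9ed0beba9ed0bebaa110bebaa110beb62a50bebb60b0bebaa110bebaa230beb62a50beb62a50beb62a50bebb76b0bebafd80bebafd80bebafd80bebafd80bebb76b0bebb76b0bebb76b0bebb76b0beb6d3c0bebbb810bebbb6d0bebbb870bebbb6d0bebbb6d0bebbb6d0bebbb6d0beb76c90bebbb6d0bebaf350bebbb6d0bebbb6d0bebbb6d0bebbb6d0bebbb810beb809c0bebbb810bebbb810bebbb870beb85a10beb86e50bebb2fa0bebbba10beb8ab80bebbba60beb8d4b0beb8e960beb8fe20beb91300bebb5bf0bebb76b0beb95200bebbbd50bebbbd50bebbbe90beb9a720bebbbe90bebbbe90bebbbf40beb9fd80bebbbfe0beba2920beba3f20beba5520beba6b40beba8180beba97c0bebaae20bebc1b00bebadb30bebc1bc0bebaf350bebaf350beb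b3630bebb4d30bebaf350bebb76b0bebaf350bebaf350bebb33c0bebb3500bebb33c0bebb3500beb62a50bebf40b0bebbaaa0bec06cd0bebbbd50bebbe310bebef430bebf3f20bebb4300bebef5c0bebb4300bebef620bebb5280bebb53d0bebba780bebbd120bebb1a90bebf4060bebb4d50bebf4060bebb1a90bebb1a90bebb5280bebb53d0bebb1a90bebba780bebb1a90bebb1a90bebb5a50bebb5e30bebb5ce0bebb5e30bebaf350bebb60d0bebbaa00bebbaa00bebb2eb0bebb2eb0bebbaa00bebbaa00bebb2eb0bebb33c0bebb2eb0bebb2eb0bebb33c0bebb3500bebb33c0bebb33c0bebb3500bebbe310bebb5a50bebbba60bebb4300bebb4300bebb5f80bebb60d0bebb4300bebb89d0bebb4300bebb4300bebb4d50bebb4d50bebb4fe0bebb4fe0beb62a50bebb5280bebb4d50bebb4d50bebb4fe0bebb4fe0bebb5280bebb5280bebb53d0bebb5ce0bebb57b0bebb57b0bebb5a50bebb5a50bebb5ce0bebb5ce0beb9dad0bebb5f80bebb60d0bebbb810beb9dad0beb9dad0bebb9d70bebba780bebb6ca0bebba780bebb6ca0bebb6ca0bebb9d70bebb9d70bebb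9d70bebb9d70bebb1a90bebbaa00bebbaa00bebbaa00bebb81f0bebb81f0bebbaa00bebbaa00bebb4d50bebbaaa0bebb4fe0bebb81f0bebb5280bebb53d0bebb9d70bebb9d70bebb2eb0bebbed20bebb5a50bebbedd0bebb33c0bebb3500bebb5f80bebb60d0bebb9780bebb9d70bebb9780bebb9780bebb9d70bebb9d70bebb9d70bebb9d70beb62a50bebba7f0bebba270bebba270bebba530bebba530bebba7f0bebba7f0bebb4d50bebbaaa0bebb4fe0bebba780bebb5280bebb53d0bebba780bebba780bebb2eb0bebbb5c0bebb5a50bebbaa00bebb33c0bebb3500bebb5f80bebb60d0bebba780bebba780bebba780bebba780bebba780bebba780bebba780bebba780beb62a50bebbaa00bebbaa00bebbaa00bebb33c0bebb3500bebbaa00bebbaa00beb62a50bebb3500beb62a50bebbb1a0bebb5280bebb53d0bebbb1a0bebbb1a0beb87e00bebbb810bebb5a50bebbb810bebb4300bebb4300bebb5f80bebb60d0bebb4d50bebbb1a0bebb4fe0bebbb1a0bebb4d50bebb4d50bebb4fe0bebb4fe0beb62a50bebb5280bebb53d0bebbb810bebb57b0bebb57b0bebb5a50bebb5a50bebb4d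50bebb5ce0bebb4fe0bebb5f80bebb5280bebb53d0bebbb6d0bebbb6d0beb62a50bebbb810bebb4fe0bebbb810beb62a50beb62a50bebb5280bebb53d0beb62a50bebb53d0beb62a50beb62a50bebaf6c0bebb57b0bebb5a50bebb5a50beb62a50bebb5ce0bebb5a50bebb5f80beb62a50bebb5e30bebb5ce0bebb5e30beb62a50bebb5e30beb62a50bebb5f80beb62a50beb62a50beb62a50bebbc670beb683f0bebbed20beb72e20bebbedd0beb7dae0beb83230beb88a30beb8e2e0beb93c30beb99640beb9f0f0beba4c50bebaa870bebb0540bebb62c0bebba530beb62a50bebba7f0bebb81f0bec06e10bebb81f0bebb81f0bebb81f0bebb81f0bebb9780bebbb2f0bebb9780bebbb5c0bebb9780bebb9780bebbb9f0bebbbb50bebb81f0bebbbe10bebb9780bebbe2c0bebb9780bebb9780bebb9780bebb9780bebba270bebba7f0bebba270bebbbcb0bebba270bebba270bebba270bebba270beb62a50bebba530bebba7f0bebba7f0bebbad70bebbad70bebbad70bebbad70bebba270bebbb2f0bebba530bebbb2f0bebba7f0bebbb5c0bebbb880bebbb880bebb9780bebbbb50bebbbcb0bebbbe10bebbb2f0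bebbb460bebbb5c0bebbc3b0bebba270bebbb9f0bebba530bebbbcb0bebba7f0bebbbf80bebbcef0bebbcef0beb62a50bebbe000bebbda40bebbe2c0bebbb2f0bebbb460bebbb5c0bebbda40bebba270bebbb9f0bebba530bebbbcb0bebba7f0bebbbf80bebbe160bebbe160beb62a50bebbe2c0bebba530bebbe2c0beb62a50beb62a50bebba7f0bebbe420beb62a50bebbb9f0bebbad70bebbbcb0bebbad70bebbb460bebbb2f0bebbb460beb62a50bebbb460bebbb5c0bebbb9f0bebbb2f0bebbb460bebbb5c0bebbbcb0beb62a50bebbb460beb62a50bebbb5c0beb62a50beb62a50beb9cd80bebbb9f0beb62a50bebbb9f0beb62a50bebbbb50beb62a50beb62a50beb62a50beb62a50beb62a50beb62a50beb62a50beb62a50beb65860beb7c1d0beb930d0bebaa580beb62a50bebbcef0bebbcef0bebbcef0bebbcef0bebbcef0bebbda40bebbea00bebbcef0bebbda40bebbda40bebbda40bebbda40bebbda40bebbe000bebbe000beb62a50bebbe000bebbe170bebbe2d0bebbe000bebbe170bebbe2d0bebbe890bebbda40bebbeb70bebbe890bebbea00bebbe000bebbe170bebbe2d0bebbefc0beb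62a50bebbf700bebbe890bebbea00bebbe000bebbe170bebbe2d0bebbefc0beb62a50bebbe170beb62a50bebbe2d0beb62a50bebbe5b0bebbe5b0bebbe890beb62a50bebbea00bebbe890bebbea00beb62a50beb62a50beb62a50beb77b00beb62a50beb62a50beb62a50beb62a50beb62a50beb62a50beb62a50beb641a0beb62a50bebbf700bebbf700bebbf700bebbf700bebbfcd0bebbfcd0bebbfcd0beb62a50bebbffc0bebbffc0bebc0130bebbfcd0bebc0420bebbffc0bebc0130beb62a50bebc0420bebbffc0bebc0130beb62a50beb62a50beb62a50bebc02a0beb62a50bebc0420beb62a50beb62a50beb62a50beb62a50beb62a50beb62a50beb62a50bebc0b70bebc0b70bebc0e60beb62a50bebc0fe0bebc0e60bebc0fe0beb62a50bebc0fe0beb62a50beb62a50beb62a50beb62a50beb62a50beb62a50beb62a50bebc15c0beb62a50bebc1740beb62a50beb62a50beb62a50beb62a50beb62a50beb62a50beb62a50beb62a50beb62a50beb62a50beb62a50beb62a50beb03460bebef620bebf4100bebf4300bebea700bebea770bebef430bebef430bebd4700bebef430bebd4ec0bebef430bebe6910bebe6910bebef430bebef430bebb3780bebef5c0bebe6910b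ebef5c0bebb3780bebb3780bebe91b0bebe91b0bebd3fd0bebf01d0bebd3fd0bebd3fd0bebe91b0bebeee00bebeee00bebeee00bebaf350bebf28f0bebf28f0bebf28f0bebd3fd0bebe3010bebef430bebf28f0bebbabd0bebe6dc0bebbabd0bebe3010bebe4e10bebe7d40bebe6dc0bebe6dc0bebcb000bebea770bebe9e30bebef5c0bebcb000bebcb000bebcb000bebe4e10bebcb000bebdea80bebdea80bebdea80bebdea80bebe4e10bebe4e10bebe4e10beb8dfe0bebea700bebea530bebea700bebea530bebea530bebea530bebea530bebcb000bebea530bebd2820bebea530bebea530bebea530bebea530bebea530beb8dfe0bebea700bebd4700bebea700beb8dfe0beb8dfe0bebd2820bebf01d0bebcb000bebe6910bebcb000bebcb000bebcb000bebcb000bebcb000bebd4ec0beb8e750bebe8990bebd4ec0bebe8990bebcb000bebe91b0bebe91b0bebf28f0beb90b40bebf32b0beb91440bebcb000beb91d60beb921f0bebcb000bebcb000bebb57b0bebf42a0bebb5a50bebf42a0bebb5ce0bebb5e30bebb5f80bebb60d0bebc1590bebcb000bebcb000bebcb000bebcb000bebcb000bebcb000bebcb000beb826f0bebf42a0bebd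4700bebd4700bebd2820bebd4700bebd4700bebd4ec0bebd2820bebe91b0bebd2820bebd2820bebd2820bebd2820bebd2820bebd2820beb91380bebed310bebd2820bebd4700beb91380beb91380bebd2820bebd2820bebd2820bebd2820bebd2820bebd2820bebd2820bebd2820bebd2820bebd2820beb91380bebd4700bebd4700bebd4700beb920c0beb920c0bebd4700bebd4700beb91380beb92420beb91440bebed0c0beb91d60beb921f0bebe9e30bebed0c0beb920c0bebed2a0bebd3fd0bebed2a0beb92420beb924f0beba84c0bebd3fd0beb920c0beba9460beb920c0beba9ed0beb920c0beb921f0beb92420beb924f0beb92420beb92420beb924f0bebea770bebbd5c0bebbd5c0bebe3010bebe3010bebae3a0bebe3010bebe6dc0bebe6dc0bebe6dc0bebe6dc0bebe7d40bebea530beb979f0bebea700bebea700bebea700beb979f0beb979f0bebb2fa0bebf66b0beba9ed0bebecbc0bebaa110bebaa230bebafd80bebb5660bebb5bf0bebbefc0beb9c660bebeecd0bebeecd0bebeecd0beb9c660beb9c660bebef520bebf6f80beba3d20bebf70a0beba4740bebba570bebafd80bebafd80bebafd80bebbbc70beba14f0bebf7520bebafd80bebf7640beba14f0beba14f0beba8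4c0bebafd80beba3d20beba9460beba4740beba9ed0beba3d20beba3d20beba4740beba4740beb826f0bebe7d40bebecdf0bebeecd0beba65d0beba65d0beba84c0bebea530beba7a70beba7a70beba7f90beba84c0beba8f20beba8f20beba9460beba9990beba9ed0bebc0b10bebe4240bebe7d40bebab910bebab910bebb2fa0bebe7ea0bebae3a0bebec950bebb45b0bebb4b40bebae3a0bebae3a0bebb5bf0bebc1a80beba3e50bebecd10bebecd10bebecd10bebb0ed0bebb0ed0bebb2fa0bebecd10beba3e50bebb24a0beba3e50bebb2fa0bebb3aa0bebb3aa0bebb45b0bebb45b0bebb4b40bebb50d0bebb5660bebb5bf0bebb6720bebb6720bebbabd0bebbeaf0bebb7db0bebb7db0bebb9fc0bebba570bebb9450bebb9450bebb9fc0bebb9fc0beb826f0bebbab30bebbb0f0bebbb6b0bebbbc70bebbc230bebbcdd0bebbcdd0beba6090bebbd970beba6090bebbe510bebbeaf0bebbf0d0bebbf6b0bebbfc90beb826f0bebc0860beba6950bebc1430beb826f0beb826f0bebbabd0bebec950beba9ed0bebdc9d0bebaa110bebaa230bebbabd0bebbabd0bebbabd0bebc1a80beb9bdd0bebe5a00b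ebe5a00bebe5a00bebbabd0bebe7ea0bebe7ea0bebecd10beb9bdd0bebecdf0beb9bdd0bebbabd0beb9bdd0beb9bdd0bebafd80bebbbc70beba95c0bebed2a0bebafd80bebed2a0beba9a40beba9b60bebafd80bebafd80beba95c0bebafd80beba95c0bebaa230beba9a40beba9b60beba9a40beba9b60beb826f0bebedc00beba9ed0bebaa230bebaa110bebaa230bebd4ec0bebe5a00bebbfaf0bebe7ea0bebbfaf0bebdc9d0bebd2820bebd2820bebd2820bebd2820beb9c660bebed2a0bebd2820bebe5a00bebb3780bebb3780bebd2820bebd2820bebb3780bebd2820bebb3780bebb3780bebd2820bebd2820bebd2820bebd2820beb826f0bebd4700bebd4700bebd4700bebd3120bebd4700bebd4700bebd4700beb826f0bebd4ec0beb826f0bebed0c0bebafd80bebcd300bebed0c0bebed0c0beb826f0bebed2a0bebe4240bebed2a0beb826f0beb826f0beb826f0bebafd80beba8f20beba9460beba9990beba9ed0bebafd80bebafd80bebafd80bebafd80beb826f0bebedc00bebedc00bebedc00bebedc00bebedc00bebedc00bebedc00beb826f0bebedfd0bebaf350bebedfd0bebedfd0bebedfd0bebedfd0bebedfd0beb826f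0bebf14d0bebf14d0bebf14d0beb85a10beb86e50bebafd80bebf66b0beb8ab80bebf67c0beb8d4b0beb8e960beb8fe20beb91300bebafd80bebafd80beb95200bebf6d50bebf6d50bebf6d50beb9a720bebf6f80bebf6f80bebf6f80beb9fd80bebf70a0beba2920beba3f20beba3e50beba3e50beba8180beba97c0beba6090bebf7520bebadb30bebf7640beba6090beba6090bebafd80bebafd80beba6950bebafd80beba6b80bebafd80beba6950beba6950beba6b80beba6b80beb42da0bebfda20bebd4ec0bec02f10bebd85d0bebfa7f0bebfd790bebfd790beba6090bebfd790beba6090bebfd790beba6090beba6090bebd2820bebf8f30beba3e50bebfd9a0beba6950bebfd9a0beba6950beba6950beba6b80beba6b80beba9ed0bebd2820bebaa110bebaa230bebb5a50bebb5e30bebb5ce0bebb5e30beba3e50bebb60d0bebc1590bebd4700beba95c0beba95c0bebd4700bebd4700beba3e50beba9a40beba4740bebaa230beba83c0beba83c0bebaa110bebaa110beba6090bebfae30bebb5a50bebf6850beba7a70beba7f90beba84c0bebb60d0beba6950beba9460beba6b80beba9ed0beba95c0beba95c0beba9a40beba9b60beb826f0beba9a40beba9b60bebaa230beba9ed0beb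a9ed0bebaa110bebaa110beba6090bebf6240beba6090bebbd5c0bebba7f0bebbfaf0bebd3120bebf6240beb8dfe0bebd3120beba6950bebf6470beb8dfe0beb8dfe0beba84c0bebd2820beba6950beba9460beba6b80beba9ed0beba7a70beba7f90beba7a70beba7f90beba4f00beba9460beba8f20beba9460beba9990beba9b60bebbbe10bebbbf80beba83c0bebd4ec0beba83c0bebaa230bebacd10bebacd10bebbb6b0bebbbc70beba83c0bebf7520bebae3a0bebf7640beba83c0beba83c0beba84c0bebb60d0beba8f20beba9460beba95c0beba9ed0beba9a40beba9b60beba9a40beba9b60beb59f80bebf6500beba9ed0bebaa230beba95c0beba95c0beba95c0bebb5660beba95c0beba95c0beba9990beba9b60beba9a40beba9a40beba9a40beba9b60beb91380beba9ed0beba9ed0beba9ed0beb91380beb91380bebaa230bebbb0f0bebab910bebbbc70bebab910bebab910bebae3a0bebae3a0bebb5bf0bebbdf40beb606c0bebbeaf0bebae3a0bebae3a0beb920c0beb920c0bebb2fa0bebc0e40beb62150beb92420beb62800bebb0ed0bebb1a90bebb1a90bebb24a0bebb24a0beb87e00bebb2fa0bebb3aa0bebb3aa0beb8dfe0beb8d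fe0beb8dfe0bebb50d0bebacd10bebacd10bebacd10bebacd10bebb2eb0bebb2eb0bebb33c0bebb3500beb826f0bebb33c0bebb3500bebb9450bebb57b0bebb57b0bebb5a50bebb5a50beb8dfe0bebb5ce0bebaf350bebb5f80bebb4300bebb4300bebbd970bebbd970beb826f0bebbe510bebb4d50bebbf0d0beb826f0beb826f0bebaf350bebb4fe0beb826f0bebaf350beb826f0beb826f0beb8fe20beb91300bebb5a50bebb5a50beb826f0bebb5ce0bebb5e30bebb5f80beb826f0bebb3500bebbd5c0bebbd5c0beb826f0bebd6b40beb826f0beba3f20beb826f0beb826f0beb826f0beba97c0beb826f0bebf7520beb826f0bebf7640beb826f0beb83230beb88a30beb8e2e0beb920c0beb99640beb920c0beba4c50beb92420beb924f0beb92420beb924f0beb75b60bebba7f0bebb5a50bebeecd0beb920c0beb920c0beb920c0bebb60d0beb91380beb92420beb92420beb924f0bebb33c0bebb33c0bebb33c0bebb33c0beb91380bebbbe10bebb4d50bebc1d40beb91380beb91380bebb2fa0bebb53d0beb91380bebb4300beb91380beb91380beb91380beb91380bebb4d50bebb4fe0beb826f0bebb4d50bebb4d50bebb4d50beb920c0b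eb920c0bebb2fa0bebb5280beb920c0beb92420beb920c0beb920c0beb920c0beb920c0beb92420beb92420beb92420beb92420beb924f0bebb5bf0beb95200beb95200bebb3630bebb4d30beb9a720beb9a720beba2920beba3f20beb9fd80beb9fd80beba2920beba2920beb826f0beba5520beba6b40beba8180beba97c0bebaae20bebadb30bebadb30bebb0880bebb0880bebb1f50bebb3630bebb4d30bebb57b0bebb5a50bebb5a50beb826f0bebb5ce0bebb5ce0bebb5e30beb826f0beb826f0bebb6720bebb6720beb826f0bebb7db0bebaa110bebaa230bebb6ca0bebb6ca0bebb6ca0bebb9450beb826f0bebb9fc0bebba270bebba270bebb7db0bebb81f0bebb81f0bebba7f0beb826f0bebbad70beb826f0bebb81f0beb826f0beb826f0beb9cd80bebbabd0beb826f0bebbb5c0beb826f0bebbb880beb826f0beb826f0beb826f0beb826f0beb826f0beb826f0beb826f0beb826f0beb826f0beb826f0beb930d0bebaa580beb826f0bebba7f0bebba270bebba270bebb9780bebba270bebba270bebba530bebb9780bebba7f0bebb9fc0bebba570bebba270bebbad70bebba530bebbb2f0beb826f0bebbb2f0bebba270bebba570beb92420beb924f0bebba7f0bebba7f0bebbab3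0bebbb0f0bebbad70bebbad70bebbad70bebbb0f0bebbb2f0bebbb2f0beb826f0bebbb2f0bebbb460bebbb5c0bebbb6b0bebbb880bebbb880bebbb9f0beb826f0bebbbc70beb826f0bebbbe10beb826f0bebbc230bebbc3b0bebbc3b0beb826f0bebbd970bebbcdd0bebbcef0beb826f0beb826f0beb826f0beb826f0beb826f0beb826f0beb826f0beb826f0beb826f0beb826f0beb826f0beb826f0beb826f0bebbe000bebbda40bebbe000bebbda40bebbdf40bebbe000bebbe170beb826f0bebbe000bebbe170bebbe2d0bebbe510bebbe5b0bebbe5b0bebbe890beb826f0bebbea00bebbeaf0bebbeb70beb826f0beb826f0beb826f0bebbf0d0beb826f0bebbf6b0beb826f0beb826f0beb826f0beb826f0beb826f0beb826f0beb826f0bebbfcd0bebbfcd0bebbffc0beb826f0bebc0130bebc0270bebc02a0beb826f0bebc0590beb826f0beb826f0beb826f0beb826f0beb826f0beb826f0beb826f0bebc0e60beb826f0bebc1150beb826f0beb826f0beb826f0beb826f0beb826f0beb826f0beb826f0beb826f0beb826f0beb826f0beb826f0beb826f0beb03460bec10c50bebe91b0bebeecd0beb92420beb924f0bebef520bec108d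0beba6950bec108d0beba6b80bec0e7d0bebe5f70bebe5f70bebe6910bebecbc0beb91380bec10ba0bebe5f70bec10ba0beb91380beb91380bebe5f70bebe5f70beb91380bebe5f70beb91380beb91380bebaf6c0bebcd300bebcd300bebe6910beb8dfe0bebe8990bebe8990bebe8990beb91380beb920c0bebe8990bebe8990beb91380beb92420beb91380beb920c0beb91380beb91380beb91380beb92420beb91380bebaf6c0beb91380bec10ba0beb91380beb91380beb91380beb91380beb920c0beb924f0beb920c0beba4c50beb920c0beb920c0beb920c0beb924f0beb8dfe0beb92420beb920c0beb924f0beb920c0beb920c0beb920c0beb920c0beb92420beb92420beb92420beb92420beb924f0beb93c30beb99640beb9f0f0beb8dfe0bebaa870beba6950bebb62c0beb8dfe0beb8dfe0beba6090bebe6910beb8dfe0bebe5f70beba3e50beba3e50beba3e50beba3e50beba6950beba6b80beb8dfe0bebe8990bebb8b60bebe8990beba3e50bebe8990bebe8990bebe8990beb8dfe0bebe91b0beb8dfe0beba3f20beb8dfe0beb8dfe0beb9cd80beba97c0beb8dfe0bec120d0beb8dfe0bec12240beb8dfe0beb8dfe0beb8dfe0beb8dfe0beb8dfe0beb8dfe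0beb8dfe0beb8dfe0beb8dfe0beb8dfe0beb930d0beba6b80beb59f80bec14b10beba6950beba6950beba6090beba6950beba6b80beba6b80beba6090beba9a40beba6090beba6090beba6090beba6b40beba6b80beba97c0beb8dfe0bebaa230beba6950beba6950beb91380beb91380beba6b80beba6b80beb91380beba97c0beba83c0beba83c0beba83c0beba83c0bebb0880bebb1f50beb606c0bebb4d30bebaa110bebaa230beb920c0beb920c0bebbc170bebbd8f0beb62150beb92420beb62800beba83c0beb8dfe0beb91380beb9cd80beba97c0beb8dfe0beba9a40beb91380beba9ed0beb8dfe0beb8dfe0beb8dfe0beb8dfe0beb8dfe0beb8dfe0beb8dfe0beb8dfe0beb8dfe0beb8dfe0beb8dfe0beb8dfe0beb8dfe0beb92420beb920c0beb9cd80beb920c0beb920c0beb920c0beb920c0beb8dfe0beb920c0beb920c0beb920c0beb920c0beb920c0beb92420beb92420beb8dfe0beb92420beb924f0beb930d0beb8dfe0beb8dfe0beb8dfe0bebb60d0beb8dfe0bebbf090beb8dfe0beb8dfe0beb8dfe0beb8dfe0beb8dfe0beb8dfe0beb8dfe0bebd3120bebd3120bebd3120beb8dfe0beb924f0bebe7020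bebe7020beb8dfe0bebef520beb8dfe0beb8dfe0beb8dfe0beb8dfe0beb8dfe0beb8dfe0beb8dfe0bec18060beb8dfe0bec181f0beb8dfe0beb8dfe0beb8dfe0beb8dfe0beb8dfe0beb8dfe0beb8dfe0beb8dfe0beb8dfe0beb8dfe0beb8dfe0beb8dfe0beb03460beb924f0bebe7ea0bebeecd0beb920c0beb920c0beb920c0beb920c0beb91380beb920c0beb920c0beb920c0beb920c0beb920c0beb920c0beb920c0beb91380beb92420beb92420beb92420beb91380beb91380beb91380bebb4d30beb91380bebb7b70beb91380beb91380beb91380beb91380beb91380beb91380beb606c0bebb5280bebb5280bebb53d0beb91380beb920c0beb920c0bebb5a50beb62150beb92420beb62800beb91380beb91380beb91380beb91380beb91380beb91380beb92420beb91380beb92420beb91380beb91380beb91380beb91380beb91380beb91380beb91380beb91380beb91380beb91380beb91380beb91380beb03460beb92420beb920c0beb92420beb920c0beb920c0beb920c0beb920c0beb62150beb920c0beb62800beb920c0beb920c0beb920c0beb920c0beb920c0beb03460beb92420beb62800beb92420beb03460beb03460bebb4300bebb4d30beb9bdd0bebb4fe0beba3e50beba3e50bebaf6c0bebb4d50beb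b4d50bebb4d50beb8e750bebb4fe0bebb5280bebb5280beba3e50bebb57b0bebb57b0bebb57b0beb90b40bebb5a50beb91440bebb5ce0beb91d60beb921f0beb9cd80bebb6440beb9bdd0bebb92b0beb9bdd0bebbbcb0beb9bdd0beb9bdd0beb9bdd0beb9bdd0beb9bdd0beb9bdd0beb9bdd0beb9bdd0beb9bdd0beb9bdd0beb9bdd0beba6b80beb296a0bebba7f0beba6950beba6950beba6090beba6b80bebaf6c0bebb81f0beba6090bebb81f0beba6090bebaa230beba6090beba6090beba6090bebb9780beb9bdd0bebbb2f0beba6090bebba270beba6090beba6090beba6090beba6090beba6090beba6090beba6090beba6090beba6950beba6950beba6950beba6950beb498a0beba6950beba6950beba6950beba6b80beba6b80bebaa870bebb0540beb521b0beba9a40beb54490beba95c0beb9bdd0beba83c0beba83c0beba9a40beb5ae70bebaf6c0beba83c0beba9ed0beb5f650beb60860beb61a90beb9bdd0beb9bdd0beb9bdd0beb9bdd0beb9bdd0beb9bdd0beb9bdd0beb9bdd0beb9bdd0beb6d3c0beba9a40beba95c0beba9b60beba95c0beba95c0beba95c0beba95c0beb76c90beba95c0beba6b80beba95c0beba9a4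0beba9a40beba9a40beba9a40beb809c0beba9ed0beba9ed0beba9ed0beb85a10beb86e50beb9bdd0bebaa870beb8ab80bebb62c0beb8d4b0beb8e960beb8fe20beb91300beb9bdd0beb9bdd0beb85c60bebbf700bebbf700bebbfcd0beb9a720bebbfcd0bebbfcd0bebbffc0beb85c60bebc0130beb85c60beb9bdd0beb91d60beb921f0beb9bdd0beb9bdd0beb8a0f0bebc0b70beb9bdd0bebc0e60beb8b260beb8b6c0beb9bdd0beb9bdd0beb8a0f0beb9bdd0beb8a0f0beb9bdd0beb8b260beb8b6c0beb8b260beb8b6c0beb03460bec1b960beba6b80bec1c810bebaf350bebb3500bec09ee0bec1ca00beb8e750bec09ee0beb8e750bec09ee0beb91d60beb921f0beba6090bebbcbe0beb90b40bec10330beb90b40bec1c810beb91440beb921f0beb91d60beb921f0beba6090beba6090beba6090beba6090beba6090beba6090beba6090beba6950beb979f0beba6950beba6950beba6950beba6950beba6950beba6950beba6b80beb979f0beba9a40beb979f0bebaa230beba3e50beba83c0beba83c0bebaa110beb9c660bebb3500beba83c0bebaa230beba3e50beba3e50beba3e50beba3e50beb9c660beba3e50beb9c660beba3e50beba3e50b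eba3e50beba3e50beba3e50beb30af0beba9a40beba95c0beba9b60beba95c0beba95c0beba95c0beba95c0beba14f0beba95c0beba14f0beba95c0beba6090beba95c0beba95c0beba9a40beb8a0f0beba9a40beba3d20beba9b60beb8b260beb8b6c0beba3e50beba6090beba3e50beba6090beba3e50beba3e50beba3e50beba3e50beba3e50beba3e50beb8e750beba6950beba6950beba6950beba3e50beba6950beba6950beba6950beb90b40beba6b80beb91440beba3e50beb91d60beb921f0beba3e50beba3e50beba3e50bebb5ce0beba3e50bebb5f80beba3e50beba3e50beba3e50beba3e50beba3e50beba3e50beba3e50beba3e50beba3e50beba3e50beba3e50beba3e50beb03460beba9b60beba6950beba6950beba6090beba6950beba6950beba6950beba6090beba6b80beba6090beba6090beba6090beba6090beba6090beba6090beb8a0f0beba9a40beba6090beba6950beb8b260beb8b6c0beba6090beba6090beba6090beba6090beba6090beba6090beba6090beba6090beba6090beba6090beb03460beba6950beba6950beba6950beb8b260beb8b6c0beba6950beba6950beb03460beb8b6c0beb03460beba83c0beb91d60beb921f0beba83c0beba83c0beb87e00beba9a40beba83c0beba9a40beb8e750beb8e750beb9dad0beba83c0beb90b40beba83c0beb9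1440beba83c0beb90b40beb90b40beb91440beb91440beb03460beb91d60beb921f0beba9a40beba95c0beba95c0beba95c0beba95c0beb90b40beba95c0beb91440beba95c0beb91d60beb921f0beba95c0beba95c0beb03460beba9a40beb91440beba9a40beb03460beb03460beb91d60beb921f0beb03460beb921f0beb03460beb03460beb9dad0beb9dad0bebacd10bebacd10beb18760bebb4d50bebb4d50bebb4d50beb2b900beb9c660bebb4d50bebb4d50beb3f360bebb4fe0beb49400beba3f20beb536e0beb58940beb5dc30beba97c0beb683f0bebb5a50beb72e20bebb5ce0beb7dae0beb83230beb88a30beb8e2e0beb93c30beb99640beb9c660beba4c50beb9c660beb9c660beba4740beba4740beb03460bebb3500bebb5a50bec1c810beba65d0beba65d0beba84c0bebb2eb0beba14f0beba7a70beba14f0beba84c0beba14f0beba14f0beba9460beba9990beb9c660bebb33c0beba3d20bebb33c0beba3d20beba3d20beba4740beba4740beba65d0beba9460beba65d0beba9ed0beba65d0beba65d0beba7a70beba7f90beb03460beba7a70beba7f90beba84c0beba8f20beba8f20beba9460beba9990beb79580bebb24a0beb79580bebb1a90bebab910bebab910bebb1a90bebb1a90beba14f0bebb33c0bebae3a0b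ebb33c0beba7a70beba7f90beba84c0bebb1a90beba3d20beba9460beba4740beba9ed0bebb0ed0bebb0ed0bebb1a90bebb1a90beb03460bebb24a0bebb2a20bebb2fa0beba7a70beba7f90beba84c0bebb2eb0beba3d20beba9460beba4740beba9ed0bebb2eb0bebb2eb0bebb2eb0bebb2eb0beb03460bebb33c0beba4740bebb33c0beb03460beb03460beba84c0bebb4300beb4dbf0beba9460beba65d0beba9ed0beba7a70beba7f90beba7a70beba7f90beb03460beba9460beba8f20beba9460beba7a70beba7f90beba84c0bebb4d50beb03460beba7f90beb03460beba84c0beb03460beb03460beb9cd80beba9460beb03460beba9460beb03460beba9990beb03460beb03460beb03460beb03460beb0e7d0beb23c30beb395b0beb4f460beb65860beb7c1d0beb930d0bebaa580beb03460bebae3a0bebae3a0bebae3a0bebb0ed0bebb0ed0bebb0ed0bebb5660bebae3a0bebb0ed0bebb0ed0bebb0ed0bebb24a0bebb24a0bebb24a0bebb24a0beb03460bebb2fa0bebb3aa0bebb3aa0bebb24a0bebb2a20bebb2fa0bebb50d0bebb0ed0bebb5bf0bebb45b0bebb4b40bebb24a0bebb2a20bebb2fa0bebb7db0beb03460bebb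9450bebb45b0bebb4b40bebb24a0bebb2a20bebb2fa0bebba270beb03460bebb2a20beb03460bebb2fa0beb03460bebb3aa0bebb3aa0bebb45b0beb03460bebb4b40bebb45b0bebb4b40beb03460beb03460beb03460beb77b00beb03460beb03460beb03460beb03460beb03460beb03460beb090c0beb641a0beb03460bebb7db0bebb7db0bebb9450bebb7db0bebb9450bebb9450bebb9fc0beb03460bebba570bebb9fc0bebba570bebb9450bebbb0f0bebb9fc0bebba570beb03460bebbb0f0bebb9fc0bebba570beb03460beb03460beb03460bebbab30beb03460bebbb0f0beb03460beb03460beb03460beb03460beb03460beb03460beb03460bebbcdd0bebbcdd0bebbd970beb03460bebbdf40bebbd970bebbdf40beb03460bebbdf40beb03460beb03460beb03460beb03460beb03460beb03460beb03460bebbf6b0beb03460bebbfc90beb03460beb03460beb03460beb03460beb03460beb03460beb03460beb03460beb03460beb03460beb03460beb03460bea44890bec261c0bec12db0bec1c810bebe6dc0bebe7d40bec0b1f0bec1c810beba4f00bec0b1f0beba4f00bec10330bebe5f70bebe5f70bec10330bec1bbc0beb9c660bec231a0bebe5f70bec1c810bebb3780bebb3780bec07be0bec0bb60bebd3fd0b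ec11c10bebd3fd0bebd3fd0bebd3fd0bebfb4d0bebfb4d0bec07be0beb59f80bec12a20bec12a20bec12a20bebd3fd0bebe3010bec12a20bec12a20beb59f80bebe6dc0beb59f80bebe3010bebd3fd0bebd3fd0bebd3fd0bebd3fd0beb5ae70bebe7d40bebd3fd0bec10330beb5f650beb60860beb61a90bebd3fd0beba8f20beba9460beba9990beba9ed0bebc0b10bebd3fd0bebd3fd0bebd3fd0beb42da0bebe6dc0bebe3010bebe6dc0bebe3010bebe3010bebe3010bebe3010beb606c0bebe3010beb606c0bebe3010bebe3010bebe3010bebe3010bebe3010beb606c0bebe6dc0beb62150bebe6dc0beb606c0beb60860beb61a90bec11c10beb62150bebe5f70beb62800beb8e960beb62150beb62150beb62150beb62800beb62800bec04000bebb8b60bec04000beb9a720bec0bb60bec0bb60bec12a20beb6d3c0bec12db0beb6d3c0beba3f20beb91d60beb921f0beb9dad0beba97c0beb76c90bec1b960beb76c90bec1ca00beb85a10beb86e50beb9dad0beb9dad0beb809c0beb9dad0beb809c0beb8e960beb85a10beb86e50beb85a10beb86e50beb42da0bec17ba0beb8ab80beb8e960beb8d4b0beb8e960beb8fe20beb9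1300beb95200bec06460beb95200beba3f20beb9a720beba6b40beb9a720beba97c0beb85c60bec179d0beb9fd80beba3f20beb85c60beb85c60beba5520beba6b40beba8180beba97c0bebaae20bebb3780bebadb30bebb1f50bebb0880bebb1f50beb42da0bebb4d30bebb6440bebb7b70beb8a0f0beb8a0f0bebbc170bebbd8f0beb42da0beb8b260beb42da0bebb3780beb91d60beb921f0bebb3780bebb3780beb75b60bec093e0bebb3780bec0dd20beb75b60beb75b60beb75b60beb9dad0beb90b40beb9dad0beb91440beb9dad0beb90b40beb90b40beb91440beb91440beb42da0beb91d60beb921f0bebe7d40bebbd5c0bebbd5c0bebe3010bebe3010beb76c90bebe3010beba4f00bebe3010beba4f00beba4f00bebe3010bebe3010beb42da0bebe6dc0bebe4240bebe6dc0beb42da0beb42da0beb9dad0bec18140beb42da0bec06460beb42da0beb42da0beb8fe20beb91300beb9dad0beb9dad0beb42da0bec197c0bec197c0bec197c0beb42da0beb9c660bec19f50bec19f50beb42da0bec20970beb49400beb9dad0beb536e0beb58940beb5dc30beb9dad0beb683f0bec2ba50beb72e20bec2bec0beb7dae0beb83230beb85c60beb8e2e0beb8a0f0beb99640beb8a0f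0beb9dad0beb8b260beb8b6c0beb8b260beb8b6c0beac3b10bebe7d40bebeeb90bec38ee0beb8a0f0beb8a0f0beb8a0f0bebe3010beb85c60beb8b260beb8b260beb8b6c0beb91d60beb921f0beba9460beba9990beb85c60bebc0b10beb90b40bebe6dc0beb85c60beb86e50beb8e750beb921f0beb8a0f0beba9460beb8d4b0beb8e960beb8b260beb8b6c0beb90b40beb91440beb42da0beb91d60beb91d60beb921f0beb8a0f0beb8a0f0bebb2fa0bebe4240beb59f80beb8b260beb59f80beb8e960beb8b260beb8b6c0beb8d4b0beb8d4b0beb87e00beb8fe20beb91300bebb5bf0beb8e750beb8e750beb979f0bebb4d30beb8e750beb9a720beb8e750beb8e960beb8fe20beb90b40beb91440beb91440beaf1ee0beb91d60beb90b40beb90b40beb90b40beb91300beb91440beb91440beb606c0beb91d60beb606c0beba3f20beb95200beb95200beb9a720beba97c0beafed50beb9a720beb62150beba3f20beb02270beb02fd0beba14f0beba2920beb4dbf0beba5520beb59f80beb59f80beb979f0beb979f0beba3d20beba4740beb42da0beba9460beba8f20beba9460beb59f80beb9c660beba65d0bebb92b0beb42da0beba7a70beb42da0beb9c660beb42da0b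eb42da0beb5dc30beba9460beb42da0beba9ed0beb42da0bebb8b60beb42da0beb42da0beb42da0beb42da0beb42da0beb42da0beb42da0beb4f460beb62150beb62150beb62800beb62800beb296a0beba9460beb62150beb62150beb606c0beb62800beba4740beba4740beb606c0beba7a70beb606c0beba3f20beb606c0beb606c0beb606c0beba7a70beb42da0beba7a70beb62150beba3f20beb62150beb62150beb62150beb62800beb62800beb99640beb683f0beba4c50beb72e20beb83230beb7dae0beb83230beb42da0beb8e2e0beb93c30beb99640beb9f0f0beba4c50beba8f20beba9460beb42da0beba9990beb42da0bebaae20beb42da0beb921f0bebab910bebab910beb42da0bebb24a0bebadb30bebae3a0beb42da0beb42da0beb42da0beb77b00beb42da0beb42da0beb42da0beb42da0beb42da0beb42da0beb42da0beb641a0beb42da0bebb24a0bebb0ed0bebb24a0bebb0ed0bebb1f50bebb24a0bebb2a20beb42da0bebb24a0beb62800bebb2fa0bebb3630bebb3aa0bebb3aa0bebb45b0beb42da0bebb4b40bebb4d30bebb50d0beb42da0beb42da0beb42da0bebb6720beb42da0bebb7b70beb42da0beb42da0beb42da0beb42da0beb42da0beb42da0beb42da0bebb9450bebb9450bebb9f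c0beb42da0bebba570bebbaa00bebbab30beb42da0bebbb6b0beb42da0beb42da0beb42da0beb42da0beb42da0beb42da0beb42da0bebbd970beb42da0bebbe510beb42da0beb42da0beb42da0beb42da0beb42da0beb42da0beb42da0beb42da0beb42da0beb42da0beb42da0beb42da0bea44890bec10330beb62800bec1ca00beb8b260beb8b6c0bec09ee0bec0b1f0beb606c0bec09ee0beb606c0bec09ee0beb606c0beb606c0beb9cd80bebd85d0beb59f80bec0f2e0beb606c0bec0f2e0beb606c0beb606c0beb606c0beb606c0beb606c0beb606c0beb606c0beb606c0beb62150beb62150beb62150beb62150beb59f80beb62150beb62150beb62150beb62800beb62800beb65860beb7c1d0beb59f80beb8b260beb59f80beb8a0f0beb59f80beb85c60beb85c60beb8b260beb59f80bebaf6c0beb85c60bec0f2e0beb59f80beb59f80beb59f80beb77b00beb59f80beb59f80beb59f80beb59f80beb59f80beb59f80beb59f80beb641a0beaf1ee0beb8b260beb8a0f0beb8b6c0beb8a0f0beb8a0f0beb8a0f0beb8b6c0beb59f80beb8b260beb606c0beb8b6c0beb606c0beb8e750beb8e750beb9f0f0beafed50beb921f0beb62150bebb62c0beb02270beb02fd0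beb59f80beb77b00beb59f80beb606c0beb59f80beb59f80beb59f80beb59f80beb59f80beb59f80beb59f80beb62150beb62150beb62150beb59f80beb62150beb62150beb62800beb59f80beb641a0beb59f80beb59f80beb59f80beb59f80beb59f80beb59f80beb59f80bebe4240beb59f80bec0c030beb59f80beb59f80beb59f80beb59f80beb59f80beb59f80beb59f80beb59f80beb59f80beb59f80beb59f80beb59f80bea44890bec0dd20beb62150beb62150beb606c0beb62150beb62150beb62150beb606c0beb62800beb606c0beb606c0beb606c0beb606c0beb606c0beb606c0beafed50beba84c0beb606c0beb62150beb02270beb02fd0beb606c0beb606c0beb606c0beb606c0beb606c0beb606c0beb606c0beb606c0beb606c0beb606c0bea44890beb62150beb62150beb62150beb02270beb02fd0beb62150beb62150bea44890beb02fd0bea44890beba65d0beb75b60beb85c60beb9cd80beba7a70beb5ae70beba84c0beb85c60beba8f20beb5f650beb60860beb61a90beb77b00beb75b60beb75b60beb75b60beb75b60beb75b60beb75b60beb75b60beb75b60bea90d30beb8b260beb8a0f0beb9cd80beb8a0f0beb8a0f0beb8a0f0beb8a0f0beb75b60beb8a0f0beb8a0f0beb8a0f0beb8a0f0beb8a0f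0beb8b260beb8b260bead1130beb8b260beb8b6c0beb930d0beae2350beae6900beb75b60beb8e750beaf3cd0beb8e750beafcc80beb01500beb75b60beb75b60beb75b60beb75b60beb18760beb90b40beb90b40beb90b40beb2b900beb8b6c0beb91440beb91440beb3f360beb91d60beb49400beb75b60beb536e0beb58940beb5dc30beb75b60beb498a0bebbcdd0beb72e20bebbd970beb498a0beb498a0beb61a90beb75b60beb521b0beb75b60beb54490beb75b60beb521b0beb521b0beb54490beb54490bea44890beb8b6c0beb9c660bec51db0beb5ae70beb5ae70beb61a90beb8a0f0beb5f650beb5f650beb60860beb61a90beb8a0f0beb8a0f0beb8a0f0beb8a0f0beb6d3c0beb8b260beb8b260beb8b260beb6d3c0beb6d3c0beb85c60beb8e750beb76c90beb8e750beb85c60beb85c60beb76c90beb76c90beb85c60beb85c60bea9f5c0beb90b40beb90b40beb90b40beb809c0beb809c0beb8a0f0beb90b40beb521b0beb85a10beb54490beb85c60beb85c60beb85c60beb85c60beb85c60beb5ae70beb8b260beb85c60beb8b260beb5f650beb60860beb61a90beb85c60beb85c60beb85c60beb85c60beb85c60beb85c60beb85c60beb85c60beb85c60bea44890beb8b260beb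8a0f0beb8b260beb8a0f0beb8a0f0beb8a0f0beb8a0f0beb521b0beb8a0f0beb54490beb8a0f0beb8a0f0beb8a0f0beb8a0f0beb8a0f0bea44890beb8b260beb54490beb8b260bea44890bea44890beb61a90beb8e750beb4dbf0beb8e750beb5ae70beb79580beb5f650beb60860beb5f650beb60860bea44890beb90b40beb90b40beb90b40beb5f650beb60860beb61a90beb90b40bea44890beb60860bea44890beb61a90bea44890bea44890beb79580beb979f0bea6eeb0beba7a70bea95200beba7a70beabc6c0bead07f0beae4dc0beaf9860beb0e7d0beb23c30beb395b0beb4f460beb65860beb76c90beb76c90beb86e50bea44890beba9460beb8ab80beb8e960beb809c0beb809c0beb809c0beb91300beb76c90beb85a10beb85a10beb86e50beb8ab80beb8ab80beb8ab80beb8d4b0bea44890beb8e960beb8fe20beb91300beb30af0beb30af0beb95200beba14f0beb809c0beb9a720beb8d4b0beb8e960beb85a10beb86e50beb9fd80beba14f0bea44890beba3d20beb8d4b0beb8e960beb85a10beb86e50beba3d20beba3d20bea44890beb86e50bea44890beb8e960bead97d0beb8ab80beb8d4b0beb8d4b0bea44890beb8fe20beb8d4b0beb8e960bea44890bea44890b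ea44890beb77b00bea44890bea44890bea44890bea44890bea5af90beab0b60beb090c0beb641a0bea44890beb9a720beb9fd80beb9fd80beb9a720beb9fd80beba2920beba2920bea44890beba5520beba2920beba3f20beb9fd80beba6b40beba2920beba3f20bea44890beba6b40beba2920beba3f20bea44890bea44890bea44890beba5520bea44890beba6b40bea44890bea44890bea44890bea44890bea44890bea50180bea44890bebadb30bebadb30bebb0880bea44890bebb1f50bebb0880bebb1f50bea44890bebb1f50bea44890bea44890bea44890bea44890bea44890bea44890bea44890bebb7b70bea44890bebb92b0bea44890bea44890bea44890bea44890bea44890bea44890bea44890bea44890bea44890bea44890bea44890bea44890be8c7100bec63b20bec0bb60bec543c0beb87e00beb87e00bec09ee0bec617e0beb76c90bec09ee0beba4f00bec4d780bebe5f70bebe5f70bebe5f70bec34980beaf1ee0bec63400bebe5f70bec63400beaf1ee0beaf1ee0bebe5f70bebe5f70beaf3cd0bebe5f70beafcc80beb01500beb8fe20beb91300bebbf600bebe5f70beac3b10bec04000bec04000bec04000beafed50beafed50bec04000bec04000beafed50beb02270beafed50beb01500beb02270beb02fd0beb02270beb02270beb02fd0bebaf6c0beb72e20bec556b0beb1876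0beb18760beb61a90beb79580beb2b900beb2b900beb49400beb79580beb3f360beb3f360beb49400beb49400beac3b10beb536e0beb58940beb5dc30beb683f0beb683f0beb72e20beb72e20beb498a0beb7dae0beb498a0beb88a30beb8e2e0beb93c30beb99640beb9f0f0beac3b10bebaa870beb521b0bebb62c0beac3b10beac3b10beb61a90beba4f00beb296a0beba4f00beb296a0beb296a0beb5f650beb60860beb5f650beb60860beac3b10bec04000bebb8b60bec04000beb2b900beb87e00beb87e00bec04000beac3b10bec06460beac3b10beb79580beac3b10beac3b10beb5dc30beb79580beac3b10bec70f40beac3b10bec71e60beac3b10bead07f0beae4dc0beaf9860beb0e7d0beb23c30beb395b0beb498a0beb521b0beb521b0beb54490beb54490be9c5600bec1b6f0beb521b0beb521b0beb498a0beb54490beb61a90beb91300beb498a0beb5f650beb498a0beb5ae70beb521b0beb58940beb54490beb5f650beac3b10beb61a90beb521b0beba3f20beaf1ee0beaf1ee0beb54490beb58940beb4dbf0beb60860beb5ae70beb6d3c0beb5ae70beb5ae70beb5dc30beb60860bea21da0beb5f650beb5f650beb60860beafed50beafed50beb683f0beb72e20bea3ba90beb02270bea424d0beb809c0bead97d0b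eaf1ee0beb6d3c0beb85a10beac3b10beb8fe20beaf1ee0beb8ab80beac3b10beac3b10beac3b10beaf9860beac3b10beac3b10beac3b10beac3b10beac3b10beac3b10beb02270beb02fd0bea90d30beb02270beafed50beb86e50beafed50beafed50beafed50beafed50beac3b10beb02270beb02270beb02270beb02fd0beb0e7d0beb23c30beb395b0beac3b10beb65860beb7c1d0beb8fe20beac3b10beac3b10beac3b10beb95200beac3b10beb99640beac3b10beac3b10beac3b10beac3b10beac3b10beac3b10beac3b10beb9fd80beb9fd80beba2920beac3b10beb02fd0beba4c50beba5520beac3b10beba8180beac3b10beac3b10beac3b10beac3b10beac3b10beac3b10beac3b10bebb0880beac3b10bebb3630beac3b10beac3b10beac3b10beac3b10beac3b10beac3b10beac3b10beac3b10beac3b10beac3b10beac3b10beac3b10be8c7100beb02fd0beb54490bec51db0beafed50beafed50beafed50beb77b00beaf1ee0beafed50beafed50beafed50beafed50beafed50beb02270beb02270beaf1ee0beb02270beb02fd0beb090c0beaf1ee0beaf1ee0beaf1ee0beb498a0beaf1ee0beb498a0beaf1ee0beaf1ee0beaf1ee0beaf1ee0beaf1ee0beaf1ee0bea21da0beb521b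0beb521b0beb521b0beaf1ee0beafed50beafed50beb5ae70bea3ba90beb02270bea424d0beaf1ee0beaf1ee0beaf1ee0beaf1ee0beaf1ee0beaf1ee0beb02270beaf1ee0beb02270beaf1ee0beaf1ee0beaf1ee0beaf1ee0beaf1ee0beaf1ee0beaf1ee0beaf1ee0beaf1ee0beaf1ee0beaf1ee0beaf1ee0be8c7100beb02270beafed50beb02270beafed50beafed50beafed50beafed50bea3ba90beafed50bea424d0beafed50beafed50beafed50beafed50beafed50be8c7100beb02270bea424d0beb02270be8c7100be8c7100beb296a0beb77b00beaf3cd0beb498a0beafcc80beb01500beb296a0beb296a0beb296a0beb296a0be95fa60beb521b0beb521b0beb521b0beb296a0beb521b0beb521b0beb54490be9e0250beb5ae70bea02690beb296a0bea259a0bea378f0beb296a0beb296a0bea6eeb0beb5f650bea95200beb60860beabc6c0bead07f0beae4dc0beaf9860bead1130beb23c30bead1130beb01500beae2350beae6900beae2350beae6900be8c7100beb76c90beaf3cd0beb01500beafcc80beb01500beb521b0beb521b0beb18760beb54490beb18760beb498a0beb2b900beb498a0beb2b900beb498a0be97cb80beb5f650beb3f360beb521b0beae2350beae6900beb498a0b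eb498a0beaf3cd0beb498a0beafcc80beb01500beb498a0beb498a0beb498a0beb498a0be8c7100beb521b0beb521b0beb521b0beae2350beae6900beb521b0beb521b0be8c7100beae6900be8c7100beb01500bead97d0beaf3cd0beafcc80beafcc80be8c7100beb5f650beafcc80beb01500be8c7100be8c7100be8c7100beb30af0be91bd50be9683f0be9b6d80bea07b80bea5af90beab0b60beb090c0beb2b900be8c7100beb536e0beb3f360beb3f360beb2b900beb49400beb536e0beb536e0be8c7100beb5dc30bea9f5c0beb683f0beb3f360beb58940beb49400beb7dae0be8c7100beb58940beb49400beb85a10be8c7100be8c7100be9f0f90beb58940be8c7100beb58940be8c7100be8c7100be8c7100be8c7100be8f3f10bea50180be8c7100beb7dae0beb72e20beb83230be8c7100beb83230beb7dae0beb83230be8c7100beb83230be8c7100be8c7100be8c7100be8c7100be8c7100be8c7100be8c7100beb99640be8c7100beb9f0f0be8c7100be8c7100be8c7100be8c7100be8c7100be8c7100be8c7100be8c7100be8c7100be8c7100be8c7100be8c7100be5cc1f0bec556b0beb4dbf0bec51db0beb2b900beb87e00bec09ee0bec09ee0bea21da0bec09ee0bea21da0bec09ee0bea259a0bea378f0b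eb5dc30bebbcbe0be9c5600bec45ff0bea3ba90bec45ff0bea3ba90bea3ba90bea424d0bea424d0bea6eeb0beb23c30bea6eeb0beb01500bea95200bead07f0beabc6c0bead07f0be9c5600beaf9860beb0e7d0beb23c30bead1130bead1130beb65860beb7c1d0be9c5600beae2350be9c5600beb01500bea90d30bea90d30beafcc80beafcc80be9c5600bebaf6c0bea95200beb4dbf0be9c5600be9c5600be9c5600beaf9860be9c5600be9c5600be9c5600bea07b80bea5af90beab0b60beae2350beae6900be7c8c00beae2350bead1130beb01500bead1130bead1130beae2350beae6900be9c5600beae2350bea21da0beae6900bead97d0beaf3cd0beaf3cd0beaf9860be881b40beafcc80bea3ba90beb0e7d0be8b5520be8c29a0be9f0f90beb18760be9c5600bea21da0be9c5600be9c5600be9c5600be9c5600be9c5600bea424d0be95fa60bea3ba90bea3ba90bea3ba90be9c5600bea424d0bea5af90beab0b60be9c5600beb5dc30be9c5600be9c5600be9c5600be9c5600be9c5600be9c5600be9c5600beb7dae0be9c5600beb88a30be9c5600be9c5600be9c5600be9c5600be9c5600be9c5600be9c5600be9c5600be9c5600be9c5600be9c5600be9c5600be5cc1f0beae6900bea3b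a90bea3ba90bea21da0bea3ba90bea3ba90bea424d0bea21da0bea50180bea21da0bea21da0bea21da0bea21da0bea21da0bea21da0be881b40beae2350bea21da0bea3ba90be8b5520be8c29a0bea21da0bea21da0bea21da0bea21da0bea21da0bea21da0bea21da0bea21da0bea21da0bea21da0be5cc1f0bea3ba90bea3ba90bea3ba90be8b5520be8c29a0bea3ba90bea3ba90be5cc1f0be8c29a0be5cc1f0bea90d30bea259a0bea378f0bea90d30bea90d30be6fd4c0beae2350bea90d30beae2350be7fe4a0be842d20be889340bea90d30be91bd50be9683f0be9b6d80bea07b80be9e0250be9e0250bea02690bea02690be5cc1f0bea259a0bea378f0beae2350bea6eeb0bea6eeb0bea95200bea95200be7376e0beabc6c0bea02690bead1130bea259a0bea378f0bead1130bead1130be5cc1f0beae2350bea02690beae2350be5cc1f0be5cc1f0be9f0f90bea378f0be5cc1f0bea378f0be5cc1f0be5cc1f0be675aa0be7abaf0be8f3f10bea50180be5cc1f0beabc6c0bea95200beae4dc0be5cc1f0be97cb80beabc6c0bead07f0be5cc1f0bead07f0be5cc1f0be81ff10be5cc1f0be5cc1f0be5cc1f0be625e10be5cc1f0beb23c30be5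cc1f0beb395b0be5cc1f0be5cc1f0be5cc1f0be5cc1f0be5cc1f0be5cc1f0be5cc1f0be5cc1f0be5cc1f0be5cc1f0be5cc1f0be5cc1f0bdfd63e0bead97d0bea95200bec51db0be881b40be881b40be889340beaf9860be7c8c00be8b5520be8b5520be8c29a0be91bd50be91bd50be9683f0be9b6d80be7c8c00bea5af90be9e0250beb090c0be7c8c00be7c8c00be95fa60bea378f0be7c8c00be9683f0be7c8c00be7c8c00be7c8c00be7c8c00be8f3f10bea02690be3cf7f0be9e0250be9e0250bea02690be7c8c00be881b40be9f0f90bea259a0be541680be8b5520be5a8a30be81ff10be7c8c00be7c8c00be7c8c00be7c8c00be6fd4c0be8b5520be7c8c00be8f3f10be7c8c00be7c8c00be7c8c00be7c8c00be7c8c00be7c8c00be7c8c00be7c8c00be7c8c00be7c8c00be7c8c00be7c8c00bdfd63e0be8b5520be881b40be8b5520be881b40be881b40be881b40be881b40be541680be881b40be5a8a30be881b40be881b40be881b40be881b40be881b40bdfd63e0be8b5520be5a8a30be8b5520bdfd63e0bdfd63e0be889340be95fa60be238980be95fa60be43a930be550670be675aa0be7abaf0be7fe4a0be842d20bdfd6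3e0be9683f0be91bd50be9683f0be2acdb0be842d20be889340be9e0250bdfd63e0be842d20bdfd63e0be81ff10bdfd63e0bdfd63e0be129540be625e10bdfd63e0be9683f0bdfd63e0be9b6d80bdfd63e0bdfd63e0bdfd63e0bdfd63e0bdfd63e0bdfd63e0bdfd63e0bdfd63e0bdfd63e0bdfd63e0bdfd63e0bdfd63e0bd3ea7c0be9683f0be541680be550670be3cf7f0be5a8a30be675aa0be7abaf0be3cf7f0be7fe4a0be3cf7f0be6fd4c0be3cf7f0be3cf7f0be3cf7f0be625e10bdbdcfe0be7fe4a0be3cf7f0be81ff10bdec0d00bdf8f460be3cf7f0be3cf7f0be238980be3cf7f0be3cf7f0be3cf7f0be3cf7f0be3cf7f0be3cf7f0be3cf7f0bd3ea7c0be541680be541680be541680bdec0d00bdf8f460be541680be541680bd3ea7c0bdf8f460bd3ea7c0be550670bd8af300bdcb3260be129540be43a930bd3ea7c0be675aa0bd997b50be550670bd3ea7c0bd3ea7c0bd3ea7c0bd690a80bd3ea7c0bd3ea7c0bd3ea7c0bd3ea7c0bd3ea7c0bd3ea7c0bd3ea7c0bd3ea7c0bbc12f80bdec0d00bdbdcf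e0be129540bdbdcfe0bdbdcfe0bdbdcfe0bdbdcfe0bcbf7fb0bdbdcfe0bd1bf9f0bdbdcfe0bd8af300bdbdcfe0bdbdcfe0bdbdcfe0bbc12f80bdec0d00bd1bf9f0bdec0d00bbc12f80bbc12f80bc59c600bd690a80bbc12f80bc76d690bbc12f80bbc12f80bbc12f80bbc12f80bbc12f80bbc12f80b8c63f00bcbf7fb0bcbf7fb0bcbf7fb0bac2df60bb7bd3e0bc59c600bcbf7fb0b8c63f00bb7bd3e0b8c63f00b9f76c00b8c63f00b8c63f00b8c63f00b8c63f00b2d05e00bac2df60b6c99eb0b9f76c00b2d05e00b2d05e00b2d05e00b2d05e00a6e49c00aed71d60a6e49c00a6e49c008f0d18008f0d18005f5e1000000000000000000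

def bigS : Nat := 0x8ab02220223049814a0049602150494049308e00111047014980496149604940493049404930490096004900825082408230822082104600889088e0956081c088b088a0889045808ab0456081505400540081208ab04500124088e0925044c044b044a08890448044704460445084408430896089601c00893088e0898088c088b088a08890438088b045608890854088b088a08890430088904560925042c042b042a08890428044704260425042404230422044b0420044704460445041c044508440843041808470416041504140413041204110430088804380888042c042b042a04090428040704260425042404230422042b0980085404260425041c042304220423041808210416041504140413041c0411041808430416041504140413041404130412041104100815040e040b040c040b096004090408040704ac04ab082a0843095804ab0956081504940493082208210150082308220821044c044b044a08210448044704460445049404930496049609400493049308120490049008120813043808120496081504940493081208150930081304960811092c092b042a0493092804930926092501240423042208110120081108120811011c0470081108100118080e01160415011401130112041101100889010e0889010c010b010a0109010801070106010501040103010204560900085408560125044c044b044a0870043804470446044504480447044604450430044404560845042c042b042a04560428044704260425042404230422044b08e0044704460445041c042b042a04450380042b0380041504140413041204110420042304220422041c0420042a04090418041c04160415041404130412041108c004130412041104110423042204230418042304160415041404130412041108b0041c0416041508ac08ab0412041100a804110412041104110410040e040e08a0040c040b040a04090408040704060898040408960809089408930092080908900809088e0809088c088b088a0889008800870086008500840083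008200811300082b080e0825080c080b080a08090808080708060815081408130812081108700823080e0815080c080b080a08090808080708060811080c080b080a080913000807080608070806080708060805130008071300080500540807080608051250080508050805124c124b124a00490048004700460045004400430042004112c008070806080508040803080a08090038080708060805080408030806080512b008030803080312ac12ab002a08030028080300260025002400230022002112c0080308020805001c08030802080312c0080212c00015001400130012001112b00801000e080112ac12ab000a000912b0000712b0000512ac12ab12ac12ab0800004709260925124c124b124a002102a0124b02a0124a08940893091c001104700041088e001505400540088a088906c0088706c006c01238088b088a0889128008870888088706c0112b000200011280112b1280112506c006c006c011251250012406c00925124c124b124a06c00248044704460445044411131112111612601113110e111211101110110e110e1260110c1260124a085412581256125612581258125812561256124b124a09251250084712500225124c124b124c124b124a084702480845021c0843084208430218122c02160215021402130212021102101238020e0222020c020b020a0209020802070206020502240223022c022b1200085402260225021c0223022402230218082102160215021402130212021102100843020e0215020c020b020a02090208020702060205020c020b020a020912000207020602050206020502040203120002ab1200054002c002c006c005400150082306c00821024c024b024a07000248044702b0044502ac02ab02ac02ab11c002ab02ab081104900490108a10890238108702a0108502a002a0108610850130108410830801012c012b042a08010128084701260125012402230422042111c0084708460845011c04700842084311c0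11c011c00215011401130112021101100887010e0887010c010b010a0109010801070106010501040103010202560700105408260825024c024b024a10490238024b024a024a02480248044604450230044402561041022c022b024a0256022804470226022502240223024a024b1180024b0248024a021c022b042a08011180022b11800215021402130212021101500223020e0422020c020b020a02090208020702060205021402130212021112c00213020e0211020c020b020a02091160020711600205020802070206020512b0021c1158021512ac12ab020a020900a80207012601250124020b020a020900a0020702060205011c0205020602050098020400960415009400930092011100900445008e0248008c008b008a0089008800870086008500840083008200811280044701260125011c0125012404230118042b01160415011401130112011100700423010e0415010c010b010a010901080107010601050104010301020109126001070106010501040103010201031258010112560409005401c00412041112500423040e0415124c124b124a00490048004700460045004400430042004100400413040e0411040c040b040a04090038040b00e004090409040b040a04090030040904090409002c002b002a0406002804040026002500240023002200210020040304020401001c0403040204010018040100160015001400130012001100100401000e0401000c000b000a0009000800070006000500040003000200010600105400a8009201500150104a10490098104700961045009400930092104100701043008e1041008c008b008a008900880087008600850084008300820081006000870086008500840083008200810058008100560125005401130112012500500124010e1021004c004b004a00490048004700460045004400430042004112c00113010e0112010c010b010a01090038010700560105005401030102010512b001030056010212ac12ab002a0049002800470026002500240023002200210020004700460045001c0043004200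410018004100160015001400130012001100101023000e1021000c000b000a0009000800070006000500040003000200010580101300260025001c0023002200210018002100160015001400130012001112b00447000e001512ac12ab000a000900080007000600050004000300020001056000070006000512ac12ab00020001055812ab05560405005400930092041112500423008e0422124c124b124a00490048004700460045004400430042004105400093008e0092008c008b008a008900380087008600850084008300820081128000830082008112801280002a0089092800870926092500240023002200211260008700860085001c0070008200811258008112560015001400130012001112600405000e040412601260124a000912580007125600051258125812561256050000540456000112501250124a0049124c124c124b124a00440043004200410030004300420041002c002b002a0049002800470026002500240023002200211260004700460045001c002b002a00411258002b12560015001400130012001112500023000e0021124c124b124a00090008000700060005000400030002000104c00013000e0011000c000b000a00091258000712560005000400030002000104b000031256000104ac04ab124a00091250000712500005124c124b124c124b04a0000700060005124c124b124a00010498124b0496124a049404930092011108900403088e0403088c088b088a0889008800870086008500840083008200810480042b02260225021c0223022402230218022b02160215021402130212021104700223020e021511c011c0020a0209020802070206020502040203020a020904600207020602050204020302040203045802070456020508540203020602050450020302030203044c044b044a004904480447044604450844084300420041044002070206020502040203020a0209043802070206020502040203020602050430020302030205042c042b042a0203042802030426042504240423042200210420040304020401041c04030402040111c0040111c0041504140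4130412041111c00401000e040111c011c011c00009115800071156000511581158115611560400004700a80558015001500022002101c0002102a000150494049300920011114000230496001511401140049404931128008711261125012401c002220081118000870086008511301130008200811180112c11801125112811281126112611800124010e00011180118011800049111c111c11160045111811181116111611c0111411131112010c010b010a010911600107116001050104010301020101116001031158010111601160116002a0115802a01156112511581158115811561156044702480445111c0150015000411140004111400015111411131112001111400003000e000111401140114000091130000711301125112c112b112c112b03800003112811251130113011300156112c112c112c112b112811281128112611261125111802151120112011201113111c111c111c010511181118111811160e00111411141113111210b0010201010e0010ac0e000105005400930092010111000103008e010111001100110000490048004700460045004400430042004111800093008e0092008c008b008a008910e0008710e0008500840083008200811130008300820081112c112b10e00101112801011126112500240023002200211160020302020205111c0070020202031158020311560015111411131112001110c00203000e020210c010c010c00009000800070006000500040003000200010300005410a8042510b010b010b0004910ac10ac10ac10ab10a810a810a800411130004300420041112c112b002a1093112800871126112500240023002200211160109410941093111c002b002a00811158002b11560015111411131112001100100023000e0021000c000b000a00090008000700060005000400030002000102c00013000e0011000c000b000a00091158000711560005000400030002000102b000031156000102ac02ab002a00491128004711261125002400230022002102a0004700460045111c0043004200411140004111400015111411131112001111300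043000e0041112c112b000a00091130000711301125112c112b112c112b028000471128112511261125002200211120002111200015111c1113111c00111130002311180015112c112b11141113112800071126112500040003000200010260000700060005112c112b000200010258112b0256112511281128112611260250000311261125024c024b024a00090248111c11201120111c1118111c111c0240111411181118111c111611141114023811121116000511181113111600010230111311160001022c022b11141113022811130226022502240223002200210220010301020101021c0103010201010218010102160215021402130212021102100101020e0101020c020b020a020902080207020602050204020310ac10ab0200080710a8038010e000ab080a080910e0080710e0080510e010e010e0011110c008231098081510c010c01094109310c0108710c010c0108e108b108c108b10e010891088108710c010b00082008110c010ac10c010b010c010c010c010ac10b0012410a810a810b010ab108a108910b010ab10b010a010b010b010b010ab01c010ac10ac10ab10a810a810a8109410a0108c10a0109010a010a010a0108c10b010931098108810ac10ab1098109610a8109410941093109010901090108e10c0108c108c108b108a1089108810871098108510961070109410931080001110b00081108e008110ac10ab108a108910a81087108610851070107010700001018010541058105810601056002200211098002110960015109410931060001110b0104a108e001510ac10ab108a108910a81087108610850004000300020001016000070006000510ac10ab00020001015810ab0156000510a810a80002000101500023108e002110a010a0108a108910a01087109610851098109810961096014010941096001110941093108e108e1098108c1096108a10941093108a1089013010871096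1085012c012b10941093012810930126012501241090108e108e0120108c108e108a011c108b108c108b0118108b0116108a011401130112011101101087010e1086010c010b010a01090108010701060105010401030102010101001054107002251070107010701070107010701070107010601060104a1046107010471060104510601060106010601060106010601060105810581058105800e0105810581058105610561054105410581050105610501054104c104c104c1060104a10481048104c104b104a10441058104710561045105410431042103800c0103810381038104c104b104a10301058104710561045105410431042102c00b000031056000100ac00ab1054000100a81047105010451050104b104c104b00a0104b104a1047104c104b104a10450098104b0096104a009400930092104700901047008e1046008c008b008a008900880087008600850084008300820081008010381038103810381038103810251038103010301030103010301030102c0070102c102c102b102c102b102a10261030102510261025102c102b102a10210060101c10261025102c102b102a10210058102b0056102a00541028102810260050102510261025004c004b004a0049004800470046004500440043004200410040101c101c101c101c101810181018003810161016101510181013101610150030101310161015002c002b002a1014002810130026002500240023002200210020100e100e100c001c100b100c100b0018100b00160015001400130012001100101007000e1006000c000b000a0009000800070006000500040003000200011000020700a80125011c01250124020102a0024b02a00150009400930092011105400201008e020105400540008a0089092800870926092500840083008200810a80008700860085091c092b008200810a80092b0a80092509280928092609250d800124008e00a80d800d800d800049091c091c0046004500440043004200410e000093008e0092008c008b008a0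0890d8000870d60008500540083008200810ab000830d5800810aac0aab0d60004900a800470d5602250d580d580d580d5604a0004702480045021c0043004200410498004104960215049404930092021104900103088e0101088c088b088a0889088800870086008500840083008200810980005402260225021c0223022202230218002102160215021402130212021104700043020e021504ac04ab020a020902080207020602050204020302020201096002070206020504ac04ab02020201095804ab09560015049404930012001104500023088e0021044c044b044a004904480447044604450444049304960496094004930493001104900490088a08890438088b088a088908880888088700010930000300020001092c092b042a0001092800470926092504240423042204210e000047004600450e000470004200410e0009c00e0004150e000e000e0004110e000083040e0081040c040b040a0409040804070406040504040403040204010700085400260025044c044b044a0021043804470446044504440447044604450430044408420842042c042b042a0256042800070426042504240423042204210960024b0248024a041c042b042a00010958042b09560415041404130412041104100423040e0421040c040b040a04090408040704060405040404030402040109400413040e0411040c040b040a0409095804070956040504040403040204010930040309560401092c092b020a02090928020709260925012402030202020109400207020602050d800203020202010940020109400201089408930d80011109300003088e0001092c092b088a088909280e0009260925092c092b092c092b0928092809260925092609250124020909200207092002050d600d600d600111087004230d6002150d580d580d580d560d5801070d5801050d5601030102010109000107010601050104010301020101090001010900040508540893040204010c000403088e04010c000c000c0000490248084708460845084408430e0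00e0008e00893088e0405088c088b088a088908e0088708e00889088808870887040108b004030402040108ac08ab082a04010228040102260225022402230822082108c0040304020401021c08700402040108c008ab08c00215089408930212021108b00403088e040108ac08ab088a088908b0020708b0020508ac08ab08ac08ab060008540d56042501500150084a088908a0084708a0084508940893009208450898084308980842089608930894089308900d6008900925088e088b088c088b088a088908880d58091c092b0d5600810880092b08800925085409280926092508700124010e0821084c084b084a0d8008700847087008450844084308420d800ac00113010e0111010c010b010a0109086001070860010508540103010201010ab00103085801010aac0aab08540d600850084708500845084c084b084c084b084a084708480847084608450844084308400d560840081508940893081208110838082308380821082c082b082a08890830080708300825082c082b082c082b058008130828082508260825082408230822082108200815081c0813081c08110ab00803081808150aac0aab081408130812081108100805080e080b080c080b05600809080808070aac0aab0804080305580aab0556010508540893009201010b000103088e01010b000b000b0008890848084708460845084408430842089609400893088e0092088c088b088a08890838088b088a088908880888088700810930008300820081092c092b082a0089092800870926092501240823082208210ac0008700860085011c0870008200810ac000810ac0081501140113011201110ab00401010e04010aac0aab0ac001090ab001070ab001050aac0aab0aac0aab05000854008e02250aac0aab0ab000490aac0aab0aab0aab02480248084208450ab00843084208420aac0aab082a0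0490228004702260225022402230222082108e0004700460045021c022b082a00410a80022b0a80021502140213021202110a800223020e02220a800a800a8002090208020702060205020402030202020104c00213020e0211020c020b020a02090a80020702060205020402030202020104b002030202020104ac04ab000a000900a8000709260925000400030002000104a0000700060005091c0003000200010498000104960001049404930092001108900043088e0041088c088b088a08890088008700860085008400830082008104800038000e0025000c000b000a00090008000700060005000400030002000104700223000e00150aac0aab000a00090008000700060005000400030002000104600007000600050004000300020001045807000456020500540203020202010450020302020201044c044b044a00490448044704460445004400430042004104400207020602050204020302020201043802070206020502040203020202010430020302020201042c042b042a0201092802010926092504240423042200210960020302020201041c06c002020201095806c009560015001400130012001109600401000e040109600960000a0009095800070956000509580958095609560c00020700a80125015001500124020909c0020701560205009400930092011109300223008e0215092c092b008a00890928008709260925012401c00222008108e0008700860085092c092b008200810928092b09260925092809280926092509250124010e020109800980098001090aac0aab0ab008450aac0aab0aac0aab08c00aab0aab0aab0aac0aab010a01090958010709560105010401030102010108b001030956010108ac08ab096001090928010709260925095809580956095608e00047024800450a800150015000410898004108960815089408930a80081108e00201088e040108e008e0088a088909280b0009260925092c092b092c092b038004030926092509260925093001560928092b09260925092809280926092508b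00925010e021508ac08ab092001090ac0091c09260925092c092b01020101056001070926092508ac08ab01020101055808ab05560925089408930092092508a00103088e010108a008a0088a088908980847089608450898089808960896054008940893009208900890088e088e088c088c08e0088a08890aab0aab0aab08b00aab0082008108ac08ab08e001010928010109260925082408230822082108a001030102010108700870010201010898010108960815089408930a00081108900201088e020108ac08ab088a088908b0084708b0084508ac08ab08ac08ab0b00085400a8002508ac08ab08b00049089808ab089608ab089408930847084608900844088e0aab088c08930894089308900887088e0925088c088b088c088b05600893088e0893088c088b088a08890558088b05560889088908890826082608800824082308220880088008800889087008470870084508440843081608160ac0081408130812087008700870080e0558080c0556080a08540808080708060ab00804055608020aac0aab086000490928084709260925085808580858085602a008540854084708500850085008430498084c0496084b049404930848084708900845088e0843088c088b088a088909280a0009260925092c092b092c092b028008470926092509260925083008230958082c0956082b0958096009560826047008250956082308ac08ab095609560928081c0926092508180818081808160260081508140813092c092b0810080e0258092b02560925089408930926092502500805088e0925024c024b024a088904480447044604450928092b092609250240092b0926092509260925092609250238092508e0092509200920092008010230091c09200801022c022b042a0001022800010226022502240223042208210220000300020001021c047000020001021804ab02160215021402130212021104b00101020e010104ac04ab020a0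20904b0020704b0020504ac04ab04ac04ab0a0004930956002508e0044b044a048e04980447049604450494049308e004450470044404960496049404930494049308900960088e08c0088c088b088a0889046008890956095608ac08ab09560956045808ab045608b00854089308ac08ab04500423088e0925044c044b044a08890448044704460445089408930896089601c00893088e0898088c088b088a08890458088b045608890854088b088a08890450088904560925044c044b044a08890448044704460445044c044b044a044b04480447044604450446044508440843044009560440041504140413041204110438042304380421042c042b042a08890430084704300425042c042b042c042b018008540428042504260425042404230422084b04200415041c0413041c084b0418084704180415041604150414041304120847084608450848084708460845016008470846084508440845084408430158084301560843084008400840082c0150082a0838082807000700070008890848084708460845084408430830082b0140082c082c082b088c088b088a08890838088b085608890854088b088a08890130081c088e0815012c012b084a08890128084701260125012408430422088901200889088a0889011c0870088a08890118088901160415011401130112011101100889010e0888010c010b010a0109010801070106010501040103010201010100085408560025084c084b084a0870083808470846084508440843084608450830084308430845082c082b082a0856083808470846084508380838084a084b00e0084708460845082c082b082a08430380082b0380082a082c082b082a08260828082408260825082c082b082a08400828084008260825082c082b082a082b00c0082b0826082508260825082608250825082408260825082408230824082300b008230823082200ac00ab0822082200a8082108210820082408230822082100a0081808180818081c082b082a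08430098084300960825009400930092082100900843008e0843008c008b008a0089008800870086008500840083008200810080082b08260825081c0823082208210818082108160815081c0823081c0821007008230816081508160815081608150814081308160815081408130816081500600813081308130812081308120812005808120056081100540811081008110050080c080e0815004c004b004a00490048004700460045004400430042004100400813080e0811080c080b080e080e0038080b080b080b080a080b080a080b0030080a08090809002c002b002a0808002808070026002500240023002200210020080708060807001c0806080508050018080500160015001400130012001100100803000e0803000c000b000a0009000800070006000500040003000200010800000700a8002501500150024a002102a0024b02a0024a024802480092001105400023008e001505400540002a008906c0008706c006c00124022302220021026000870086008506c0012b008200810258012b0256012506c006c006c001110250012406c00222024c024b024a01090248044704460445044401030102010101c00113010e0111010c010b010a0109023801070256010501040103010201010230010302560101022c022b024a00490228024b0226022502240223024a024b0220024802480045021c022b004200410218022b0216021502140213021202110230022302380222022c022b020a0209022802070226022502240223022c022b0180021302260225021c02230224022302180207021602150214021302120211021802030216021502140213021202110212021102100205020e020b020c020b016002090208020704ac04ab02040203015804ab0156000504940493009200010150002306c00021044c044b044a004904480447044604450494049304960496014004930493009204900490008a0089043800870086008500840083008200810130008300820081012c012b042a0001012800010126012501240423042207000120000300020001011c0470000200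01011801c001160415011401130112041101100001010e0001010c010b010a0109010801070106010501040103045604560b00005400560025044c044b044a0049043804470446044504480447044604450430044404960041042c042b042a04930428000704260425043804380422049600e0049304930493042c042b042a048e0158042b0156042a04280428042604260150042404230422044c044b044a0409044804470446044504180418041604160ac0041404130412047004700470040e0158040c0156040a04090408040704060ab00404015604020aac0aab042a020900a8044701260125012404230422044b00a0044704460445011c0445044a02010098044700960445009400930092044500900445008e0001008c008b008a00890088008700860085008400830082012b0080044701260125011c0125012404230118042b01160425011401130112042500700423010e0422010c010b010a01090108010701060105010c010b010a010900600107010601050106010501040103005801010056040b00540493054004070050040504040403004c004b004a004900480047004600450044004300420041004004070406040504040403040204010038040700e0040504040403040204010030008300820081002c002b002a0401002804010026002500240023002200210020000300020001001c007000020001001800ab00160015001400130012001100100001000e0001000c000b000a0009000800070006000500040003000200010600005400a8009201500150004a00490098004700960045009400930092004100700043008e0041008c008b008a00890088008700860085008400830082008900600087008600850084008300820083005800810056041500540413041204ab00500124040e0021004c004b004a0049004800470046004500440043004200410ac00493049304980494049304940493003801070056049000540493049601010ab00493005601010aac0aab002a0049002800470026002500240023002200210020004700460045001c0043004200410018004100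160015001400130012001100100023000e0021000c000b000a0009000800070006000500040003000200010580001300260025001c002300220021001800210016001500140013001200110ab00447000e00150aac0aab000a00090008000700060005000400030002000105600007000600050aac0aab0002000105580aab0556041504140413041204250150042304220422024c024b024a04230248041c04160415041404130412041509400413041204120414041304120413023804120416041504140413041204110930041304120411092c092b041204110928041109260925012402230410040e0120040c040c040b011c0470049004900118049001160215011401130112021101100401010e0401010c010b010a010901080107010601050104010302560256050004ab04560111024c024b024a04700238024b024a024a024802480412041102300447040e0445022c022b02a004090228044702260225022402230422044b00e0044704460445021c022b042a04450218022b02160215021402130212021102100223020e0422020c020b020a02090218021c02160215021402130212021104c00213020e0211020c020b020a020e020c020b020a020a020902080207020604b002040256041504ac04ab024a041100a804110226022502240223024a024b04a0040902480409021c024b024a04090498024b04960215049404930092021100900409008e0408008c008b008a0089008800870086008500840083008200810480042b02260225021c0223022402230218022b02160215021402130212021104700223020e021501c001c0020a020902100211020e0215020c020b020a020904600209020e0211020c020b020a02090458020b0456020900540209020802070450020502040203044c044b044a004904480447044604450044004300420041098004070406040504040403040a040904380407040604050404040304060405098004030403040309800980002a0403092804030926092500240023002200210960040304020405001c0403040204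030958040209560015001400130012001109600401000e040109600960000a000909580007095600050958095809560956040004930926092501500150044a048e0238044702a0044503600360091c04450940044403600001094009400360036009280360092609250124022302220889093008870888088709300930042a092b092c092c092b0925092809280926092609250124010e0421010c010b010a01090108010701060105010401030112011609000113010e0112010c010b010a0109010801070106010501040103010601050900010301030102090009000160036000a8036001260125012401580156015608e0084702480845011c0150015008430098040100960215009400930092021108e00423008e042108e008e0008a0089008800870086008500840083008200810380041301260125011c0125012402230118012b01160125011401130112012508c00124010e021508c008c0010a010900a801070106010501040103010a0109096001070106010508b008b001040103095808ac09560105005400930092010500500103008e0103004c004b004a00490048004700460045004400430042004109400093008e0092008c008b008a0089003800870086008500840083008200810930008300820081092c092b002a0209092802070926092500240023002200210020020702060205001c0070020602050018020500160015001400130012001100100201000e0201000c000b000a0009000800070006000500040003000200010300005400a80825004c004b004a0049003800470046004500440043004200410030004300420041002c002b002a0089002800870026002500240023002200210960008700860085001c002b002a00810958002b09560015001400130012001100100023000e0021000c000b000a00090008000700060005000400030002000102c00013000e0011000c000b000a00090958000709560005000400030002000102b000030956000102ac02ab002a00490928004709260925002400230022002102a0004700460045001c0043004200410940004109400015049404930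012001109300043000e0041092c092b000a00090930000709300925092c092b092c092b0280022b0928092509260925002200210018002100160015001400130012001109300023000e0015092c092b000a0009092800070926092500040003000200010260000700060005092c092b000200010258092b0256092509280928092609260250000309260925024c024b024a00490448044704460445004400430042004102400113010e0112010c010b010a01090238010708e0010501040103010201050230010301020102022c022b042a0103022801020226022502240223042200210220010301020105021c0103010201030218010302160215021402130212021102100201020e020108e008e0020a020908e0000708e008e008ac08ab08ac08ab0200005400a8001100e00150024a004908a0024b08a0024a089408930092011108c000430898004108c008c00894089308c0008708c008c0088e088b088c088b08e008890086008508b008b00082008108b008ac08b008b008ac08ab08ac08ac08ab0124088e00a808a008a0088a088908a0000708a008a0089808980896089601c008940898089808960896089408940893088c08900890088e088e088c088c0700088a0889008107000700002a00490880004708800880002400230022002108c000470046004508700870004200410898004108960870089408930012001108b00101088e010108ac08ab088a088908600007086008600004000300020001018008540858085808560856085408540898002108960015089408930012001108b0084a088e001508ac08ab088a088900080007000600050004000300020001016000070006000508ac08ab00020001015808ab01560015089408930012001101500023088e002108a008a0088a088908980007089600050898089808960896014008940893001108900890088e088e0898088c0896088a08940893000200010130000308960001012c012b0894089301280893012601250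1240890088e088e0120088c088e088a011c088b088c088b0118088b0116088a011401130112001101100081010e0081010c010b010a010901080107010601050104010301020856010008540870040508700870087008700860084c0860084a0860086008470846087008440860004108600860086008600858085408580845085808580858085800e008560854085408500850085008500858084c0856084c0854084a084808480860084608450844084c084b084a08400858084708560845085408430838083800c0082c08300011084c084b084a08300858084708560845085408430002000100b000030856000100ac00ab0854000100a80847085008450850084b084c084b00a0084b084a0847084c084b084a08450098084b0096084a009400930092084700900847008e0846008c008b008a00890088008700860085008400830082008100800838083808380838083808300825083808300830083008300830082c082c0070082c082b082a082c082b082a08260830082408260825082c082b082a08210060081c08260825082c082b082a08210058082b0056082a00540828082808260050082508260825004c004b004a0049004800470046004500440043004200410040081c081c081c081c081808180818003808160816081508180813081608150030081308160815002c002b002a0814002808130026002500240023002200210020080e080e080c001c080b080c080b0018080b00160015001400130012001100100807000e0806000c000b000a00090008000700060005000400030002000108000054008e009201500150004a004902a0004702a00045049404930042004105400043048e0041054005400494049306c0004706c006c0048e002300220021070000470046004506c006b0002a0041055806ac055606b0005406ab06ac06ac02500124010e0021024c024b024a00490248044704460445044400430042004104c00113010e0111010c010b010a0109023801070256010501040103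0102010104b001030256010104ac04ab024a00090228044702260225022402230222024b04a0044702480445021c0445044400010498000104960215049404930212021107000023070000210700070007000700070002070206020502040203020202010380001302260225021c0223022202230218042102160215021402130212021104b00124020e021504ac04ab020a02090208020702060205020402030202020104a002070206020504ac04ab02020201049804ab04960105049404930092010104a0010306c0010104a004a0044a06c00498044704960445049404930496049604940493049300920490049006b006b0043806b006ac06ac06ac06ac06ab0081048000830082008104800480042a020106000447060006000124042304220700047004470446044504700470044402010458020104560415011401130112041104600201010e020104600460044a010904580447045604450458045804560456030006ab00a8042504500450044a0049044c044c044b044a044804480447044604450444048e06ab04400440042a049304380087042604250438043804220421056000870086008504300430042a00810558042c0556042a0428042804260426042504240423042204200420044a0409041c041c04160415041804180416041602c004140413041204110410040e040e0558040c0556040a040904080407040602b004040556040202ac02ab042a00490580044705800580042404230422042104a0044704460445041c0445044400410498004104960415049404930092041105600043008e004105600560008a008905580087055605600558055805560556028000470556055805560556012404210558042105560415011401130112011104700023010e041505400540010a010905400107054005400104010301020101026001070106010505400103010201010258010102560005005404930002000102500003048e0001024c024b024a00490448044704460445004400430042004102400007000600050004000300020001023800070556000500040003000200010230000300020001022c0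22b002a0101022801010226022502240223002200210220010301020101021c0103010201010218010102160215049404930212021104b00101020e010104ac04ab000a000904b0000704b0000504ac04ab04ac04ab0600005400a8009204e000ab004a0049049800470496004504940493009201110470004304960041049404930494049304c0008704c004c00556055805560556046005560556008504ac04ab00820081045804ab045604b00494049304ac04ab04700124054000a8044c044b044a05400470044704700445049404930496049601c004930493049804940493049404930458008704560490056004930496008102b004930456008102ac02ab044a00490450044704500445044c044b044c044b02a00447044804470446047005560556045800410456047004940493041204110450008104380081044c044b044a0500044804470456044504580458045604560580005404560458044c044b044a0423044804470446044a044804470446044602b004470446044502ac02ab044504130440041104400440043804380422040b056004090438043802ac02ab042a0403055802ab0556043004940493042c042c0150042a04280428024c024b024a042404480447044604450494049304960496014004930493041804ac04ab04ac04ab023804ab045604ab04940493040c040c0130040a04960408012c012b044a0493012804470126012502240223049404930120049304930493011c0470049004900118049001160215011401130112021101100001010e0001010c010b010a010902580107025601050258025802560256050004ab04700225024c024b024a04700238024b024a024a0448044704460445023004ab045604ab022c022b042a0456022804470226022502240223044a044b00e0044704460445022c022b042a04450228022b022602250224022302260225022402230223042202200220020a0209021c021c02160215021802180216021600c0021402130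21202110210020e020e020c020c020b020a020904230424042300b004230422042200ac00ab0420042000a8041c03800380042404230422041800a0041604460445041c042b042a04450098044700960425009400930092021100900445008e0445008c008b008a0089008800870086008500840083008200810080042b04260425041c0423042204230418042304160415041c0423041c0425007004230416041501c001c0041604150414041304160415041404130416041500600413041304130412041304120412005804110056041100540410041204110050040c040e0415004c004b004a00490048004700460045004400430042004100400413040e0411040c040b040e040e0038040b040b040b040a040b040a040b0030040a04090409002c002b002a0408002804070026002500240023002200210020040704060407001c0406040504050018040500160015001400130012001100100403000e0403000c000b000a0009000800070006000500040003000200010400005400a80125015001500124004902a0004702a0001503600360009201110130004303600041012c012b036003600128036001260125012402230222008100e0008700860085011c012b008200810118012b01160125011401130112012501100124010e0021010c010b010a01090118011c01160105011401130112011600c00113010e0112010c010b010a0109010c010b010a0109010901080107010600b001040256010200ac00ab024a004900a803600226022502240223024a024b00a0004702480045021c0043004200410098004100960215009400930092021100900001008e0001008c008b008a00890088008700860085008400830082022b0580002b02260225021c0223022402230218024b0216021502140213021c02110070024a0216021500ac00ab0214021300a802110226022502240223020c020b056002090238023800ac00ab02040203055800ab05560215005400930092021100500223008e0225004c004b004a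00490048004700460045004400430042004100400093008e0092008c008b008a0089003800870086008500840083008600850030008300830082002c002b002a02a0002802020026002500240023002200210020020302020201001c0070020202010018004100160015001400130012001100100001000e0001000c000b000a0009000800070006000500040003000200010300005400a80025004c004b004a0049003800470046004500440043004200410030004300420041002c002b002a0209002802070026002500240023002200210560024b024a024a001c002b002a024b0558002b05560015001400130012001100100023000e0021000c000b000a00090008000700060005000400030002000102c00013000e0011000c000b000a00090558000705560005000400030002000102b000030556000102ac02ab020a020900a80211012601250124020b020a020904a00209020a0209011c020b020a02090498020904960209049404930092020800900206008e0248008c008b008a00890088008700860085008400830082012b0280022b01260125011c0125012402090118020701160150011401130112021100700223010e0215010c010b010a01090108010701060105010c010b010a0109026001070106010501060105010401030258012b02560125005401130112012502500124010e0125024c024b024a00490048004700460045004400430042004102400113010e0112010c010b010a01090238010700e0010501080107010601050230010701060105022c022b002a01040228010202260225022402230022002104c0020302020205021c02030202020304c0020204c00015049404930012001104b00201000e020104ac04ab000a000904b0000704b0000504ac04ab04ac04ab0200049300a80225011c015001b0048e04a001b004a001b00494049300920111049804440498021504960493049404930088008700860085008400830082008904800087008600850084008300820083048000ab048000b0005400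93009200ab04700124008e00a8004c004b004a00490470004704700045004400430042004101c00093008e0092008c008b008a00890460008704600085005400830082008504b000830458008204ac04ab002a00490028004700260025002400230022002104a0004700460045001c0043004200410498004104960015049404930012001100100103000e0103000c000b000a0009000800070006000500040003000200010180005400260025001c0023002200210018002100160015001400130012001104b00043000e001504ac04ab000a000900080007000600050004000300020001016000070006000504ac04ab00020001015804ab01560015049404930012001101500023000e002104a004a0024a0009049800070496000504980498049604960140049404930011000c000b000a0009049800070496000504940493000200010130000304960001012c012b04940493012804930126012502240223002200210120008700860085011c0470008200810118008101160215011401130112021101100081010e0081010c010b010a010901080107047001050470047004560456010000540070012504500450044a00490460044c0460044a046004600447044604700043045800410458045804560456045004470450044504500450044c044b00e0044c044b044a04480448044704460380042c0380001504400440001200110460002304380021044c044b044a00090458044704560445043004300002000100c0042c042b042a044c044b044a00090458044704560445000400030002000100b000030456000100ac00ab044a000900a8044704500445044c044b044c044b00a0044704480447044c044b044a00010098044b0096044a009400930092044700900447008e0446008c008b008a008900880087008600850084008300820081008004380438043804300430043004230438043004300430042c042c042c042c0070042a04280428042c042b042a04240430042204260425042c042b042a041c0060041804260425042c042b042a0001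0058042b0056042a00540428042804260050042504260425004c004b004a0049004800470046004500440043004200410040041c041c0418041c041804180416003804150416041504180413041604150030041304160415002c002b002a0414002804130026002500240023002200210020040e040e040c001c040b040c040b0018040b00160015001400130012001100100407000e0406000c000b000a0009000800070006000500040003000200010400004700a8002501500150024a002102a0024702a0024a0360036002470011038000230360001502ac02ab002a0356012800870126012501240223022200210260008700860085011c012b008200810258012b02560125011401130112011102500124010e0222024c024b024a01090380038003800380038001030102010101c00113010e0111010c010b010a0109025801070256010501040103010201010250010302560101024c024b024a00490250036002500225024c024b024a024b024a035802480358021c035603560041024000410240021503000300009202110238022302380222022c022b008a00890230008702300225022c022b022c022b018000540228022502260225022402230220024702200215021c0213021c021102b000430218021502ac02ab021402130212021102100225020e020b020c020b016002090208020702ac02ab02040203015802ab0156021502c002c00212021102500223020e0222024c024b024a004902b0004702b0004502ac02ab02ac02ab014002ab02ab009202ac02ab008a00890238008702a0008502a002a0008200810130008302a00081012c012b002a0001012802470126012502240223002200210120000300020001011c02ab000200010118000101160015011401130112001101100081010e0081010c010b024a0109025801070256000502580258025602560300005402700025024c024b024a00490238024b024a024a0260026002ab02ab023002ab02560041022c0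22b024a0256023802a00226022502380238024a024b00e0024b024a024a022c022b02b0024b0158022b01560225022802280226022601500224022302ab022c022b024a02090228021c022602250224022b022c022b02c0022b022602250224022302240223015802230156021502200220021c021102b0021c0156021502ac02ab024a021600a802140126012502240223024a024b00a0025802560256011c022b024a02060098024b00960225009400930112024a0090024a008e0248008c008b008a00890088008700860085012c012b012c012b0280023801260125011c0125022402230118022b011602150114011301120225007002230116021501140113011201130112010701100105010e010b010c010b006001090108010701060105021202120058021100560210005401c00212021100500223020e0215004c004b004a00490048004700460045004400430042004100400213020e0211020c020b020e020e0038020b00e0020b020a020b020a020b0030020a02090209002c002b002a0209002802070026002500240023002200210020020702060207001c0206020502050018020500160015001400130012001100100203000e0203000c000b000a0009000800070006000500040003000200010200005400a800920150015001b00049009801b0009601b0009400930092011100700043008e0041008c008b008a00890088008700860085008c008b008a0089006000870086008500860085008400830058012b00560125005401130112012500500124010e0021004c004b004a00490048004700460045004400430042004102c00113010e0112010c010b010a010e0038010b0056010a005401130112010602b0011c0056010202ac02ab002a0049002800470026002500240023002200210020004700460045001c0043004200430018004100160015001400130012001100100101000e0101000c000b000a0009000800070006000500040003000200010180005400260025001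c0023002200210018002100160015001400130012001102b00125000e001502ac02ab000a000900080007000600050004000300020001016000070006000502ac02ab00020001015802ab01560105005400930092010502500105008e0105024c024b024a00490048004700460045004400430042004101400093008e0092008c008b008a0089003800870086008500840083008600850130008300830082012c012b002a0089012800870126012500240023002200210120008700860085011c0070008400830118008301160015011401130112001102600101010e010102600260024a00090258000702560005025802580256025601000054008e00d802500250024a0049024c024c024b024a0044004300420041024000430042004102400240002a00490238004700260025023802380022002100e000470046004502300230002a00410258022c02560015001400130012001102500023000e0021024c024b024a00090008000700060005000400030002000100c00013000e0011000c000b000a00090258000702560005000400030002000100b000030256000100ac00ab024a000900a8000702500125024c024b024c024b00a0000700060005024c024b024a00010098024b0096024a009400930112001100900043008e0041008c008b008a00890088008700860085008402380238022b008000380228022502300230023002230238022c022c022b0228022802280226007002250224022301c001c0022000090230021c02260225022c022b021800010060000702260225022c022b000200010058022b0056022500540228022602260050022402260225004c004b004a0049004800470046004500440043004200410040021c02180218021c021802160216003802140216021502180213021602150030021302160215002c002b002a0214002802130026002500240023002200210020020e020e020c001c020b020c020b0018020b00160015001400130012001100100207000e0206000c000b000a0009000800070006000500040003000200010200005400a8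01250150015001b0004901c001b001560015009400930092011101300043008e0041012c012b008a0089012800870126012501c001c001c0008100e0008700860085012c012b008200810128012b01260125012801280126012501250124010e01ab0120012001800049011c011c01160045011801180116011600c001140113011201100110010e010e0158010c0156010a010901080107010600b001040156010200ac00ab016001090128010701260125015801580156015600a0004701560045011c0150015000410098015000960015009400930112001100900001008e0001008c008b008a00890088008700860125012c012b012c012b0180013801260125011c0125013001560118012b01160125011c0113011c0125007001250116015800ac00ab0114011300a8011c011601250114011301120116016001130112011200ac00ab0110010e015800ab0156012500540093011201250050012b008e0125004c004b004a00890048004700460045004400430096009601400093008e0112008c008b008a00890038008b008a008900890088008700860030008400830109002c002b002a0109002801070026002500240023002200210020010701060107001c0070010501050018010500160015001400130012001100100103000e0103000c000b000a0009000800070006000500040003000200010100005400a800d8004c004b004a0049003800470046004500440043004600450030004300430042002c002b002a0089002800870026002500240023002200210160008700860085001c002b002a00890158002b01560015001400130012001100100023000e0021000c000b000a00090008000700060005000400030002000100c00013000e0011000c000b000a00090158000701560005000400030002000100b000030156000100ac00ab002a00490128004701260125002400230022002100a0004700460045001c0043004200430098004700960015009400930012001100900043008e0042008c008b008a0089013000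8701300125012c012b012c012b008000470128012501260125002200210120002101200015011c0013011c00110070002301180015012c012b000a0009012800070126012500040003000200010060000700060005012c012b000200010058012b0056012500540128012601260050000301260125004c004b004a00890048004700460045004400430042011c0040011401180118011c0116011401140038011200e00110011801130116010c0030011301160001002c002b002a0113002801130026002500240023002200210020010c010e010b001c010b010c010b0018010b00160015001400130012001100100107000e0106000c000b000a0009000800070006000500040003000200010100005400a800d800e000ab004a004900980047009600450094009300e000e00070004300960041009400930094009300900087009000c0008e008b008c008b006000890088008700ac00ab00840083005800ab005600b00094009300ac00ab005000ab008e00a8004c004b004a00890048004700460045004400430096009600c00093008e0098008c008b008e008e0038008b0056008a0054008b008a008900b000890056008800ac00ab002a00890028004700260025002400230022004b00a0004700460045001c0045004400430018008500160015001400130012001100100083000e0083000c000b000a0009000800070006000500040003000200010080005400260025001c0023002200230018002100160015001400130012001100b00043000e001500ac00ab000a000900080007000600050004000300020001006000070006000500ac00ab00020001005800ab00560015009400930012001100500023000e0021004c004b004a000900480047004600450098009800960096004000940093001100900090008e008e0038008c0096000500940093000200010030000300960001002c002b002a0093002800930026002500240023002200210020008c008e008a001c0070008c008b0018008b0016001500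1400130012001100100087000e0086000c000b000a0009000800070006000500040003000200010080005400700025004c004b004a00700038004b004a004a00480048004700460030004400560042002c002b004a00560028004700260025002400230022004b0060004700460047001c002b002a00450058002b00560015001400130012001100500023000e0022000c000b000a00090008000700060005000400030002000100400013000e0011000c000b000a0009005800070056000500040003000200010030000300560001002c002b004a0009002800070026002500240023004c004b0020004700480047001c004b004a00010018004b00160015001400130012001100100047000e0046000c000b000a0009000800070006000500040003000200010040003800260025001c0025002400230018002b00160025001400130012001100300023000e0015002c002b000a0009002800070006000500040003000200010020000700060005002c002b000200010018002b00160025001400130012002600100024000e0025000c000b000a00090008000700060005000400030002000100200013000e0012000c000b000a0009001800070016000500140003000200010010000300160001000c000b000a0009000800070006000500040003000200010010000700060005000c000b000a00010008000b00060005000400030002000100080003000600050004000300020001000400030002000100020001000100000000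

def aval (k : Nat) : Nat := (bigA >>> (32*k)) % 4294967296
def sval (k : Nat) : Nat := (bigS >>> (16*k)) % 65536

def chkB (k : Nat) : Bool :=
  Nat.ble (100000000 + sval k * aval (sval k)) (sval k * aval k) &&
  Nat.ble (100000000 + (k - sval k) * aval (k - sval k)) ((k - sval k) * aval k) &&
  Nat.ble (aval k) 200050000 &&
  (Nat.blt k 5374 ||
    Nat.ble (aval k * (k*(2*k-1)*(2*k-1)) + 100000000*((2*k-1)*(2*k-1) + 2*k*(2*k-1) + k))
      (200050000 * (k*(2*k-1)*(2*k-1))))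

def allB : Nat → Nat → Nat → Bool
  | 0, _, _ => false
  | fuel+1, lo, hi =>
    if hi ≤ lo then true
    else if hi = lo + 1 then chkB lo
    else
      let mid := (lo + hi) / 2
      allB fuel lo mid && allB fuel mid hi

theorem allB_spec : ∀ fuel lo hi, allB fuel lo hi = true →
    ∀ k, lo ≤ k → k < hi → chkB k = true := by
  intro fuel
  induction fuel with
  | zero => intro lo hi h; simp [allB] at h
  | succ f ih =>
    intro lo hi h k hk1 hk2
    rw [allB] at h
    by_cases h0 : hi ≤ lo
    · omega
    · rw [if_neg h0] at h
      by_cases h1 : hi = lo + 1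
      · rw [if_pos h1] at h
        have : k = lo := by omega
        subst this; exact h
      · rw [if_neg h1] at h
        rw [Bool.and_eq_true] at h
        rcases Nat.lt_or_ge k ((lo+hi)/2) with h'|h'
        · exact ih lo ((lo+hi)/2) h.1 k hk1 h'
        · exact ih ((lo+hi)/2) hi h.2 k h' hk2

theorem table_all : allB 20 2 10748 = true := by rfl

theorem table_ok : ∀ k, 2 ≤ k → k < 10748 → chkB k = true :=
  fun k h1 h2 => allB_spec 20 2 10748 table_all k h1 h2

theorem aval_one : aval 1 = 0 := by rfl

theorem div_step {a b s : ℕ} (hs : 1 ≤ s) (h : 100000000 + s * a ≤ s * b) :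
    (a:ℝ)/100000000 + 1/(s:ℝ) ≤ (b:ℝ)/100000000 := by
  have hs' : (0:ℝ) < s := by exact_mod_cast hs
  have h' : (100000000:ℝ) + s*a ≤ s*b := by exact_mod_cast h
  rw [div_add_div _ _ (by norm_num) (ne_of_gt hs'), div_le_div_iff₀ (by positivity) (by norm_num)]
  nlinarith [mul_le_mul_of_nonneg_right h' (by norm_num : (0:ℝ) ≤ 100000000)]

theorem inv_mono2 {x y : ℝ} (hx : 0 < x) (hxy : x ≤ y) : 2/y + 1/y^2 ≤ 2/x + 1/x^2 := by
  have hy : 0 < y := hx.trans_le hxy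
  exact add_le_add (by gcongr) (by gcongr)

theorem tail2 {x : ℝ} (hx : 3 ≤ x) : 2/(2*x-1) + 1/(2*x-1)^2 ≤ 1/x + 1/x^2 := by
  have h1 : (0:ℝ) < x := by linarith
  have h2 : (0:ℝ) < 2*x-1 := by linarith
  rw [div_add_div _ _ (by positivity) (by positivity), div_add_div _ _ (by positivity) (by positivity),
    div_le_div_iff₀ (by positivity) (by positivity)]
  nlinarith [mul_nonneg (mul_nonneg (by linarith : (0:ℝ) ≤ x - 3) h1.le) h1.le,
    mul_nonneg (by linarith : (0:ℝ) ≤ x - 3) h1.le, sq_nonneg x, sq_nonneg (x-1)]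

theorem cond_real {a k : ℕ} (hk : 1 ≤ k)
    (h : a * (k*(2*k-1)*(2*k-1)) + 100000000*((2*k-1)*(2*k-1) + 2*k*(2*k-1) + k)
      ≤ 200050000 * (k*(2*k-1)*(2*k-1))) :
    (a:ℝ)/100000000 + 1/(k:ℝ) ≤ 2.0005 - 2/(2*(k:ℝ)-1) - 1/(2*(k:ℝ)-1)^2 := by
  have hx : (1:ℝ) ≤ (k:ℝ) := by exact_mod_cast hk
  have hl : ((2*k-1 : ℕ) : ℝ) = 2*(k:ℝ) - 1 := by
    push_cast [Nat.cast_sub (by omega : 1 ≤ 2*k)]; ring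
  have h' : (a:ℝ) * ((k:ℝ)*(2*(k:ℝ)-1)*(2*(k:ℝ)-1))
      + 100000000*((2*(k:ℝ)-1)*(2*(k:ℝ)-1) + 2*(k:ℝ)*(2*(k:ℝ)-1) + (k:ℝ))
      ≤ 200050000 * ((k:ℝ)*(2*(k:ℝ)-1)*(2*(k:ℝ)-1)) := by
    have := (Nat.cast_le (α := ℝ)).2 h
    push_cast at this
    rw [hl] at this; exact this
  have hkpos : (0:ℝ) < (k:ℝ) := by linarith
  have hlpos : (0:ℝ) < 2*(k:ℝ)-1 := by linarith
  have hP : (0:ℝ) < 100000000 * (k:ℝ) * (2*(k:ℝ)-1)^2 := by positivity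
  rw [← sub_nonneg]
  have expand : (2.0005 - 2/(2*(k:ℝ)-1) - 1/(2*(k:ℝ)-1)^2) - ((a:ℝ)/100000000 + 1/(k:ℝ))
      = (200050000 * ((k:ℝ)*(2*(k:ℝ)-1)*(2*(k:ℝ)-1))
         - ((a:ℝ) * ((k:ℝ)*(2*(k:ℝ)-1)*(2*(k:ℝ)-1))
            + 100000000*((2*(k:ℝ)-1)*(2*(k:ℝ)-1) + 2*(k:ℝ)*(2*(k:ℝ)-1) + (k:ℝ))))
        / (100000000 * (k:ℝ) * (2*(k:ℝ)-1)^2) := by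
    field_simp
    ring
  rw [expand]
  apply div_nonneg _ hP.le
  linarith

-- === glue ===

theorem chk' (k : ℕ) (h1 : 2 ≤ k) (h2 : k < 10748) :
    (100000000 + sval k * aval (sval k) ≤ sval k * aval k) ∧
    (100000000 + (k - sval k) * aval (k - sval k) ≤ (k - sval k) * aval k) ∧
    aval k ≤ 200050000 ∧
    (5374 ≤ k → aval k * (k*(2*k-1)*(2*k-1)) + 100000000*((2*k-1)*(2*k-1) + 2*k*(2*k-1) + k)
      ≤ 200050000 * (k*(2*k-1)*(2*k-1))) := by
  have h := table_ok k h1 h2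
  simp only [chkB, Bool.and_eq_true, Bool.or_eq_true, Nat.ble_eq, Nat.blt_eq] at h
  refine ⟨h.1.1.1, h.1.1.2, h.1.2, fun h5 => ?_⟩
  rcases h.2 with h'|h'
  · omega
  · exact h'

noncomputable def u (c : ℕ) : ℝ :=
  if c < 10748 then (aval c : ℝ)/100000000 else 2.0005 - 2/(c:ℝ) - 1/(c:ℝ)^2

def spl (c : ℕ) : ℕ := if c < 10748 then sval c else c/2

theorem spl_bounds (c : ℕ) (h2 : 2 ≤ c) : 1 ≤ spl c ∧ spl c < c := by
  by_cases h : c < 10748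
  · obtain ⟨ha, hb, -, -⟩ := chk' c h2 h
    have hs0 : sval c ≠ 0 := by
      intro h0; rw [h0] at ha; simp at ha
    have ht0 : c - sval c ≠ 0 := by
      intro h0; rw [h0] at hb; simp at hb
    simp only [spl, if_pos h]
    omega
  · simp only [spl, if_neg h]
    omega

theorem branch_le {c k : ℕ} (hc : 10748 ≤ c) (hk5 : 5374 ≤ k) (hlow : 2*k ≤ c + 1) :
    u k + 1/(k:ℝ) ≤ u c := by
  have hkx : (3:ℝ) ≤ (k:ℝ) := by exact_mod_cast (by omega : 3 ≤ k)
  have hl : (0:ℝ) < 2*(k:ℝ)-1 := by linarith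
  have hlc : 2*(k:ℝ)-1 ≤ (c:ℝ) := by
    have h2k : ((2*k : ℕ):ℝ) ≤ ((c:ℕ):ℝ)+1 := by exact_mod_cast hlow
    push_cast at h2k; linarith
  have hQ : u k + 1/(k:ℝ) ≤ 2.0005 - 2/(2*(k:ℝ)-1) - 1/(2*(k:ℝ)-1)^2 := by
    by_cases hk : k < 10748
    · have hcond := (chk' k (by omega) hk).2.2.2 hk5
      simp only [u]
      rw [if_pos hk]
      exact cond_real (by omega) hcond
    · simp only [u]
      rw [if_neg hk]
      have ht := tail2 hkx
      have e1 : 2/(k:ℝ) = 2*(1/(k:ℝ)) := by ring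
      have e2 : 2/(2*(k:ℝ)-1) = 2*(1/(2*(k:ℝ)-1)) := by ring
      linarith
  have hm := inv_mono2 hl hlc
  simp only [u] at hQ ⊢
  rw [if_neg (by omega : ¬ c < 10748)]
  linarith

theorem u_rec (c : ℕ) (h2 : 2 ≤ c) :
    (u (spl c) + 1/((spl c : ℕ):ℝ) ≤ u c) ∧
    (u (c - spl c) + 1/(((c - spl c : ℕ)):ℝ) ≤ u c) := by
  obtain ⟨hs1, hs2⟩ := spl_bounds c h2
  by_cases h : c < 10748
  · obtain ⟨ha, hb, -, -⟩ := chk' c h2 h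
    have hsv : spl c = sval c := by simp [spl, h]
    rw [hsv] at hs1 hs2 ⊢
    constructor
    · simp only [u]
      rw [if_pos h, if_pos (by omega : sval c < 10748)]
      exact div_step hs1 ha
    · simp only [u]
      rw [if_pos h, if_pos (by omega : c - sval c < 10748)]
      exact div_step (by omega) hb
  · have hsv : spl c = c/2 := by simp [spl, h]
    rw [hsv]
    constructor
    · exact branch_le (by omega) (by omega) (by omega)
    · exact branch_le (by omega) (by omega) (by omega)

theorem u_le (c : ℕ) (h1 : 1 ≤ c) : u c ≤ 2.0005 := by
  by_cases h : c < 10748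
  · simp only [u]
    rw [if_pos h]
    rcases Nat.lt_or_ge c 2 with h2|h2
    · have hc1 : c = 1 := by omega
      subst hc1
      rw [aval_one]; norm_num
    · have hle := (chk' c h2 h).2.2.1
      rw [div_le_iff₀ (by norm_num)]
      calc (aval c : ℝ) ≤ 200050000 := by exact_mod_cast hle
        _ = 2.0005 * 100000000 := by norm_num
  · simp only [u]
    rw [if_neg h]
    have hc : (0:ℝ) < (c:ℝ) := by exact_mod_cast h1
    have g1 : (0:ℝ) ≤ 2/(c:ℝ) := by positivity
    have g2 : (0:ℝ) ≤ 1/(c:ℝ)^2 := by positivity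
    linarith

theorem u_one : u 1 = 0 := by
  simp only [u]
  rw [if_pos (by norm_num), aval_one]
  norm_num

section Basic

variable {ι κ : Type*} [Fintype ι] [Fintype κ]

theorem dA_nonneg [Nonempty ι] (A : ι → κ → ℝ) (p q : κ → ℝ) : 0 ≤ dA A p q :=
  le_ciSup_of_le (Finite.bddAbove_range _) (Classical.arbitrary ι) (abs_nonneg _)

theorem wdisc_nonneg [Nonempty ι] (A : ι → κ → ℝ) (z : ℝ) : 0 ≤ wdisc A z :=
  le_ciInf fun _ => dA_nonneg A _ _

theorem wdisc_le_bound [Nonempty ι] (A : ι → κ → ℝ) (z : ℝ)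
    (h0 : 0 ≤ z) (h1 : z ≤ 1) : wdisc A z ≤ ∑ i, ∑ j, |A i j| := by
  refine ciInf_le_of_le (Finite.bddBelow_range _) (fun _ => false) ?_
  refine ciSup_le fun i => ?_
  have hz : |z - if (false : Bool) = true then (1:ℝ) else 0| ≤ 1 := by
    simp only [Bool.false_eq_true, if_false, sub_zero]
    rw [abs_of_nonneg h0]; exact h1
  calc |∑ j, A i j * (z - if (false : Bool) = true then (1:ℝ) else 0)|
      ≤ ∑ j, |A i j * (z - if (false : Bool) = true then (1:ℝ) else 0)| :=
        Finset.abs_sum_le_sum_abs _ _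
    _ ≤ ∑ j, |A i j| := Finset.sum_le_sum fun j _ => by
        rw [abs_mul]
        nlinarith [abs_nonneg (A i j)]
    _ ≤ ∑ i, ∑ j, |A i j| :=
        Finset.single_le_sum (f := fun i => ∑ j, |A i j|)
          (fun i _ => Finset.sum_nonneg fun j _ => abs_nonneg _) (mem_univ i)

theorem wdisc_le_wdisc2 [Nonempty ι] (A : ι → κ → ℝ) (z : ℝ)
    (h0 : 0 ≤ z) (h1 : z ≤ 1) : wdisc A z ≤ wdisc2 A := by
  have hb : BddAbove (Set.range fun z : Set.Icc (0:ℝ) 1 => wdisc A z) := by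
    refine ⟨∑ i, ∑ j, |A i j|, ?_⟩
    rintro x ⟨z', rfl⟩
    exact wdisc_le_bound A z' z'.2.1 z'.2.2
  exact le_ciSup hb ⟨z, h0, h1⟩

theorem wdisc2_nonneg [Nonempty ι] (A : ι → κ → ℝ) : 0 ≤ wdisc2 A :=
  le_trans (wdisc_nonneg A 0) (wdisc_le_wdisc2 A 0 le_rfl zero_le_one)

end Basic

section Main

variable {m n : ℕ} (A : Fin m → Fin n → ℝ)

theorem sub_le_mherwdisc2 (hm : 0 < m) (J : Finset (Fin n)) (hJ : J.Nonempty) :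
    wdisc2 (fun i (j : {x // x ∈ J}) => A i j.1) ≤ mherwdisc2 A :=
  le_ciSup (f := fun J : {J : Finset (Fin n) // J.Nonempty} =>
    wdisc2 (fun i (j : {x // x ∈ J.1}) => A i j.1))
    (Finite.bddAbove_range _) (⟨J, hJ⟩ : {J : Finset (Fin n) // J.Nonempty})

theorem mherwdisc2_nonneg (hm : 0 < m) (hn : 0 < n) : 0 ≤ mherwdisc2 A := by
  have hι : Nonempty (Fin m) := ⟨⟨0, hm⟩⟩
  exact le_trans (wdisc2_nonneg _) (sub_le_mherwdisc2 A hm {⟨0, hn⟩} (singleton_nonempty _))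

theorem exists_split (hm : 0 < m) (hn : 0 < n) (J : Finset (Fin n)) (z : ℝ)
    (h0 : 0 ≤ z) (h1 : z ≤ 1) :
    ∃ T, T ⊆ J ∧ ∀ i, |∑ j ∈ T, A i j - z * ∑ j ∈ J, A i j| ≤ mherwdisc2 A := by
  classical
  have hι : Nonempty (Fin m) := ⟨⟨0, hm⟩⟩
  rcases J.eq_empty_or_nonempty with rfl | hJ
  · exact ⟨∅, Finset.Subset.refl _, fun i => by simpa using mherwdisc2_nonneg A hm hn⟩
  · set B : Fin m → {x // x ∈ J} → ℝ := fun i j => A i j.1 with hB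
    have h2 : wdisc B z ≤ mherwdisc2 A :=
      (wdisc_le_wdisc2 B z h0 h1).trans (sub_le_mherwdisc2 A hm J hJ)
    obtain ⟨q, hq⟩ := Finite.exists_min
      (fun q : {x // x ∈ J} → Bool => dA B (fun _ => z) (fun j => if q j then 1 else 0))
    have h3 : dA B (fun _ => z) (fun j => if q j then 1 else 0) ≤ mherwdisc2 A :=
      (le_ciInf hq).trans h2
    refine ⟨J.filter (fun j => ∃ h : j ∈ J, q ⟨j, h⟩ = true), Finset.filter_subset _ _, fun i => ?_⟩
    have h4 : |∑ j : {x // x ∈ J}, B i j * (z - if q j then 1 else 0)| ≤ mherwdisc2 A :=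
      le_trans (le_ciSup (f := fun i => |∑ j : {x // x ∈ J}, B i j * (z - if q j then 1 else 0)|)
        (Finite.bddAbove_range _) i) h3
    have h5 : ∑ j : {x // x ∈ J}, B i j * (z - if q j then 1 else 0)
        = z * ∑ j ∈ J, A i j
          - ∑ j ∈ J.filter (fun j => ∃ h : j ∈ J, q ⟨j, h⟩ = true), A i j := by
      simp only [mul_sub]
      rw [Finset.sum_sub_distrib]
      congr 1
      · rw [← Finset.sum_coe_sort J (A i), Finset.mul_sum]
        exact Finset.sum_congr rfl fun j _ => mul_comm _ _
      · rw [Finset.sum_filter,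
          ← Finset.sum_coe_sort J (fun x => if ∃ h : x ∈ J, q ⟨x, h⟩ = true then A i x else 0)]
        refine Finset.sum_congr rfl fun j _ => ?_
        by_cases hqj : q j = true
        · rw [if_pos hqj, mul_one, if_pos ⟨j.2, hqj⟩]
        · rw [if_neg hqj, mul_zero, if_neg]
          rintro ⟨h, hh⟩
          exact hqj hh
    rw [h5] at h4
    rw [abs_sub_comm]
    exact h4

theorem exists_coloring (hm : 0 < m) (hn : 0 < n) :
    ∀ c : ℕ, 1 ≤ c → ∀ J : Finset (Fin n),
    ∃ p : Fin n → Fin c, ∀ (d : Fin c) (i : Fin m),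
      |∑ j ∈ J.filter (fun j => p j = d), A i j - (1/(c:ℝ)) * ∑ j ∈ J, A i j|
        ≤ u c * mherwdisc2 A := by
  intro c
  induction c using Nat.strong_induction_on with
  | _ c IH =>
    intro hc J
    rcases eq_or_lt_of_le hc with hc1 | hc2
    · -- c = 1
      refine ⟨fun _ => ⟨0, by omega⟩, fun d i => ?_⟩
      have hd : (⟨0, by omega⟩ : Fin c) = d := by
        apply Fin.ext
        have := d.2
        omega
      have hfil : J.filter (fun j => (⟨0, by omega⟩ : Fin c) = d) = J :=
        Finset.filter_true_of_mem fun j hj => hd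
      rw [hfil, ← hc1, u_one]
      norm_num
    · -- 2 ≤ c
      have h2 : 2 ≤ c := hc2
      obtain ⟨hs1, hs2⟩ := spl_bounds c h2
      set s := spl c with hsdef
      set t := c - s with htdef
      have hst : s + t = c := by omega
      have ht1 : 1 ≤ t := by omega
      have htc : t < c := by omega
      have hcR : (0:ℝ) < (c:ℝ) := by exact_mod_cast (show 0 < c by omega)
      have hsR : (0:ℝ) < (s:ℝ) := by exact_mod_cast hs1
      have htR : (0:ℝ) < (t:ℝ) := by exact_mod_cast ht1
      have hts : (t:ℝ) = (c:ℝ) - (s:ℝ) := by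
        have : ((s:ℕ):ℝ) + ((t:ℕ):ℝ) = ((c:ℕ):ℝ) := by exact_mod_cast congrArg (Nat.cast : ℕ → ℝ) hst
        linarith
      obtain ⟨T, hTJ, hT⟩ := exists_split A hm hn J ((s:ℝ)/(c:ℝ)) (by positivity)
        (by rw [div_le_one hcR]; exact_mod_cast le_of_lt hs2)
      obtain ⟨p₁, hp₁⟩ := IH s hs2 hs1 T
      obtain ⟨p₂, hp₂⟩ := IH t htc ht1 (J \ T)
      obtain ⟨hu1, hu2⟩ := u_rec c h2
      have hD := mherwdisc2_nonneg A hm hn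
      refine ⟨fun j => if j ∈ T then (⟨(p₁ j).1, by have := (p₁ j).2; omega⟩ : Fin c)
        else (⟨s + (p₂ j).1, by have := (p₂ j).2; omega⟩ : Fin c), fun d i => ?_⟩
      by_cases hd : d.1 < s
      · have hfil : J.filter (fun j => (if j ∈ T then (⟨(p₁ j).1, by have := (p₁ j).2; omega⟩ : Fin c)
            else (⟨s + (p₂ j).1, by have := (p₂ j).2; omega⟩ : Fin c)) = d)
            = T.filter (fun j => p₁ j = ⟨d.1, hd⟩) := by
          ext j
          simp only [Finset.mem_filter]
          constructor
          · rintro ⟨hjJ, hpj⟩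
            by_cases hjT : j ∈ T
            · refine ⟨hjT, ?_⟩
              rw [if_pos hjT] at hpj
              have hv := congrArg Fin.val hpj
              exact Fin.ext hv
            · rw [if_neg hjT] at hpj
              have hv := congrArg Fin.val hpj
              simp only at hv
              omega
          · rintro ⟨hjT, hpj⟩
            refine ⟨hTJ hjT, ?_⟩
            rw [if_pos hjT]
            apply Fin.ext
            have hv := congrArg Fin.val hpj
            simpa using hv
        rw [hfil]
        have e1 := hp₁ ⟨d.1, hd⟩ i
        have e2 := hT i
        have expand : ∑ j ∈ T.filter (fun j => p₁ j = ⟨d.1, hd⟩), A i j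
              - (1/(c:ℝ)) * ∑ j ∈ J, A i j
            = (∑ j ∈ T.filter (fun j => p₁ j = ⟨d.1, hd⟩), A i j - (1/(s:ℝ)) * ∑ j ∈ T, A i j)
              + (1/(s:ℝ)) * (∑ j ∈ T, A i j - ((s:ℝ)/(c:ℝ)) * ∑ j ∈ J, A i j) := by
          field_simp
          ring
        rw [expand]
        calc |(∑ j ∈ T.filter (fun j => p₁ j = ⟨d.1, hd⟩), A i j - (1/(s:ℝ)) * ∑ j ∈ T, A i j)
              + (1/(s:ℝ)) * (∑ j ∈ T, A i j - ((s:ℝ)/(c:ℝ)) * ∑ j ∈ J, A i j)|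
            ≤ |∑ j ∈ T.filter (fun j => p₁ j = ⟨d.1, hd⟩), A i j - (1/(s:ℝ)) * ∑ j ∈ T, A i j|
              + |(1/(s:ℝ)) * (∑ j ∈ T, A i j - ((s:ℝ)/(c:ℝ)) * ∑ j ∈ J, A i j)| := abs_add_le _ _
          _ ≤ u s * mherwdisc2 A + (1/(s:ℝ)) * mherwdisc2 A := by
              refine add_le_add e1 ?_
              rw [abs_mul, abs_of_pos (show (0:ℝ) < 1/(s:ℝ) by positivity)]
              exact mul_le_mul_of_nonneg_left e2 (by positivity)
          _ = (u s + 1/(s:ℝ)) * mherwdisc2 A := by ring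
          _ ≤ u c * mherwdisc2 A := mul_le_mul_of_nonneg_right hu1 hD
      · have hd' : s ≤ d.1 := by omega
        have hdc : d.1 < c := d.2
        have hfil : J.filter (fun j => (if j ∈ T then (⟨(p₁ j).1, by have := (p₁ j).2; omega⟩ : Fin c)
            else (⟨s + (p₂ j).1, by have := (p₂ j).2; omega⟩ : Fin c)) = d)
            = (J \ T).filter (fun j => p₂ j = ⟨d.1 - s, by omega⟩) := by
          ext j
          simp only [Finset.mem_filter, Finset.mem_sdiff]
          constructor
          · rintro ⟨hjJ, hpj⟩
            by_cases hjT : j ∈ T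
            · rw [if_pos hjT] at hpj
              have hv := congrArg Fin.val hpj
              simp only at hv
              have := (p₁ j).2
              omega
            · refine ⟨⟨hjJ, hjT⟩, ?_⟩
              rw [if_neg hjT] at hpj
              have hv := congrArg Fin.val hpj
              simp only at hv
              apply Fin.ext
              simp only
              omega
          · rintro ⟨⟨hjJ, hjT⟩, hpj⟩
            refine ⟨hjJ, ?_⟩
            rw [if_neg hjT]
            apply Fin.ext
            have hv := congrArg Fin.val hpj
            simp only at hv ⊢
            omega
        rw [hfil]
        have e1 := hp₂ ⟨d.1 - s, by omega⟩ i
        have e2' : |∑ j ∈ J \ T, A i j - ((t:ℝ)/(c:ℝ)) * ∑ j ∈ J, A i j| ≤ mherwdisc2 A := by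
          rw [Finset.sum_sdiff_eq_sub hTJ]
          have hrw : ∑ j ∈ J, A i j - ∑ j ∈ T, A i j - ((t:ℝ)/(c:ℝ)) * ∑ j ∈ J, A i j
              = -(∑ j ∈ T, A i j - ((s:ℝ)/(c:ℝ)) * ∑ j ∈ J, A i j) := by
            rw [hts]
            field_simp
            ring
          rw [hrw, abs_neg]
          exact hT i
        have expand : ∑ j ∈ (J \ T).filter (fun j => p₂ j = ⟨d.1 - s, by omega⟩), A i j
              - (1/(c:ℝ)) * ∑ j ∈ J, A i j
            = (∑ j ∈ (J \ T).filter (fun j => p₂ j = ⟨d.1 - s, by omega⟩), A i j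
                - (1/(t:ℝ)) * ∑ j ∈ J \ T, A i j)
              + (1/(t:ℝ)) * (∑ j ∈ J \ T, A i j - ((t:ℝ)/(c:ℝ)) * ∑ j ∈ J, A i j) := by
          field_simp
          ring
        rw [expand]
        calc |(∑ j ∈ (J \ T).filter (fun j => p₂ j = ⟨d.1 - s, by omega⟩), A i j
                - (1/(t:ℝ)) * ∑ j ∈ J \ T, A i j)
              + (1/(t:ℝ)) * (∑ j ∈ J \ T, A i j - ((t:ℝ)/(c:ℝ)) * ∑ j ∈ J, A i j)|
            ≤ |∑ j ∈ (J \ T).filter (fun j => p₂ j = ⟨d.1 - s, by omega⟩), A i j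
                - (1/(t:ℝ)) * ∑ j ∈ J \ T, A i j|
              + |(1/(t:ℝ)) * (∑ j ∈ J \ T, A i j - ((t:ℝ)/(c:ℝ)) * ∑ j ∈ J, A i j)| := abs_add_le _ _
          _ ≤ u t * mherwdisc2 A + (1/(t:ℝ)) * mherwdisc2 A := by
              refine add_le_add e1 ?_
              rw [abs_mul, abs_of_pos (show (0:ℝ) < 1/(t:ℝ) by positivity)]
              exact mul_le_mul_of_nonneg_left e2' (by positivity)
          _ = (u t + 1/(t:ℝ)) * mherwdisc2 A := by ring
          _ ≤ u c * mherwdisc2 A := mul_le_mul_of_nonneg_right hu2 hD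

theorem mdisc_le_of (hm : 0 < m) (hn : 0 < n) (c : ℕ) (hc : 1 ≤ c) (J : Finset (Fin n)) :
    mdisc (fun i (j : {x // x ∈ J}) => A i j.1) c ≤ u c * mherwdisc2 A := by
  classical
  obtain ⟨p, hp⟩ := exists_coloring A hm hn c hc J
  have hFc : Nonempty (Fin c) := ⟨⟨0, hc⟩⟩
  have hFm : Nonempty (Fin m) := ⟨⟨0, hm⟩⟩
  refine ciInf_le_of_le (Finite.bddBelow_range _) (fun j => p j.1) ?_
  refine ciSup_le fun d => ciSup_le fun i => ?_
  have h1 : ∑ j : {x // x ∈ J}, A i j.1 = ∑ j ∈ J, A i j := Finset.sum_coe_sort J (A i)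
  have h2 : ∑ j ∈ univ.filter (fun j : {x // x ∈ J} => p j.1 = d), A i j.1
      = ∑ j ∈ J.filter (fun j => p j = d), A i j := by
    rw [Finset.sum_filter, Finset.sum_filter]
    exact Finset.sum_coe_sort J (fun x => if p x = d then A i x else 0)
  rw [h1, h2]
  exact hp d i

end Main

end HerdiscAux

/-- For every real m×n matrix A and every integer c ≥ 2,
herdisc(A, c) ≤ 2.0005 · herwdisc(A, 2). -/
theorem herdisc_le_const_mul_herwdisc {m n : ℕ} (hm : 0 < m) (hn : 0 < n)
    (A : Fin m → Fin n → ℝ) (c : ℕ) (hc : 2 ≤ c) :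
    mherdisc A c ≤ 2.0005 * mherwdisc2 A := by
  have hD := HerdiscAux.mherwdisc2_nonneg A hm hn
  have hne : Nonempty {J : Finset (Fin n) // J.Nonempty} :=
    ⟨⟨{⟨0, hn⟩}, Finset.singleton_nonempty _⟩⟩
  refine ciSup_le fun J => ?_
  calc mdisc (fun i (j : {x // x ∈ J.1}) => A i j.1) c
      ≤ HerdiscAux.u c * mherwdisc2 A := HerdiscAux.mdisc_le_of A hm hn c (by omega) J.1
    _ ≤ 2.0005 * mherwdisc2 A :=
        mul_le_mul_of_nonneg_right (HerdiscAux.u_le c (by omega)) hD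
end

section
/- For every finite hypergraph H and all integers a, b ≥ 2, herdisc(H, b) ≤ a²·(b − 1) · herdisc(H, a). -/
open Finset

/-- `c`-color discrepancy of the subhypergraph of `(V, E)` induced on `V₀`:
minimum over colorings of the maximum over colors `d` and edges `e` of
`||χ⁻¹(d) ∩ e ∩ V₀| - |e ∩ V₀|/c|`. -/
noncomputable def hdiscSub {V : Type*} [Fintype V] [DecidableEq V]
    (E : Finset (Finset V)) (c : ℕ) (V₀ : Finset V) : ℝ :=
  ⨅ χ : V → Fin c, ⨆ d : Fin c, ⨆ e : E,
    |(((e.1 ∩ V₀).filter (fun v => χ v = d)).card : ℝ) - ((e.1 ∩ V₀).card : ℝ) / c|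

/-- `c`-color discrepancy of the hypergraph `(V, E)`. -/
noncomputable def hdisc {V : Type*} [Fintype V] [DecidableEq V]
    (E : Finset (Finset V)) (c : ℕ) : ℝ := hdiscSub E c Finset.univ

/-- hereditary `c`-color discrepancy: maximum over all induced subhypergraphs. -/
noncomputable def hherdisc {V : Type*} [Fintype V] [DecidableEq V]
    (E : Finset (Finset V)) (c : ℕ) : ℝ := ⨆ V₀ : Finset V, hdiscSub E c V₀

/-!
Let `D = herdisc(H, a)`. The union of the first `c` colour classes of a good `a`-colouring of
`S ⊆ V` meets every edge in a `c/a` fraction of `e ∩ S`, up to `c D`. Applying this to the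
residue classes mod `a` of an integer weight `x` rounds `x / a` to an integer with error
`a² (a - 1) D` per edge; `L` such rounding steps turn any `x ≤ a^L` into a `{0, a^L}`-valued
weight with error `a² (a^L - 1) D`. Rounding `⌊a^L / n⌋ · 1_W` gives `C ⊆ W` meeting every edge
in a `1/n` fraction of `e ∩ W` up to `a² D + |V| / a^L`; peeling off such sets for
`n = b, b - 1, …, 2` yields a `b`-colouring of discrepancy `(b - 1)(a² D + |V| / a^L)`, and
`L → ∞` finishes the proof.
-/

open Filter Topology

section

variable {V : Type*} [DecidableEq V] {E : Finset (Finset V)} {a c : ℕ} {D : ℝ}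

-- `hdiscSub E c V₀` unfolds to `⨅ χ, coloringDisc E c V₀ χ`.
noncomputable def coloringDisc (E : Finset (Finset V)) (c : ℕ) (V₀ : Finset V) (χ : V → Fin c) :
    ℝ :=
  ⨆ d : Fin c, ⨆ e : E, |(#{v ∈ e.1 ∩ V₀ | χ v = d} : ℝ) - #(e.1 ∩ V₀) / c|

lemma coloringDisc_nonneg (V₀ : Finset V) (χ : V → Fin c) : 0 ≤ coloringDisc E c V₀ χ :=
  Real.iSup_nonneg fun _ => Real.iSup_nonneg fun _ => abs_nonneg _

lemma coloringDisc_le_iff (hD : 0 ≤ D) (V₀ : Finset V) (χ : V → Fin c) :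
    coloringDisc E c V₀ χ ≤ D ↔
      ∀ d, ∀ e ∈ E, |(#{v ∈ e ∩ V₀ | χ v = d} : ℝ) - #(e ∩ V₀) / c| ≤ D := by
  refine ⟨fun h d e he => le_trans ?_ h, fun h =>
    Real.iSup_le (fun d => Real.iSup_le (fun e => h d e.1 e.2) hD) hD⟩
  refine le_trans ?_ (le_ciSup (Set.finite_range _).bddAbove d)
  exact le_ciSup (f := fun e : E => |(#{v ∈ e.1 ∩ V₀ | χ v = d} : ℝ) - #(e.1 ∩ V₀) / c|)
    (Set.finite_range _).bddAbove ⟨e, he⟩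

lemma hherdisc_nonneg [Fintype V] (E : Finset (Finset V)) (c : ℕ) : 0 ≤ hherdisc E c :=
  Real.iSup_nonneg fun _ => Real.iInf_nonneg fun _ => coloringDisc_nonneg _ _

def HerdiscLE (E : Finset (Finset V)) (c : ℕ) (D : ℝ) : Prop :=
  ∀ S : Finset V, ∃ χ : V → Fin c, ∀ d, ∀ e ∈ E, |(#{v ∈ e ∩ S | χ v = d} : ℝ) - #(e ∩ S) / c| ≤ D

lemma herdiscLE_hherdisc [Fintype V] (hc : 0 < c) : HerdiscLE E c (hherdisc E c) := by
  intro S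
  have : Nonempty (Fin c) := ⟨⟨0, hc⟩⟩
  obtain ⟨χ, hχ⟩ := Finite.exists_min (coloringDisc E c S)
  refine ⟨χ, (coloringDisc_le_iff (hherdisc_nonneg E c) S χ).1 ?_⟩
  calc coloringDisc E c S χ ≤ hdiscSub E c S := le_ciInf hχ
    _ ≤ hherdisc E c := le_ciSup (Set.finite_range _).bddAbove S

lemma hherdisc_le_of_herdiscLE [Fintype V] (hD : 0 ≤ D) (h : HerdiscLE E c D) :
    hherdisc E c ≤ D := by
  refine ciSup_le fun S => ?_
  obtain ⟨χ, hχ⟩ := h S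
  calc hdiscSub E c S ≤ coloringDisc E c S χ :=
        ciInf_le ⟨0, Set.forall_mem_range.2 fun _ => coloringDisc_nonneg _ _⟩ χ
    _ ≤ D := (coloringDisc_le_iff hD S χ).2 hχ

namespace HerdiscLE

lemma exists_card_lt_approx (h : HerdiscLE E a D) (S : Finset V) (c : Fin a) :
    ∃ χ : V → Fin a, ∀ e ∈ E,
      |(#{v ∈ e ∩ S | χ v < c} : ℝ) - c * #(e ∩ S) / a| ≤ c * D := by
  obtain ⟨χ, hχ⟩ := h S
  refine ⟨χ, fun e he => ?_⟩
  have hsplit : #{v ∈ e ∩ S | χ v < c} = ∑ d ∈ Iio c, #{v ∈ e ∩ S | χ v = d} := by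
    rw [card_eq_sum_card_fiberwise (f := χ) (t := Iio c)
      fun v hv => by simpa using (mem_filter.1 hv).2]
    refine sum_congr rfl fun d hd => congrArg card ?_
    ext v
    simp only [mem_filter, and_assoc, and_congr_right_iff, and_iff_right_iff_imp]
    rintro - rfl
    simpa using hd
  calc |(#{v ∈ e ∩ S | χ v < c} : ℝ) - c * #(e ∩ S) / a|
      = |∑ d ∈ Iio c, ((#{v ∈ e ∩ S | χ v = d} : ℝ) - #(e ∩ S) / a)| := by
        rw [hsplit, sum_sub_distrib, sum_const, Fin.card_Iio, nsmul_eq_mul, mul_div_assoc]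
        push_cast; rfl
    _ ≤ ∑ d ∈ Iio c, |(#{v ∈ e ∩ S | χ v = d} : ℝ) - #(e ∩ S) / a| := abs_sum_le_sum_abs _ _
    _ ≤ ∑ _d ∈ Iio c, D := sum_le_sum fun d _ => hχ d e he
    _ = c * D := by rw [sum_const, Fin.card_Iio, nsmul_eq_mul]

lemma exists_round_step [Fintype V] (h : HerdiscLE E a D) (hD : 0 ≤ D) (ha : 0 < a)
    (x : V → ℕ) : ∃ y : V → ℕ, (∀ v, a * y v < x v + a) ∧
      ∀ e ∈ E, |∑ v ∈ e, ((a * y v : ℝ) - x v)| ≤ a ^ 2 * (a - 1) * D := by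
  set r : V → Fin a := fun v => ⟨x v % a, Nat.mod_lt _ ha⟩
  set S : Fin a → Finset V := fun c => {v | r v = c}
  -- `v` is rounded up iff the good colouring of its residue class gives it one of the first
  -- `r v` colours, so each residue class is rounded up in proportion `r / a`.
  choose χ hχ using fun c : Fin a => h.exists_card_lt_approx (S c) c
  refine ⟨fun v => x v / a + if χ (r v) v < r v then 1 else 0, fun v => ?_, fun e he => ?_⟩
  · have hx := Nat.div_add_mod (x v) a
    beta_reduce
    split_ifs with hup
    · have : 0 < x v % a := lt_of_le_of_lt (Nat.zero_le _) (Fin.lt_def.1 hup)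
      rw [mul_add]; omega
    · rw [add_zero]; omega
  have ha' : (0 : ℝ) < a := by exact_mod_cast ha
  have hvertex : ∀ v, (a * (x v / a + if χ (r v) v < r v then 1 else 0 : ℕ) : ℝ) - x v
      = a * (if χ (r v) v < r v then 1 else 0 : ℝ) - (r v : ℕ) := by
    intro v
    have hx : ((a * (x v / a) + x v % a : ℕ) : ℝ) = x v := by rw [Nat.div_add_mod]
    push_cast at hx ⊢
    split_ifs <;> simp only [r] <;> linarith
  have hclass : ∀ c : Fin a, |∑ v ∈ e with r v = c,
      (a * (if χ (r v) v < r v then 1 else 0 : ℝ) - (r v : ℕ))| ≤ a * (a - 1) * D := by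
    intro c
    have hfiber : e.filter (r · = c) = e ∩ S c := by ext; simp [S]
    have hsum : ∑ v ∈ e with r v = c, (a * (if χ (r v) v < r v then 1 else 0 : ℝ) - (r v : ℕ))
        = a * ((#{v ∈ e ∩ S c | χ c v < c} : ℝ) - c * #(e ∩ S c) / a) := by
      rw [sum_congr rfl fun v hv => by rw [(mem_filter.1 hv).2], sum_sub_distrib, ← mul_sum,
        sum_boole, sum_const, nsmul_eq_mul, hfiber]
      field_simp
    calc _ = a * |(#{v ∈ e ∩ S c | χ c v < c} : ℝ) - c * #(e ∩ S c) / a| := by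
          rw [hsum, abs_mul, abs_of_pos ha']
      _ ≤ a * ((a - 1) * D) := by
          gcongr
          refine (hχ c e he).trans (mul_le_mul_of_nonneg_right ?_ hD)
          rw [le_sub_iff_add_le]; exact_mod_cast c.isLt
      _ = a * (a - 1) * D := by ring
  calc |∑ v ∈ e, ((a * (x v / a + if χ (r v) v < r v then 1 else 0 : ℕ) : ℝ) - x v)|
      = |∑ c, ∑ v ∈ e with r v = c,
          (a * (if χ (r v) v < r v then 1 else 0 : ℝ) - (r v : ℕ))| := by
        rw [sum_fiberwise, sum_congr rfl fun v _ => hvertex v]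
    _ ≤ ∑ c : Fin a, |∑ v ∈ e with r v = c,
          (a * (if χ (r v) v < r v then 1 else 0 : ℝ) - (r v : ℕ))| := abs_sum_le_sum_abs _ _
    _ ≤ ∑ _c : Fin a, a * (a - 1) * D := sum_le_sum fun c _ => hclass c
    _ = a ^ 2 * (a - 1) * D := by
        simp only [sum_const, card_univ, Fintype.card_fin, nsmul_eq_mul]; ring

lemma exists_round [Fintype V] (h : HerdiscLE E a D) (hD : 0 ≤ D) (ha : 0 < a) (L : ℕ)
    {x : V → ℕ} (hx : ∀ v, x v ≤ a ^ L) : ∃ C : Finset V, (∀ v ∈ C, x v ≠ 0) ∧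
      ∀ e ∈ E, |(a ^ L * #(e ∩ C) : ℝ) - ∑ v ∈ e, (x v : ℝ)| ≤ a ^ 2 * (a ^ L - 1) * D := by
  induction L generalizing x with
  | zero =>
    refine ⟨({v | x v ≠ 0} : Finset V), fun v hv => (mem_filter.1 hv).2, fun e _ => ?_⟩
    have hx01 : ∀ v, (x v : ℝ) = if x v ≠ 0 then 1 else 0 := fun v => by
      have := hx v; rw [pow_zero] at this
      split_ifs <;> norm_cast <;> omega
    rw [sum_congr rfl fun v _ => hx01 v, sum_boole, ← filter_mem_eq_inter]
    simp
  | succ L ih =>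
    obtain ⟨y, hyx, hy⟩ := h.exists_round_step hD ha x
    have hyL : ∀ v, y v ≤ a ^ L := fun v => by
      have : a * y v < a * (a ^ L + 1) := by
        rw [mul_add, mul_one, ← pow_succ']; linarith [hx v, hyx v]
      exact Nat.lt_succ_iff.1 (Nat.lt_of_mul_lt_mul_left this)
    obtain ⟨C, hCy, hC⟩ := ih hyL
    refine ⟨C, fun v hv hxv => hCy v hv ?_, fun e he => ?_⟩
    · have := hyx v; rw [hxv, zero_add] at this
      exact Nat.lt_one_iff.1 (Nat.lt_of_mul_lt_mul_left (by rwa [mul_one]))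
    have hsplit : (a ^ (L + 1) * #(e ∩ C) : ℝ) - ∑ v ∈ e, (x v : ℝ) =
        a * ((a ^ L * #(e ∩ C) : ℝ) - ∑ v ∈ e, (y v : ℝ)) + ∑ v ∈ e, ((a * y v : ℝ) - x v) := by
      rw [sum_sub_distrib, ← mul_sum, pow_succ]; ring
    have ha' : (0 : ℝ) < a := by exact_mod_cast ha
    calc |(a ^ (L + 1) * #(e ∩ C) : ℝ) - ∑ v ∈ e, (x v : ℝ)|
        ≤ a * |(a ^ L * #(e ∩ C) : ℝ) - ∑ v ∈ e, (y v : ℝ)| + |∑ v ∈ e, ((a * y v : ℝ) - x v)| := by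
          rw [hsplit, ← abs_of_pos ha', ← abs_mul, abs_of_pos ha']; exact abs_add_le _ _
      _ ≤ a * (a ^ 2 * (a ^ L - 1) * D) + a ^ 2 * (a - 1) * D := by
          gcongr
          · exact hC e he
          · exact hy e he
      _ = a ^ 2 * (a ^ (L + 1) - 1) * D := by ring

lemma exists_subset_approx_div [Fintype V] (h : HerdiscLE E a D) (hD : 0 ≤ D) (ha : 0 < a)
    (L : ℕ) (W : Finset V) (n : ℕ) : ∃ C ⊆ W, ∀ e ∈ E,
      |(#(e ∩ C) : ℝ) - #(e ∩ W) / n| ≤ a ^ 2 * D + Fintype.card V / a ^ L := by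
  set t := a ^ L / n
  have ht : (t : ℝ) ≤ a ^ L / n ∧ (a ^ L / n : ℝ) < t + 1 := by
    have hfloor := Nat.floor_div_eq_div (K := ℝ) (a ^ L) n
    push_cast at hfloor
    simp only [t, ← hfloor]
    exact ⟨Nat.floor_le (by positivity), Nat.lt_floor_add_one _⟩
  obtain ⟨C, hCx, hC⟩ := h.exists_round hD ha L (x := fun v => if v ∈ W then t else 0)
    fun v => by split_ifs <;> simp [t, Nat.div_le_self]
  refine ⟨C, fun v hv => by by_contra hvW; exact hCx v hv (if_neg hvW), fun e he => ?_⟩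
  have hsum : ∑ v ∈ e, ((if v ∈ W then t else 0 : ℕ) : ℝ) = t * #(e ∩ W) := by
    push_cast; rw [sum_ite_mem, sum_const, nsmul_eq_mul, mul_comm]
  have hpow : (0 : ℝ) < a ^ L := by positivity
  have hcard : (#(e ∩ W) : ℝ) ≤ Fintype.card V := by exact_mod_cast card_le_univ _
  refine le_of_mul_le_mul_left ?_ hpow
  rw [mul_add, mul_div_cancel₀ _ hpow.ne', ← abs_of_pos hpow, ← abs_mul, abs_of_pos hpow]
  calc |(a ^ L : ℝ) * (#(e ∩ C) - #(e ∩ W) / n)|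
      = |(a ^ L * #(e ∩ C) - t * #(e ∩ W) : ℝ) + (t - a ^ L / n) * #(e ∩ W)| := by ring_nf
    _ ≤ |(a ^ L * #(e ∩ C) - t * #(e ∩ W) : ℝ)| + |(t - a ^ L / n : ℝ)| * #(e ∩ W) := by
        exact (abs_add_le _ _).trans_eq (by rw [abs_mul, Nat.abs_cast])
    _ ≤ a ^ 2 * (a ^ L - 1) * D + 1 * Fintype.card V := by
        gcongr
        · rw [← hsum]; exact hC e he
        · rw [abs_le]; constructor <;> linarith
    _ ≤ a ^ L * (a ^ 2 * D) + Fintype.card V := by nlinarith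

end HerdiscLE

lemma HerdiscLE.add_one {K : ℝ} {m : ℕ} (hK : 0 ≤ K) (h : HerdiscLE E (m + 1) (m * K))
    (hsplit : ∀ W : Finset V, ∃ C ⊆ W, ∀ e ∈ E,
      |(#(e ∩ C) : ℝ) - #(e ∩ W) / (m + 2)| ≤ K) :
    HerdiscLE E (m + 2) ((m + 1) * K) := by
  intro W
  obtain ⟨C, hCW, hC⟩ := hsplit W
  obtain ⟨f, hf⟩ := h (W \ C)
  refine ⟨fun v => if v ∈ C then 0 else (f v).succ, fun d e he => ?_⟩
  have hCe := hC e he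
  push_cast at hf ⊢
  cases d using Fin.cases with
  | zero =>
    have hclass : {v ∈ e ∩ W | (if v ∈ C then 0 else (f v).succ) = (0 : Fin (m + 2))}
        = e ∩ C := by
      ext v
      by_cases hv : v ∈ C
      · simp [hv, hCW hv]
      · simp [hv, Fin.succ_ne_zero]
    rw [hclass]
    nlinarith
  | succ i =>
    have hclass : {v ∈ e ∩ W | (if v ∈ C then 0 else (f v).succ) = i.succ}
        = {v ∈ e ∩ (W \ C) | f v = i} := by
      ext v
      by_cases hv : v ∈ C <;> simp [hv, (Fin.succ_ne_zero _).symm, and_assoc]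
    have hcard : (#(e ∩ (W \ C)) : ℝ) = #(e ∩ W) - #(e ∩ C) := by
      have hsub : e ∩ C ⊆ e ∩ W := inter_subset_inter_left hCW
      rw [← Nat.cast_sub (card_le_card hsub), ← card_sdiff_of_subset hsub]
      exact congrArg (fun s : Finset V => (#s : ℝ)) (inf_sdiff_distrib_left e W C)
    have hfi := hf i e he
    rw [hcard] at hfi
    rw [hclass]
    have hm : (0 : ℝ) < m + 1 := by positivity
    have hshift : |(#(e ∩ W) - #(e ∩ C) : ℝ) / (m + 1) - #(e ∩ W) / (m + 2)| ≤ K / (m + 1) := by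
      rw [show (#(e ∩ W) - #(e ∩ C) : ℝ) / (m + 1) - #(e ∩ W) / (m + 2)
          = -((#(e ∩ C) - #(e ∩ W) / (m + 2)) / (m + 1)) by field_simp; ring,
        abs_neg, abs_div, abs_of_pos hm]
      gcongr
    calc _ ≤ |(#{v ∈ e ∩ (W \ C) | f v = i} : ℝ) - (#(e ∩ W) - #(e ∩ C)) / (m + 1)|
          + |(#(e ∩ W) - #(e ∩ C) : ℝ) / (m + 1) - #(e ∩ W) / (m + 2)| := abs_sub_le _ _ _
      _ ≤ m * K + K / (m + 1) := add_le_add hfi hshift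
      _ ≤ (m + 1) * K := by linarith [div_le_self hK (by linarith : (1 : ℝ) ≤ m + 1)]

lemma herdiscLE_add_one_of_forall_exists_subset {K : ℝ} (hK : 0 ≤ K)
    (hsplit : ∀ (W : Finset V) (n : ℕ), ∃ C ⊆ W, ∀ e ∈ E,
      |(#(e ∩ C) : ℝ) - #(e ∩ W) / n| ≤ K) (m : ℕ) :
    HerdiscLE E (m + 1) (m * K) := by
  induction m with
  | zero =>
    refine fun S => ⟨fun _ => 0, fun d e _ => ?_⟩
    rw [Fin.fin_one_eq_zero d]
    simp
  | succ m ih =>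
    push_cast
    exact ih.add_one hK fun W => by exact_mod_cast hsplit W (m + 2)

end

/-- For every finite hypergraph H and all integers a, b ≥ 2,
herdisc(H, b) ≤ a²·(b − 1) · herdisc(H, a). -/
theorem hyp_herdisc_le_sq_mul_herdisc {V : Type*} [Fintype V] [DecidableEq V]
    (E : Finset (Finset V)) (a b : ℕ) (ha : 2 ≤ a) (hb : 2 ≤ b) :
    hherdisc E b ≤ (a : ℝ) ^ 2 * ((b : ℝ) - 1) * hherdisc E a := by
  obtain ⟨m, rfl⟩ : ∃ m, b = m + 1 := ⟨b - 1, by omega⟩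
  set D := hherdisc E a
  have hD : 0 ≤ D := hherdisc_nonneg E a
  have hbound : ∀ L : ℕ, hherdisc E (m + 1) ≤ m * (a ^ 2 * D + Fintype.card V / a ^ L) :=
    fun L => hherdisc_le_of_herdiscLE (by positivity) <|
      herdiscLE_add_one_of_forall_exists_subset (by positivity)
        ((herdiscLE_hherdisc (by omega)).exists_subset_approx_div hD (by omega) L) m
  have hlim : Tendsto (fun L : ℕ => (m : ℝ) * (a ^ 2 * D + Fintype.card V / a ^ L)) atTop
      (𝓝 (m * (a ^ 2 * D))) := by
    have hpow := tendsto_pow_atTop_atTop_of_one_lt (by exact_mod_cast ha : (1 : ℝ) < a)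
    simpa using ((tendsto_const_nhds (x := (Fintype.card V : ℝ))).div_atTop hpow).const_add
      (a ^ 2 * D) |>.const_mul (m : ℝ)
  calc hherdisc E (m + 1) ≤ m * (a ^ 2 * D) := ge_of_tendsto' hlim hbound
    _ = a ^ 2 * (((m + 1 : ℕ) : ℝ) - 1) * D := by push_cast; ring
end
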